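/- arXiv:1609.01048 — 9 statements merged into one kernel-verified Lean document; each statement's English description precedes it below -/
import Mathlib

section
/- Let S_1, S_2 be disjoint subsets of F_q^n and let m_1, m_2 be nonnegative integers and m a positive real number. If |S_1|*C(m_1+n-1, n) + |S_2|*C(m_2+n-1, n) < N_q(n,m), then there exists a nonzero polynomial g in F_q[x_1,...,x_n] of total degree less than mq and individual degree at most q-1 in each variable which vanishes with multiplicity at least m_1 at every point of S_1 and with multiplicity at least m_2 at every point of S_2. -/
open scoped Classical

/-!
The admissible monomials `x^e` (each `e i < q`, total degree `< m q`) span a space of dimension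
`N_q(n, m)`. Vanishing to order `M` at a point `a` is `#{d | |d| < M} ≤ C(M + n - 1, n)` linear
conditions on `g`, namely that the coefficients of `x^d` in `g(x + a)` vanish; with fewer
conditions than unknowns the linear system has a nonzero solution.
-/

open Finset MvPolynomial

theorem Nat.sum_range_add_sub_one_choose_le (n M : ℕ) :
    ∑ k ∈ range M, (n + k - 1).choose k ≤ (M + n - 1).choose n := by
  rcases M with _ | M
  · simp
  apply le_of_eq
  rcases n with _ | n
  · rw [sum_range_succ', sum_eq_zero fun k _ => Nat.choose_eq_zero_of_lt (by omega)]
    simp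
  · calc ∑ k ∈ range (M + 1), (n + 1 + k - 1).choose k
          = ∑ k ∈ range (M + 1), (k + n).choose n :=
            sum_congr rfl fun k _ => by
              rw [show n + 1 + k - 1 = k + n by omega, Nat.choose_symm_add]
      _ = (M + 1 + (n + 1) - 1).choose (n + 1) := by
            rw [Nat.sum_range_add_choose]; congr 1; omega

namespace Finsupp

variable {σ : Type*} [Fintype σ]

noncomputable def finValEmbedding {q : ℕ} : (σ → Fin q) ↪ (σ →₀ ℕ) where
  toFun e := equivFunOnFinite.symm fun i => (e i : ℕ)
  inj' := equivFunOnFinite.symm.injective.comp Fin.val_injective.comp_left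

@[simp]
theorem finValEmbedding_apply {q : ℕ} (e : σ → Fin q) (i : σ) :
    finValEmbedding e i = e i :=
  rfl

variable (σ) [DecidableEq σ]

def lowDegreeExponents (M : ℕ) : Finset (σ →₀ ℕ) :=
  (range M).biUnion fun k => univ.finsuppAntidiag k

variable {σ}

theorem mem_lowDegreeExponents {M : ℕ} {d : σ →₀ ℕ} :
    d ∈ lowDegreeExponents σ M ↔ d.degree < M := by
  simp [lowDegreeExponents, degree_eq_sum]

theorem card_lowDegreeExponents_le (M : ℕ) :
    #(lowDegreeExponents σ M) ≤ (M + Fintype.card σ - 1).choose (Fintype.card σ) :=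
  calc #(lowDegreeExponents σ M)
      ≤ ∑ k ∈ range M, #(univ.finsuppAntidiag k : Finset (σ →₀ ℕ)) := card_biUnion_le
    _ = ∑ k ∈ range M, (Fintype.card σ + k - 1).choose k := by
        simp only [card_finsuppAntidiag_nat_eq_choose, card_univ]
    _ ≤ _ := Nat.sum_range_add_sub_one_choose_le _ _

end Finsupp

namespace MvPolynomial

variable {K σ : Type*} [Field K]

theorem exists_ne_zero_mem_restrictSupport_forall_eq_zero {ι : Type*} [Fintype ι]
    (s : Finset (σ →₀ ℕ)) (φ : ι → MvPolynomial σ K →ₗ[K] K)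
    (h : Fintype.card ι < #s) :
    ∃ p ∈ restrictSupport K (s : Set (σ →₀ ℕ)), p ≠ 0 ∧ ∀ i, φ i p = 0 := by
  set V := restrictSupport K (s : Set (σ →₀ ℕ))
  have hV : Module.finrank K V = #s := by
    rw [Module.finrank_eq_card_basis (basisRestrictSupport K (s : Set (σ →₀ ℕ)))]
    simp
  have : FiniteDimensional K V := (basisRestrictSupport K _).finiteDimensional_of_finite
  let L : V →ₗ[K] ι → K := LinearMap.pi fun i => (φ i).comp V.subtype
  obtain ⟨p, hp, hp0⟩ := Submodule.exists_mem_ne_zero_of_ne_bot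
    (LinearMap.ker_ne_bot_of_finrank_lt (f := L) (by simpa [hV] using h))
  exact ⟨p, p.2, by simpa using hp0, fun i => congr_fun (LinearMap.mem_ker.1 hp) i⟩

theorem exists_mem_support_totalDegree_eq {R : Type*} [CommSemiring R] {p : MvPolynomial σ R}
    (hp : p ≠ 0) : ∃ d ∈ p.support, p.totalDegree = d.degree :=
  exists_mem_eq_sup _ (support_nonempty.2 hp) _

end MvPolynomial

open Finsupp in
theorem stmt_1_general (F : Type) [Field F] (n : ℕ) (q : ℕ) (S₁ S₂ : Finset (Fin n → F))
    (m₁ m₂ : ℕ) (m : ℝ)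
    (hcard : ((S₁.card * Nat.choose (m₁ + n - 1) n
        + S₂.card * Nat.choose (m₂ + n - 1) n : ℕ) : ℝ)
      < ((Finset.univ.filter (fun e : Fin n → Fin q =>
          (∑ j, ((e j : ℕ) : ℝ)) < m * q)).card : ℝ)) :
    ∃ g : MvPolynomial (Fin n) F, g ≠ 0 ∧
      ((g.totalDegree : ℝ) < m * q) ∧
      (∀ i, g.degreeOf i ≤ q - 1) ∧
      (∀ a ∈ S₁, ∀ d ∈ (MvPolynomial.bind₁
          (fun i => MvPolynomial.X i + MvPolynomial.C (a i)) g).support,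
          m₁ ≤ d.sum fun _ k => k) ∧
      (∀ a ∈ S₂, ∀ d ∈ (MvPolynomial.bind₁
          (fun i => MvPolynomial.X i + MvPolynomial.C (a i)) g).support,
          m₂ ≤ d.sum fun _ k => k) := by
  set E := univ.filter fun e : Fin n → Fin q => (∑ j, ((e j : ℕ) : ℝ)) < m * q
  set T := S₁ ×ˢ lowDegreeExponents (Fin n) m₁ ∪ S₂ ×ˢ lowDegreeExponents (Fin n) m₂
  have hT : Fintype.card T < #(E.map finValEmbedding) := by
    rw [Fintype.card_coe, card_map]
    refine lt_of_le_of_lt ?_ (by exact_mod_cast hcard)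
    calc #T ≤ _ := card_union_le _ _
      _ ≤ _ := by
        rw [card_product, card_product]
        gcongr <;> simpa using card_lowDegreeExponents_le (σ := Fin n) _
  obtain ⟨g, hgE, hg0, hgT⟩ := exists_ne_zero_mem_restrictSupport_forall_eq_zero _
    (fun x : T => (lcoeff F x.1.2).comp (bind₁ fun i => X i + C (x.1.1 i)).toLinearMap) hT
  have hsupp : ∀ d ∈ g.support, ∃ e ∈ E, finValEmbedding e = d :=
    fun d hd => mem_map.1 (hgE hd)
  have vanish : ∀ {S M}, S ×ˢ lowDegreeExponents (Fin n) M ⊆ T → ∀ a ∈ S,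
      ∀ d ∈ (bind₁ (fun i => X i + C (a i)) g).support, M ≤ d.sum fun _ k => k := by
    intro S M hST a ha d hd
    by_contra! hlt
    have had : (a, d) ∈ T := hST (mem_product.2 ⟨ha, mem_lowDegreeExponents.2 hlt⟩)
    exact MvPolynomial.mem_support_iff.1 hd (hgT ⟨_, had⟩)
  refine ⟨g, hg0, ?_, fun i => ?_, vanish subset_union_left, vanish subset_union_right⟩
  · obtain ⟨d, hd, hdeg⟩ := exists_mem_support_totalDegree_eq hg0
    obtain ⟨e, he, rfl⟩ := hsupp d hd
    simpa [hdeg, degree_eq_sum, E] using he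
  · rw [degreeOf_le_iff]
    intro d hd
    obtain ⟨e, -, rfl⟩ := hsupp d hd
    exact Nat.le_sub_one_of_lt (e i).2

/-- Interpolation of a nonzero polynomial with prescribed (possibly different)
vanishing multiplicities on two disjoint sets. -/
theorem stmt_1 (F : Type) [Field F] [Fintype F] (n : ℕ) (hn : 0 < n)
    (q : ℕ) (hq : q = Fintype.card F)
    (S₁ S₂ : Finset (Fin n → F)) (hdisj : Disjoint S₁ S₂)
    (m₁ m₂ : ℕ) (m : ℝ) (hm : 0 < m)
    (hcard : ((S₁.card * Nat.choose (m₁ + n - 1) n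
        + S₂.card * Nat.choose (m₂ + n - 1) n : ℕ) : ℝ)
      < ((Finset.univ.filter (fun e : Fin n → Fin q =>
          (∑ j, ((e j : ℕ) : ℝ)) < m * q)).card : ℝ)) :
    ∃ g : MvPolynomial (Fin n) F, g ≠ 0 ∧
      ((g.totalDegree : ℝ) < m * q) ∧
      (∀ i, g.degreeOf i ≤ q - 1) ∧
      (∀ a ∈ S₁, ∀ d ∈ (MvPolynomial.bind₁
          (fun i => MvPolynomial.X i + MvPolynomial.C (a i)) g).support,
          m₁ ≤ d.sum fun _ k => k) ∧
      (∀ a ∈ S₂, ∀ d ∈ (MvPolynomial.bind₁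
          (fun i => MvPolynomial.X i + MvPolynomial.C (a i)) g).support,
          m₂ ≤ d.sum fun _ k => k) :=
  stmt_1_general F n q S₁ S₂ m₁ m₂ m hcard
end

section
/- If K is a Kakeya set in F_q^n and m is a positive integer, then |K| ≥ N_q(n,m) / C(m+n-1, n). -/
/-!
Polynomial method with multiplicities. Let `S` index the monomials of individual degree `< q` and
total degree `< mq`, and `D` those of total degree `< m`. If `#S > #K * #D`, linear algebra gives a
nonzero `P` supported on `S` that vanishes to order `m` at every `k ∈ K`, i.e. `P(X + k)` has no
monomial of degree `< m`. On a line `t ↦ t • x + y` inside `K`, the polynomial `P(t • x + y)` then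
has a root of multiplicity `m` at each of the `q` points of `F` but degree `< mq`, so it vanishes.
Its coefficient of `t ^ deg P` is the top homogeneous part of `P` evaluated at `x`; hence that part
vanishes on all of `F^n`, and having individual degrees `< q` it is zero, a contradiction.
Finally `#D = C(m + n - 1, n)` by stars and bars.
-/

universe u

open scoped Polynomial

theorem Polynomial.eq_zero_of_natDegree_lt_card_mul_of_X_pow_dvd_taylor {R : Type*} [CommRing R]
    [IsDomain R] [Fintype R] {p : R[X]} {m : ℕ} (hdeg : p.natDegree < Fintype.card R * m)
    (hdvd : ∀ t, X ^ m ∣ p.taylor t) : p = 0 := by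
  classical
  by_contra hp
  have hmult : ∀ t, m ≤ p.rootMultiplicity t := fun t => by
    rw [rootMultiplicity_eq_natTrailingDegree, ← taylor_apply]
    exact le_natTrailingDegree (by simpa using hp) (X_pow_dvd_iff.mp (hdvd t))
  have hroots : m • (Finset.univ : Finset R).val ≤ p.roots := Multiset.le_iff_count.mpr fun t => by
    simpa [count_roots] using hmult t
  have hcard := (Multiset.card_le_card hroots).trans (card_roots' p)
  simp only [Multiset.card_nsmul, Finset.card_val, Finset.card_univ] at hcard
  lia

theorem Finsupp.prod_map_toMultiset {σ M : Type*} [CommMonoid M] (c : σ →₀ ℕ) (g : σ → M) :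
    (c.toMultiset.map g).prod = c.prod fun i k => g i ^ k := by
  rw [Finsupp.toMultiset_map, Finsupp.prod_toMultiset,
    Finsupp.prod_mapDomain_index pow_zero pow_add]

namespace MvPolynomial

variable {σ R : Type*} [CommRing R]

noncomputable def restrictToLine (x y : σ → R) : MvPolynomial σ R →ₐ[R] R[X] :=
  aeval fun i => Polynomial.C (x i) * Polynomial.X + Polynomial.C (y i)

noncomputable def shift (y : σ → R) : MvPolynomial σ R →ₐ[R] MvPolynomial σ R :=
  aeval fun i => X i + C (y i)

section restrictToLine

variable (x y : σ → R)

theorem restrictToLine_monomial (c : σ →₀ ℕ) (a : R) :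
    restrictToLine x y (monomial c a) = Polynomial.C a *
      (c.toMultiset.map fun i => Polynomial.C (x i) * Polynomial.X + Polynomial.C (y i)).prod := by
  rw [restrictToLine, aeval_monomial, Polynomial.algebraMap_eq, Finsupp.prod_map_toMultiset]

theorem natDegree_restrictToLine_monomial_le (c : σ →₀ ℕ) (a : R) :
    (restrictToLine x y (monomial c a)).natDegree ≤ c.degree := by
  rw [restrictToLine_monomial]
  refine Polynomial.natDegree_C_mul_le _ _ |>.trans ?_
  refine Polynomial.natDegree_multiset_prod_le _ |>.trans ?_
  refine (Multiset.sum_le_card_nsmul _ 1 ?_).trans ?_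
  · simp only [Multiset.map_map, Function.comp_apply, Multiset.mem_map]
    rintro _ ⟨i, -, rfl⟩
    exact Polynomial.natDegree_linear_le
  · simp only [Multiset.card_map, Finsupp.card_toMultiset, smul_eq_mul, mul_one]
    rfl

theorem coeff_restrictToLine_monomial_degree (c : σ →₀ ℕ) (a : R) :
    (restrictToLine x y (monomial c a)).coeff c.degree = eval x (monomial c a) := by
  have h := Polynomial.coeff_multiset_prod_of_natDegree_le
    (c.toMultiset.map fun i => Polynomial.C (x i) * Polynomial.X + Polynomial.C (y i)) 1
    (by simp only [Multiset.mem_map]; rintro _ ⟨i, -, rfl⟩; exact Polynomial.natDegree_linear_le)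
  simp only [Multiset.map_map, Function.comp_def, Polynomial.coeff_add, Polynomial.coeff_C_mul_X,
    Polynomial.coeff_C_succ, add_zero, Multiset.card_map, Finsupp.card_toMultiset, mul_one,
    Finsupp.prod_map_toMultiset, if_true] at h
  rw [restrictToLine_monomial, Polynomial.coeff_C_mul, eval_monomial, Finsupp.prod_map_toMultiset]
  exact congrArg (a * ·) h

theorem natDegree_restrictToLine_le (P : MvPolynomial σ R) :
    (restrictToLine x y P).natDegree ≤ P.totalDegree := by
  conv_lhs => rw [P.as_sum, map_sum]
  exact Polynomial.natDegree_sum_le_of_forall_le _ _ fun c hc =>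
    (natDegree_restrictToLine_monomial_le x y c _).trans (le_totalDegree hc)

theorem coeff_restrictToLine_of_totalDegree_le {P : MvPolynomial σ R} {d : ℕ}
    (hd : P.totalDegree ≤ d) :
    (restrictToLine x y P).coeff d = eval x (homogeneousComponent d P) := by
  conv_lhs => rw [P.as_sum, map_sum]
  rw [homogeneousComponent_apply, map_sum, Polynomial.finsetSum_coeff, Finset.sum_filter]
  refine Finset.sum_congr rfl fun c hc => ?_
  split_ifs with h
  · rw [← h]
    exact coeff_restrictToLine_monomial_degree x y c _
  · refine Polynomial.coeff_eq_zero_of_natDegree_lt ?_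
    exact (natDegree_restrictToLine_monomial_le x y c _).trans_lt
      (((le_totalDegree hc).trans hd).lt_of_ne h)

theorem restrictToLine_zero_monomial (c : σ →₀ ℕ) (a : R) :
    restrictToLine x 0 (monomial c a) =
      Polynomial.C (eval x (monomial c a)) * Polynomial.X ^ c.degree := by
  rw [restrictToLine, aeval_monomial, eval_monomial, Polynomial.algebraMap_eq, Polynomial.C_mul,
    mul_assoc]
  simp only [Pi.zero_apply, map_zero, add_zero, mul_pow, Finsupp.prod_mul, map_finsuppProd,
    map_pow]
  rw [Finsupp.prod, Finsupp.prod, Finset.prod_pow_eq_pow_sum]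
  rfl

theorem restrictToLine_zero_shift (P : MvPolynomial σ R) :
    restrictToLine x 0 (shift y P) = restrictToLine x y P := by
  rw [← AlgHom.comp_apply]
  congr 1
  ext i
  simp [restrictToLine, shift]

theorem X_pow_dvd_restrictToLine {P : MvPolynomial σ R} {m : ℕ}
    (h : ∀ c : σ →₀ ℕ, c.degree < m → (shift y P).coeff c = 0) :
    Polynomial.X ^ m ∣ restrictToLine x y P := by
  rw [← restrictToLine_zero_shift, (shift y P).as_sum, map_sum]
  refine Finset.dvd_sum fun c hc => ?_
  rw [restrictToLine_zero_monomial]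
  exact Dvd.dvd.mul_left (pow_dvd_pow _ (not_lt.mp fun hlt => mem_support_iff.mp hc (h c hlt))) _

theorem taylor_restrictToLine (t : R) (P : MvPolynomial σ R) :
    (restrictToLine x y P).taylor t = restrictToLine x (t • x + y) P := by
  rw [Polynomial.taylor_apply, Polynomial.comp_eq_aeval, ← AlgHom.comp_apply]
  congr 1
  refine MvPolynomial.algHom_ext fun i => ?_
  simp [restrictToLine]
  ring

end restrictToLine

end MvPolynomial

theorem MvPolynomial.homogeneousComponent_totalDegree_ne_zero {σ R : Type*} [CommSemiring R]
    {P : MvPolynomial σ R} (hP : P ≠ 0) : homogeneousComponent P.totalDegree P ≠ 0 := by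
  obtain ⟨c, hc, hdeg⟩ := P.support.exists_mem_eq_sup (support_nonempty.mpr hP)
    fun c => c.sum fun _ e => e
  rw [Ne, ← support_eq_empty, support_homogeneousComponent, Finset.filter_eq_empty_iff]
  exact fun h => h hc hdeg.symm

open Finset in
theorem Finsupp.card_toFinset_degree_lt_le (σ : Type*) [Fintype σ] (m : ℕ) :
    #(Finsupp.finite_of_degree_lt (σ := σ) m).toFinset ≤
      (m + Fintype.card σ - 1).choose (Fintype.card σ) := by
  classical
  calc #(Finsupp.finite_of_degree_lt (σ := σ) m).toFinset
      ≤ #((range m).biUnion fun j => (univ : Finset σ).finsuppAntidiag j) := by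
        refine card_le_card fun c hc => ?_
        rw [Set.Finite.mem_toFinset] at hc
        simp only [mem_biUnion, mem_range, mem_finsuppAntidiag, subset_univ, and_true]
        exact ⟨c.degree, hc, (degree_eq_sum c).symm⟩
    _ ≤ ∑ j ∈ range m, #((univ : Finset σ).finsuppAntidiag j) := card_biUnion_le
    _ = ∑ j ∈ range m, (Fintype.card σ).multichoose j := by
        simp only [card_finsuppAntidiag_nat_eq_multichoose, card_univ]
    _ ≤ (m + Fintype.card σ - 1).choose (Fintype.card σ) := by
        cases m with
        | zero => simp
        | succ m => rw [Nat.sum_range_multichoose, Nat.add_right_comm, Nat.add_sub_cancel]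

def IsKakeya {σ F : Type*} [Semiring F] (K : Set (σ → F)) : Prop :=
  ∀ x : σ → F, ∃ y : σ → F, ∀ t : F, t • x + y ∈ K

namespace MvPolynomial

theorem eval_homogeneousComponent_totalDegree_eq_zero_of_isKakeya {σ F : Type*} [Field F]
    [Fintype F] {K : Set (σ → F)} (hK : IsKakeya K) {m : ℕ} {P : MvPolynomial σ F}
    (htot : P.totalDegree < m * Fintype.card F)
    (hvan : ∀ k ∈ K, ∀ c : σ →₀ ℕ, c.degree < m → (shift k P).coeff c = 0) (x : σ → F) :
    eval x (homogeneousComponent P.totalDegree P) = 0 := by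
  obtain ⟨y, hy⟩ := hK x
  have hline : restrictToLine x y P = 0 := by
    refine Polynomial.eq_zero_of_natDegree_lt_card_mul_of_X_pow_dvd_taylor (m := m) ?_ fun t => ?_
    · exact (natDegree_restrictToLine_le x y P).trans_lt (mul_comm m _ ▸ htot)
    · rw [taylor_restrictToLine]
      exact X_pow_dvd_restrictToLine x _ (hvan _ (hy t))
  rw [← coeff_restrictToLine_of_totalDegree_le x y le_rfl, hline, Polynomial.coeff_zero]

-- `σ` and `F` share a universe only because `MvPolynomial.eq_zero_of_eval_eq_zero` demands it.
theorem eq_zero_of_isKakeya {σ F : Type u} [Field F] [Fintype F] [Finite σ] {K : Set (σ → F)}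
    (hK : IsKakeya K) {m : ℕ} {P : MvPolynomial σ F}
    (hdeg : P ∈ restrictDegree σ F (Fintype.card F - 1))
    (htot : P.totalDegree < m * Fintype.card F)
    (hvan : ∀ k ∈ K, ∀ c : σ →₀ ℕ, c.degree < m → (shift k P).coeff c = 0) : P = 0 := by
  by_contra hP
  refine homogeneousComponent_totalDegree_ne_zero hP (eq_zero_of_eval_eq_zero _ _ _
    (eval_homogeneousComponent_totalDegree_eq_zero_of_isKakeya hK htot hvan) ?_)
  rw [mem_restrictDegree] at hdeg ⊢
  intro c hc
  rw [support_homogeneousComponent] at hc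
  exact hdeg c (Finset.mem_of_mem_filter c hc)

open Finset in
theorem card_le_card_mul_card_of_isKakeya {σ F : Type u} [Field F] [Fintype F]
    [Finite σ] {K : Finset (σ → F)} (hK : IsKakeya (K : Set (σ → F))) {m : ℕ}
    {S D : Finset (σ →₀ ℕ)}
    (hS : ∀ e ∈ S, (∀ i, e i < Fintype.card F) ∧ e.degree < m * Fintype.card F)
    (hD : ∀ c : σ →₀ ℕ, c.degree < m → c ∈ D) :
    #S ≤ #K * #D := by
  by_contra! hcard
  let L : restrictSupport F (S : Set (σ →₀ ℕ)) →ₗ[F] (K × D → F) := LinearMap.pi fun p =>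
    lcoeff F p.2.1 ∘ₗ (shift p.1.1).toLinearMap ∘ₗ (restrictSupport F _).subtype
  let B := basisRestrictSupport F (S : Set (σ →₀ ℕ))
  have := B.finiteDimensional_of_finite
  have hker : LinearMap.ker L ≠ ⊥ := LinearMap.ker_ne_bot_of_finrank_lt <| by
    rw [Module.finrank_fintype_fun_eq_card, Module.finrank_eq_card_basis B, Fintype.card_prod,
      Fintype.card_coe, Fintype.card_coe]
    simpa using hcard
  obtain ⟨⟨P, hPS⟩, hPker, hP0⟩ := Submodule.exists_mem_ne_zero_of_ne_bot hker
  have hP : P ≠ 0 := fun h => hP0 (Subtype.ext h)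
  rw [mem_restrictSupport_iff] at hPS
  refine hP (eq_zero_of_isKakeya hK (m := m) ?_ ?_ fun k hk c hc => ?_)
  · rw [mem_restrictDegree]
    exact fun c hc i => Nat.le_sub_one_of_lt ((hS c (hPS hc)).1 i)
  · obtain ⟨c, hc, hcdeg⟩ := P.support.exists_mem_eq_sup (support_nonempty.mpr hP)
      fun c => c.sum fun _ e => e
    rw [totalDegree, hcdeg]
    exact (hS c (hPS hc)).2
  · exact congrFun hPker (⟨k, hk⟩, ⟨c, hD c hc⟩)

open Finset in
theorem card_le_card_mul_choose_of_isKakeya {σ F : Type u} [Fintype σ] [DecidableEq σ] [Field F]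
    [Fintype F] {K : Finset (σ → F)} (hK : IsKakeya (K : Set (σ → F))) (m : ℕ) :
    #{e : σ → Fin (Fintype.card F) | ∑ j, (e j : ℕ) < m * Fintype.card F} ≤
      #K * (m + Fintype.card σ - 1).choose (Fintype.card σ) := by
  let toFinsupp : (σ → Fin (Fintype.card F)) ↪ (σ →₀ ℕ) :=
    ⟨fun e => Finsupp.equivFunOnFinite.symm fun i => e i,
      Finsupp.equivFunOnFinite.symm.injective.comp Fin.val_injective.comp_left⟩
  rw [← card_map toFinsupp]
  refine (card_le_card_mul_card_of_isKakeya hK (m := m)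
    (D := (Finsupp.finite_of_degree_lt m).toFinset) ?_ (by simp)).trans
    (Nat.mul_le_mul_left _ (Finsupp.card_toFinset_degree_lt_le σ m))
  simp only [mem_map, mem_filter]
  rintro _ ⟨e, he, rfl⟩
  exact ⟨fun i => (e i).isLt, by simpa [toFinsupp, Finsupp.degree_eq_sum] using he⟩

end MvPolynomial

theorem stmt_4_general (F : Type) [Field F] [Fintype F] (n : ℕ)
    (q : ℕ) (hq : q = Fintype.card F)
    (K : Finset (Fin n → F))
    (hK : ∀ x : Fin n → F, ∃ y : Fin n → F, ∀ t : F, t • x + y ∈ K)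
    (m : ℕ) :
    ((Finset.univ.filter (fun e : Fin n → Fin q =>
        (∑ j, (e j : ℕ)) < m * q)).card : ℝ) / (Nat.choose (m + n - 1) n)
      ≤ K.card := by
  subst hq
  have hcount := MvPolynomial.card_le_card_mul_choose_of_isKakeya hK m
  rw [Fintype.card_fin] at hcount
  exact div_le_of_le_mul₀ (Nat.cast_nonneg _) (Nat.cast_nonneg _) (by exact_mod_cast hcount)

/-- The Kakeya lower bound of Saraf–Sudan: `|K| ≥ N_q(n,m) / C(m+n-1,n)`. -/
theorem stmt_4 (F : Type) [Field F] [Fintype F] (n : ℕ) (hn : 0 < n)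
    (q : ℕ) (hq : q = Fintype.card F)
    (K : Finset (Fin n → F))
    (hK : ∀ x : Fin n → F, ∃ y : Fin n → F, ∀ t : F, t • x + y ∈ K)
    (m : ℕ) (hm : 0 < m) :
    ((Finset.univ.filter (fun e : Fin n → Fin q =>
        (∑ j, (e j : ℕ)) < m * q)).card : ℝ) / (Nat.choose (m + n - 1) n)
      ≤ K.card :=
  stmt_4_general F n q hq K hK m
end

section
/- Let P be a set of points and L a set of lines in F_q^3. Then the number of incidences I(P,L) satisfies I(P,L) ≤ (1+o(1)) ( |P||L|q^{-2} + q·sqrt( |P||L|(1 − |P|q^{-3})(1 − |L|q^{-4}) ) ), where o(1) tends to 0 as q → ∞. -/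
set_option maxRecDepth 8000
set_option maxHeartbeats 1600000

open scoped Classical

/-- `ℓ` is an (affine) line in `F^3`. -/
def IsLine {F : Type} [Field F] (ℓ : Set (Fin 3 → F)) : Prop :=
  ∃ a b : Fin 3 → F, b ≠ 0 ∧ ℓ = {x | ∃ t : F, x = a + t • b}

section Aux

variable {F : Type} [Field F] [Fintype F]

lemma line_card (ℓ : Set (Fin 3 → F)) (h : IsLine ℓ) :
    (Finset.univ.filter (fun p => p ∈ ℓ)).card = Fintype.card F := by
  obtain ⟨a, b, hb, rfl⟩ := h
  have hinj : Function.Injective (fun t : F => a + t • b) := by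
    intro s t h
    simp only [add_right_inj] at h
    exact smul_left_injective F hb h
  rw [← Finset.card_univ (α := F), ← Finset.card_image_of_injective Finset.univ hinj]
  congr 1
  ext x
  simp [Set.mem_setOf_eq, eq_comm]

def lineThrough (x y : Fin 3 → F) : Set (Fin 3 → F) := {z | ∃ t : F, z = x + t • (y - x)}

omit [Fintype F] in
lemma isLine_lineThrough {x y : Fin 3 → F} (h : x ≠ y) : IsLine (lineThrough x y) :=
  ⟨x, y - x, sub_ne_zero.mpr (Ne.symm h), rfl⟩

omit [Fintype F] in
lemma left_mem_lineThrough (x y : Fin 3 → F) : x ∈ lineThrough x y := ⟨0, by simp⟩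

omit [Fintype F] in
lemma right_mem_lineThrough (x y : Fin 3 → F) : y ∈ lineThrough x y := ⟨1, by simp⟩

omit [Fintype F] in
lemma line_eq_lineThrough {ℓ : Set (Fin 3 → F)} (hl : IsLine ℓ) {x y : Fin 3 → F}
    (hx : x ∈ ℓ) (hy : y ∈ ℓ) (hxy : x ≠ y) : ℓ = lineThrough x y := by
  obtain ⟨a, b, hb, rfl⟩ := hl
  obtain ⟨s, rfl⟩ := hx
  obtain ⟨u, hu⟩ := hy
  have hsu : u - s ≠ 0 := by
    intro h
    apply hxy
    have hus : u = s := sub_eq_zero.mp h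
    rw [hu, hus]
  have hyx : y - (a + s • b) = (u - s) • b := by
    rw [hu, sub_smul]; abel
  ext z
  constructor
  · rintro ⟨t, rfl⟩
    refine ⟨(t - s) / (u - s), ?_⟩
    rw [hyx, smul_smul, div_mul_cancel₀ _ hsu, sub_smul]
    abel
  · rintro ⟨r, rfl⟩
    refine ⟨s + r * (u - s), ?_⟩
    rw [hyx, smul_smul, add_smul]
    abel

noncomputable def allLines (F : Type) [Field F] [Fintype F] : Finset (Set (Fin 3 → F)) :=
  Finset.univ.filter IsLine

lemma mem_allLines {ℓ : Set (Fin 3 → F)} : ℓ ∈ allLines F ↔ IsLine ℓ := by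
  simp [allLines]

lemma unique_line {x y : Fin 3 → F} (hxy : x ≠ y) :
    (allLines F).filter (fun ℓ => x ∈ ℓ ∧ y ∈ ℓ) = {lineThrough x y} := by
  ext ℓ
  simp only [Finset.mem_filter, Finset.mem_singleton, mem_allLines]
  constructor
  · rintro ⟨hl, hx, hy⟩
    exact line_eq_lineThrough hl hx hy hxy
  · rintro rfl
    exact ⟨isLine_lineThrough hxy, left_mem_lineThrough x y, right_mem_lineThrough x y⟩

omit [Field F] in
lemma card_pts : Fintype.card (Fin 3 → F) = Fintype.card F ^ 3 := by
  simp [Fintype.card_fun]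

lemma cube_fact (q : ℕ) (hq : 1 ≤ q) : q ^ 3 - 1 = (q ^ 2 + q + 1) * (q - 1) := by
  obtain ⟨k, rfl⟩ : ∃ k, q = k + 1 := ⟨q - 1, by omega⟩
  have h3 : (k + 1) ^ 3 = ((k + 1) ^ 2 + (k + 1) + 1) * k + 1 := by ring
  simp only [Nat.add_sub_cancel]
  omega

lemma point_line_count (x : Fin 3 → F) :
    ((allLines F).filter (fun ℓ => x ∈ ℓ)).card
      = Fintype.card F ^ 2 + Fintype.card F + 1 := by
  set q := Fintype.card F with hqdef
  have hq : 1 < q := Fintype.one_lt_card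
  set S := (allLines F).filter (fun ℓ => x ∈ ℓ) with hS
  have key : S.card * (q - 1) = q ^ 3 - 1 := by
    calc S.card * (q - 1) = ∑ _ℓ ∈ S, (q - 1) := by rw [Finset.sum_const, smul_eq_mul]
    _ = ∑ ℓ ∈ S, ((Finset.univ.erase x).filter (fun y => y ∈ ℓ)).card := by
        refine Finset.sum_congr rfl fun ℓ hℓ => ?_
        rw [hS, Finset.mem_filter, mem_allLines] at hℓ
        rw [Finset.filter_erase, Finset.card_erase_of_mem
          (by simpa using hℓ.2), line_card ℓ hℓ.1]
    _ = ∑ ℓ ∈ S, ∑ y ∈ Finset.univ.erase x, if y ∈ ℓ then 1 else 0 := by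
        simp only [Finset.card_filter]
    _ = ∑ y ∈ Finset.univ.erase x, ∑ ℓ ∈ S, if y ∈ ℓ then 1 else 0 := Finset.sum_comm
    _ = ∑ y ∈ Finset.univ.erase x, (S.filter (fun ℓ => y ∈ ℓ)).card := by
        simp only [Finset.card_filter]
    _ = ∑ _y ∈ Finset.univ.erase x, 1 := by
        refine Finset.sum_congr rfl fun y hy => ?_
        have hyx : x ≠ y := (Finset.ne_of_mem_erase hy).symm
        rw [hS, Finset.filter_filter, unique_line hyx, Finset.card_singleton]
    _ = q ^ 3 - 1 := by
        rw [Finset.sum_const, smul_eq_mul, mul_one, Finset.card_erase_of_mem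
          (Finset.mem_univ x), Finset.card_univ, card_pts]
  have hfact : q ^ 3 - 1 = (q ^ 2 + q + 1) * (q - 1) := cube_fact q (by omega)
  rw [hfact] at key
  exact Nat.eq_of_mul_eq_mul_right (by omega) key

lemma sum_S1 (P : Finset (Fin 3 → F)) :
    ∑ ℓ ∈ allLines F, (P.filter (fun p => p ∈ ℓ)).card
      = P.card * (Fintype.card F ^ 2 + Fintype.card F + 1) := by
  calc ∑ ℓ ∈ allLines F, (P.filter (fun p => p ∈ ℓ)).card
      = ∑ ℓ ∈ allLines F, ∑ p ∈ P, if p ∈ ℓ then 1 else 0 := by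
        simp only [Finset.card_filter]
    _ = ∑ p ∈ P, ∑ ℓ ∈ allLines F, if p ∈ ℓ then 1 else 0 := Finset.sum_comm
    _ = ∑ p ∈ P, ((allLines F).filter (fun ℓ => p ∈ ℓ)).card := by
        simp only [Finset.card_filter]
    _ = ∑ _p ∈ P, (Fintype.card F ^ 2 + Fintype.card F + 1) :=
        Finset.sum_congr rfl fun p _ => point_line_count p
    _ = _ := by rw [Finset.sum_const, smul_eq_mul]

lemma allLines_card :
    (allLines F).card = Fintype.card F ^ 2 * (Fintype.card F ^ 2 + Fintype.card F + 1) := by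
  set q := Fintype.card F with hqdef
  have hq : 1 < q := Fintype.one_lt_card
  have h1 := sum_S1 (Finset.univ : Finset (Fin 3 → F))
  have h2 : ∑ ℓ ∈ allLines F, ((Finset.univ : Finset (Fin 3 → F)).filter
      (fun p => p ∈ ℓ)).card = ∑ ℓ ∈ allLines F, q :=
    Finset.sum_congr rfl fun ℓ hℓ => line_card ℓ (mem_allLines.mp hℓ)
  rw [h2, Finset.sum_const, smul_eq_mul, Finset.card_univ, card_pts] at h1
  have : (allLines F).card * q = (q ^ 2 * (q ^ 2 + q + 1)) * q := by rw [h1]; ring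
  exact Nat.eq_of_mul_eq_mul_right (by omega) this

lemma sum_S2 (P : Finset (Fin 3 → F)) :
    ∑ ℓ ∈ allLines F, (P.filter (fun p => p ∈ ℓ)).card ^ 2
      = P.card * (Fintype.card F ^ 2 + Fintype.card F) + P.card ^ 2 := by
  set q := Fintype.card F with hqdef
  calc ∑ ℓ ∈ allLines F, (P.filter (fun p => p ∈ ℓ)).card ^ 2
      = ∑ ℓ ∈ allLines F, ∑ p ∈ P, ∑ p' ∈ P,
          (if p ∈ ℓ then 1 else 0) * (if p' ∈ ℓ then 1 else 0) := by
        refine Finset.sum_congr rfl fun ℓ _ => ?_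
        rw [Finset.card_filter, sq, Finset.sum_mul_sum]
    _ = ∑ p ∈ P, ∑ p' ∈ P, ∑ ℓ ∈ allLines F,
          (if p ∈ ℓ then 1 else 0) * (if p' ∈ ℓ then 1 else 0) := by
        rw [Finset.sum_comm]
        refine Finset.sum_congr rfl fun p _ => Finset.sum_comm
    _ = ∑ p ∈ P, ∑ p' ∈ P, ((allLines F).filter (fun ℓ => p ∈ ℓ ∧ p' ∈ ℓ)).card := by
        refine Finset.sum_congr rfl fun p _ => Finset.sum_congr rfl fun p' _ => ?_
        rw [Finset.card_filter]
        refine Finset.sum_congr rfl fun ℓ _ => ?_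
        by_cases h1 : p ∈ ℓ <;> by_cases h2 : p' ∈ ℓ <;> simp [h1, h2]
    _ = ∑ p ∈ P, ((q ^ 2 + q + 1) + (P.card - 1)) := by
        refine Finset.sum_congr rfl fun p hp => ?_
        rw [← Finset.add_sum_erase _ _ hp]
        congr 1
        · have : ((allLines F).filter (fun ℓ => p ∈ ℓ ∧ p ∈ ℓ)) =
              ((allLines F).filter (fun ℓ => p ∈ ℓ)) := by simp
          rw [this, point_line_count]
        · calc ∑ p' ∈ P.erase p, ((allLines F).filter (fun ℓ => p ∈ ℓ ∧ p' ∈ ℓ)).card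
              = ∑ _p' ∈ P.erase p, 1 := by
                refine Finset.sum_congr rfl fun p' hp' => ?_
                rw [unique_line (Finset.ne_of_mem_erase hp').symm, Finset.card_singleton]
            _ = P.card - 1 := by
                rw [Finset.sum_const, smul_eq_mul, mul_one, Finset.card_erase_of_mem hp]
    _ = P.card * (q ^ 2 + q) + P.card ^ 2 := by
        rw [Finset.sum_const, smul_eq_mul]
        rcases Nat.eq_zero_or_pos P.card with h | h
        · simp [h]
        · have : q ^ 2 + q + 1 + (P.card - 1) = q ^ 2 + q + P.card := by omega
          rw [this]; ring

lemma trivial_bound (P : Finset (Fin 3 → F)) (L : Finset (Set (Fin 3 → F)))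
    (hL : ∀ ℓ ∈ L, IsLine ℓ) :
    ∑ ℓ ∈ L, (P.filter (fun p => p ∈ ℓ)).card
      ≤ P.card * (Fintype.card F ^ 2 + Fintype.card F + 1) := by
  have hsub : L ⊆ allLines F := fun ℓ hℓ => mem_allLines.mpr (hL ℓ hℓ)
  calc ∑ ℓ ∈ L, (P.filter (fun p => p ∈ ℓ)).card
      ≤ ∑ ℓ ∈ allLines F, (P.filter (fun p => p ∈ ℓ)).card :=
        Finset.sum_le_sum_of_subset hsub
    _ = _ := sum_S1 P

end Aux

lemma abstract_cs {α : Type*} (S L : Finset α) (hsub : L ⊆ S) (k : α → ℝ) (μ : ℝ)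
    (hmean : ∑ x ∈ S, k x = (S.card : ℝ) * μ) :
    ((∑ x ∈ L, k x) - (L.card : ℝ) * μ) ^ 2
      ≤ ((L.card : ℝ) - (L.card : ℝ) ^ 2 / (S.card : ℝ)) * (∑ x ∈ S, (k x - μ) ^ 2) := by
  classical
  rcases Nat.eq_zero_or_pos S.card with h0 | hpos
  · have hS : S = ∅ := Finset.card_eq_zero.mp h0
    have hLe : L = ∅ := Finset.subset_empty.mp (hS ▸ hsub)
    simp [hS, hLe]
  have hS0 : (0:ℝ) < S.card := by exact_mod_cast hpos
  have CS := Finset.sum_mul_sq_le_sq_mul_sq S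
    (fun x => (if x ∈ L then (1:ℝ) else 0) - (L.card : ℝ)/(S.card : ℝ)) (fun x => k x - μ)
  have hS' : ∑ x ∈ S, (k x - μ) = 0 := by
    rw [Finset.sum_sub_distrib, Finset.sum_const, nsmul_eq_mul, hmean]; ring
  have hL' : ∑ x ∈ L, (k x - μ) = (∑ x ∈ L, k x) - (L.card : ℝ) * μ := by
    rw [Finset.sum_sub_distrib, Finset.sum_const, nsmul_eq_mul]
  have h1 : ∑ x ∈ S, ((if x ∈ L then (1:ℝ) else 0) - (L.card : ℝ)/(S.card : ℝ)) * (k x - μ)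
      = (∑ x ∈ L, k x) - (L.card : ℝ) * μ := by
    have expand : ∀ x ∈ S, ((if x ∈ L then (1:ℝ) else 0) - (L.card : ℝ)/(S.card : ℝ)) * (k x - μ)
        = (if x ∈ L then (k x - μ) else 0) - ((L.card : ℝ)/(S.card : ℝ)) * (k x - μ) := by
      intro x _; split <;> ring
    rw [Finset.sum_congr rfl expand, Finset.sum_sub_distrib, Finset.sum_ite_mem,
      Finset.inter_eq_right.mpr hsub, ← Finset.mul_sum, hS', hL', mul_zero, sub_zero]
  have h2 : ∑ x ∈ S, ((if x ∈ L then (1:ℝ) else 0) - (L.card : ℝ)/(S.card : ℝ)) ^ 2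
      = (L.card : ℝ) - (L.card : ℝ)^2/(S.card : ℝ) := by
    have expand : ∀ x ∈ S, ((if x ∈ L then (1:ℝ) else 0) - (L.card : ℝ)/(S.card : ℝ)) ^ 2
        = (if x ∈ L then (1:ℝ) else 0) * (1 - 2*((L.card : ℝ)/(S.card : ℝ)))
          + ((L.card : ℝ)/(S.card : ℝ))^2 := by
      intro x _; split <;> ring
    rw [Finset.sum_congr rfl expand, Finset.sum_add_distrib, ← Finset.sum_mul,
      Finset.sum_ite_mem, Finset.inter_eq_right.mpr hsub, Finset.sum_const, Finset.sum_const,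
      nsmul_eq_mul, nsmul_eq_mul, mul_one]
    field_simp
    ring
  calc ((∑ x ∈ L, k x) - (L.card : ℝ) * μ)^2
      = (∑ x ∈ S, ((if x ∈ L then (1:ℝ) else 0) - (L.card : ℝ)/(S.card : ℝ)) * (k x - μ))^2 := by
        rw [h1]
    _ ≤ (∑ x ∈ S, ((if x ∈ L then (1:ℝ) else 0) - (L.card : ℝ)/(S.card : ℝ))^2)
        * (∑ x ∈ S, (k x - μ)^2) := CS
    _ = ((L.card : ℝ) - (L.card : ℝ)^2/(S.card : ℝ)) * (∑ x ∈ S, (k x - μ)^2) := by rw [h2]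


lemma analytic (ε' qr p l n IL : ℝ)
    (hε'0 : 0 < ε') (hε'le : ε' ≤ 1 / 2)
    (hqr3 : 3 ≤ qr) (hε2q : 8 ≤ ε' ^ 2 * qr) (hεq : 16 ≤ ε' * qr)
    (hp0 : 0 ≤ p) (hl0 : 0 ≤ l)
    (hn : n = qr ^ 2 * (qr ^ 2 + qr + 1))
    (hp_le : p ≤ qr ^ 3) (hl_le : l ≤ n)
    (htriv : IL ≤ p * (qr ^ 2 + qr + 1))
    (hCS : (IL - l * (p / qr ^ 2)) ^ 2
        ≤ (l - l ^ 2 / n) * (p * (qr ^ 2 + qr) - p ^ 2 * (qr + 1) / qr ^ 2)) :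
    IL ≤ (1 + ε') * (p * l * (1 / qr ^ 2)
        + qr * Real.sqrt (p * l * (1 - p / qr ^ 3) * (1 - l / qr ^ 4))) := by
  have hqr0 : (0:ℝ) < qr := by linarith
  have hn0 : (0:ℝ) < n := by rw [hn]; positivity
  have hsX := Real.sqrt_nonneg (p * l * (1 - p / qr ^ 3) * (1 - l / qr ^ 4))
  have h1p : 0 ≤ 1 - p / qr ^ 3 := by
    rw [sub_nonneg, div_le_one (by positivity)]; exact hp_le
  have hplq : 0 ≤ p * l * (1 / qr ^ 2) := by positivity
  by_cases hcase : l ≤ (1 - ε' / 2) * qr ^ 4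
  · -- Cauchy–Schwarz case
    have hl4 : l / qr ^ 4 ≤ 1 - ε' / 2 := by
      rw [div_le_iff₀ (by positivity : (0:ℝ) < qr ^ 4)]
      nlinarith [hcase]
    have h1l : 0 ≤ 1 - l / qr ^ 4 := by nlinarith [hl4, hε'le, hε'0]
    have hA0 : 0 ≤ p * l * (1 - p / qr ^ 3) := mul_nonneg (mul_nonneg hp0 hl0) h1p
    have e1 : (l - l ^ 2 / n) * (p * (qr ^ 2 + qr) - p ^ 2 * (qr + 1) / qr ^ 2)
        = (p * l * (1 - p / qr ^ 3)) * (qr * (qr + 1) * (1 - l / n)) := by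
      field_simp
    have hG : qr * (qr + 1) * (1 - l / n) ≤ (1 + ε') ^ 2 * qr ^ 2 * (1 - l / qr ^ 4) := by
      have hD : ε' / 2 * qr ^ 4 ≤ qr ^ 4 - l := by nlinarith [hcase]
      have hD0 : 0 ≤ qr ^ 4 - l := le_trans (by positivity) hD
      rw [show qr * (qr + 1) * (1 - l / n) = qr * (qr + 1) * (n - l) / n by
          field_simp,
        show (1 + ε') ^ 2 * qr ^ 2 * (1 - l / qr ^ 4)
            = (1 + ε') ^ 2 * qr ^ 2 * (qr ^ 4 - l) / qr ^ 4 by field_simp,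
        div_le_div_iff₀ hn0 (by positivity : (0:ℝ) < qr ^ 4), hn]
      have inner : qr * (qr + 1) + 2 * ε' * qr ^ 2 ≤ (1 + ε') ^ 2 * (qr ^ 2 + qr + 1) := by
        nlinarith [hε'0.le, hqr0.le, sq_nonneg ε', mul_nonneg hε'0.le hqr0.le]
      have hq8' : 3 * qr ^ 8 ≤ qr ^ 9 := by
        nlinarith [pow_nonneg hqr0.le 8, hqr3]
      have hq7' : 3 * qr ^ 7 ≤ qr ^ 8 := by
        nlinarith [pow_nonneg hqr0.le 7, hqr3]
      nlinarith [mul_le_mul_of_nonneg_right inner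
          (mul_nonneg (by positivity : (0:ℝ) ≤ qr ^ 4) hD0),
        mul_le_mul_of_nonneg_left hD (by positivity : (0:ℝ) ≤ 2 * ε' * qr ^ 6),
        mul_le_mul_of_nonneg_right hε2q (by positivity : (0:ℝ) ≤ qr ^ 9),
        hq8', hq7', hqr0.le, hD0]
    have key : (IL - l * (p / qr ^ 2)) ^ 2
        ≤ ((1 + ε') * qr) ^ 2 * (p * l * (1 - p / qr ^ 3) * (1 - l / qr ^ 4)) := by
      calc (IL - l * (p / qr ^ 2)) ^ 2
          ≤ (l - l ^ 2 / n) * (p * (qr ^ 2 + qr) - p ^ 2 * (qr + 1) / qr ^ 2) := hCS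
        _ = (p * l * (1 - p / qr ^ 3)) * (qr * (qr + 1) * (1 - l / n)) := e1
        _ ≤ (p * l * (1 - p / qr ^ 3)) * ((1 + ε') ^ 2 * qr ^ 2 * (1 - l / qr ^ 4)) :=
            mul_le_mul_of_nonneg_left hG hA0
        _ = ((1 + ε') * qr) ^ 2 * (p * l * (1 - p / qr ^ 3) * (1 - l / qr ^ 4)) := by ring
    have hstep : IL - l * (p / qr ^ 2)
        ≤ (1 + ε') * qr * Real.sqrt (p * l * (1 - p / qr ^ 3) * (1 - l / qr ^ 4)) := by
      calc IL - l * (p / qr ^ 2) ≤ |IL - l * (p / qr ^ 2)| := le_abs_self _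
        _ = Real.sqrt ((IL - l * (p / qr ^ 2)) ^ 2) := (Real.sqrt_sq_eq_abs _).symm
        _ ≤ Real.sqrt (((1 + ε') * qr) ^ 2
            * (p * l * (1 - p / qr ^ 3) * (1 - l / qr ^ 4))) := Real.sqrt_le_sqrt key
        _ = (1 + ε') * qr * Real.sqrt (p * l * (1 - p / qr ^ 3) * (1 - l / qr ^ 4)) := by
            rw [Real.sqrt_mul (sq_nonneg _), Real.sqrt_sq (by positivity)]
    have hrw : l * (p / qr ^ 2) = p * l * (1 / qr ^ 2) := by ring
    have hmul : 0 ≤ ε' * (p * l * (1 / qr ^ 2)) := mul_nonneg hε'0.le hplq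
    calc IL ≤ p * l * (1 / qr ^ 2)
          + (1 + ε') * (qr * Real.sqrt (p * l * (1 - p / qr ^ 3) * (1 - l / qr ^ 4))) := by
          nlinarith [hstep, hrw]
      _ ≤ (1 + ε') * (p * l * (1 / qr ^ 2))
          + (1 + ε') * (qr * Real.sqrt (p * l * (1 - p / qr ^ 3) * (1 - l / qr ^ 4))) := by
          linarith [hmul]
      _ = (1 + ε') * (p * l * (1 / qr ^ 2)
          + qr * Real.sqrt (p * l * (1 - p / qr ^ 3) * (1 - l / qr ^ 4))) := by ring
  · -- dense case : trivial bound
    push_neg at hcase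
    have ha : 16 * qr ^ 3 ≤ ε' * qr ^ 4 := by
      nlinarith [mul_le_mul_of_nonneg_right hεq (by positivity : (0:ℝ) ≤ qr ^ 3)]
    have hb : (1 + ε') * ((1 - ε' / 2) * qr ^ 4) ≤ (1 + ε') * l :=
      mul_le_mul_of_nonneg_left hcase.le (by linarith)
    have hc : 3 * qr ^ 2 ≤ qr ^ 3 := by nlinarith [sq_nonneg qr, hqr3, hqr0.le]
    have hd : ε' ^ 2 * qr ^ 4 ≤ ε' / 2 * qr ^ 4 := by
      nlinarith [hε'le, hε'0.le, pow_nonneg hqr0.le 4]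
    have inner : (qr ^ 2 + qr + 1) * qr ^ 2 ≤ (1 + ε') * l := by
      nlinarith [ha, hb, hc, hd, hqr0.le, hqr3]
    have step : p * (qr ^ 2 + qr + 1) ≤ (1 + ε') * (p * l * (1 / qr ^ 2)) := by
      have h2 := mul_le_mul_of_nonneg_left inner hp0
      have h3 := mul_le_mul_of_nonneg_right h2 (by positivity : (0:ℝ) ≤ 1 / qr ^ 2)
      calc p * (qr ^ 2 + qr + 1) = p * ((qr ^ 2 + qr + 1) * qr ^ 2) * (1 / qr ^ 2) := by
            field_simp
        _ ≤ p * ((1 + ε') * l) * (1 / qr ^ 2) := h3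
        _ = (1 + ε') * (p * l * (1 / qr ^ 2)) := by ring
    have hmul : 0 ≤ (1 + ε') * qr
        * Real.sqrt (p * l * (1 - p / qr ^ 3) * (1 - l / qr ^ 4)) :=
      mul_nonneg (mul_nonneg (by linarith : (0:ℝ) ≤ 1 + ε') hqr0.le) hsX
    calc IL ≤ p * (qr ^ 2 + qr + 1) := htriv
      _ ≤ (1 + ε') * (p * l * (1 / qr ^ 2)) := step
      _ ≤ (1 + ε') * (p * l * (1 / qr ^ 2)
          + qr * Real.sqrt (p * l * (1 - p / qr ^ 3) * (1 - l / qr ^ 4))) := by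
          nlinarith [hmul]

/-- The point–line incidence bound in `F_q^3`. -/
theorem stmt_8 : ∀ ε : ℝ, 0 < ε → ∃ Q : ℕ, ∀ q : ℕ, Q < q →
    ∀ (F : Type) [Field F] [Fintype F], Fintype.card F = q →
    ∀ P : Finset (Fin 3 → F), ∀ L : Finset (Set (Fin 3 → F)),
      (∀ ℓ ∈ L, IsLine ℓ) →
      ((∑ ℓ ∈ L, (P.filter (fun p => p ∈ ℓ)).card : ℕ) : ℝ)
        ≤ (1 + ε) * ((P.card : ℝ) * L.card * (q : ℝ) ^ (-2 : ℤ)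
            + q * Real.sqrt ((P.card : ℝ) * L.card
                * (1 - P.card * (q : ℝ) ^ (-3 : ℤ))
                * (1 - L.card * (q : ℝ) ^ (-4 : ℤ)))) := by
  intro ε hε
  have hε'0 : 0 < min ε (1/2) := lt_min hε one_half_pos
  have hε'le : min ε (1/2) ≤ 1/2 := min_le_right _ _
  have hε'ε : min ε (1/2) ≤ ε := min_le_left _ _
  refine ⟨⌈8 / min ε (1/2) ^ 2⌉₊ + 2, ?_⟩
  intro q hq F _ _ hcard P L hL
  have hq3 : 3 ≤ q := by omega
  have hqr3 : (3 : ℝ) ≤ (q : ℝ) := by exact_mod_cast hq3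
  have hqr0 : (0 : ℝ) < (q : ℝ) := by linarith
  have hq8 : 8 / min ε (1/2) ^ 2 ≤ (q : ℝ) := by
    have h1 : (8 / min ε (1/2) ^ 2 : ℝ) ≤ ⌈8 / min ε (1/2) ^ 2⌉₊ := Nat.le_ceil _
    have h2 : (⌈8 / min ε (1/2) ^ 2⌉₊ : ℝ) ≤ (q : ℝ) := by
      have : ⌈8 / min ε (1/2) ^ 2⌉₊ ≤ q := by omega
      exact_mod_cast this
    linarith
  have hε2q : 8 ≤ min ε (1/2) ^ 2 * (q : ℝ) := by
    rw [div_le_iff₀ (by positivity)] at hq8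
    linarith [hq8]
  have hεq : 16 ≤ min ε (1/2) * (q : ℝ) := by
    nlinarith [hε2q, hε'le, hε'0, hqr0]
  have hsub : L ⊆ allLines F := fun ℓ hℓ => mem_allLines.mpr (hL ℓ hℓ)
  have hp0 : (0 : ℝ) ≤ (P.card : ℝ) := Nat.cast_nonneg _
  have hl0 : (0 : ℝ) ≤ (L.card : ℝ) := Nat.cast_nonneg _
  have hn : ((allLines F).card : ℝ) = (q:ℝ) ^ 2 * ((q:ℝ) ^ 2 + (q:ℝ) + 1) := by
    have h := allLines_card (F := F)
    rw [hcard] at h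
    rw [h]
    push_cast
    ring
  have hp_le : (P.card : ℝ) ≤ (q:ℝ) ^ 3 := by
    have h := Finset.card_le_univ P
    rw [card_pts, hcard] at h
    exact_mod_cast h
  have hl_le : (L.card : ℝ) ≤ ((allLines F).card : ℝ) := by
    exact_mod_cast Finset.card_le_card hsub
  have hA1 : ∑ ℓ ∈ allLines F, ((P.filter (fun p => p ∈ ℓ)).card : ℝ)
      = (P.card : ℝ) * ((q:ℝ) ^ 2 + (q:ℝ) + 1) := by
    have h := sum_S1 P
    rw [hcard] at h
    exact_mod_cast h
  have hA2 : ∑ ℓ ∈ allLines F, ((P.filter (fun p => p ∈ ℓ)).card : ℝ) ^ 2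
      = (P.card : ℝ) * ((q:ℝ) ^ 2 + (q:ℝ)) + (P.card : ℝ) ^ 2 := by
    have h := sum_S2 P
    rw [hcard] at h
    exact_mod_cast h
  have htriv : ∑ ℓ ∈ L, ((P.filter (fun p => p ∈ ℓ)).card : ℝ)
      ≤ (P.card : ℝ) * ((q:ℝ) ^ 2 + (q:ℝ) + 1) := by
    have h := trivial_bound P L hL
    rw [hcard] at h
    exact_mod_cast h
  have hmean : ∑ ℓ ∈ allLines F, ((P.filter (fun p => p ∈ ℓ)).card : ℝ)
      = ((allLines F).card : ℝ) * ((P.card : ℝ) / (q:ℝ) ^ 2) := by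
    rw [hA1, hn]
    field_simp
  have hCSraw := abstract_cs (allLines F) L hsub
    (fun ℓ => ((P.filter (fun p => p ∈ ℓ)).card : ℝ)) ((P.card : ℝ) / (q:ℝ) ^ 2) hmean
  have hvar : ∑ ℓ ∈ allLines F,
      (((P.filter (fun p => p ∈ ℓ)).card : ℝ) - (P.card : ℝ) / (q:ℝ) ^ 2) ^ 2
      = (P.card : ℝ) * ((q:ℝ) ^ 2 + (q:ℝ))
        - (P.card : ℝ) ^ 2 * ((q:ℝ) + 1) / (q:ℝ) ^ 2 := by
    have expand : ∀ ℓ ∈ allLines F,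
        (((P.filter (fun p => p ∈ ℓ)).card : ℝ) - (P.card : ℝ) / (q:ℝ) ^ 2) ^ 2
        = ((P.filter (fun p => p ∈ ℓ)).card : ℝ) ^ 2
          - 2 * ((P.card : ℝ) / (q:ℝ) ^ 2) * ((P.filter (fun p => p ∈ ℓ)).card : ℝ)
          + ((P.card : ℝ) / (q:ℝ) ^ 2) ^ 2 := by
      intro ℓ _
      ring
    rw [Finset.sum_congr rfl expand, Finset.sum_add_distrib, Finset.sum_sub_distrib,
      ← Finset.mul_sum, hA2, hA1, Finset.sum_const, nsmul_eq_mul, hn]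
    field_simp
    ring
  rw [hvar] at hCSraw
  have main := analytic (min ε (1/2)) (q:ℝ) (P.card : ℝ) (L.card : ℝ)
    ((allLines F).card : ℝ) (∑ ℓ ∈ L, ((P.filter (fun p => p ∈ ℓ)).card : ℝ))
    hε'0 hε'le hqr3 hε2q hεq hp0 hl0 hn hp_le hl_le htriv hCSraw
  have hz2 : ((q:ℝ)) ^ (-2 : ℤ) = 1 / (q:ℝ) ^ 2 := by
    rw [zpow_neg, one_div, show ((2:ℤ)) = ((2:ℕ):ℤ) from rfl, zpow_natCast]
  have hz3 : ((q:ℝ)) ^ (-3 : ℤ) = 1 / (q:ℝ) ^ 3 := by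
    rw [zpow_neg, one_div, show ((3:ℤ)) = ((3:ℕ):ℤ) from rfl, zpow_natCast]
  have hz4 : ((q:ℝ)) ^ (-4 : ℤ) = 1 / (q:ℝ) ^ 4 := by
    rw [zpow_neg, one_div, show ((4:ℤ)) = ((4:ℕ):ℤ) from rfl, zpow_natCast]
  rw [Nat.cast_sum, hz2, hz3, hz4]
  rw [show (P.card : ℝ) * (L.card : ℝ) * (1 - (P.card : ℝ) * (1 / (q:ℝ) ^ 3))
      * (1 - (L.card : ℝ) * (1 / (q:ℝ) ^ 4))
      = (P.card : ℝ) * (L.card : ℝ) * (1 - (P.card : ℝ) / (q:ℝ) ^ 3)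
      * (1 - (L.card : ℝ) / (q:ℝ) ^ 4) by ring]
  refine le_trans main (mul_le_mul_of_nonneg_right (by linarith) ?_)
  positivity
end

section
/- Let G be a bipartite graph with left vertex set U and right vertex set V in which every left vertex has degree d_U and every right vertex has degree d_V. Let λ be the ratio of the second largest to the largest eigenvalue of the adjacency matrix of G. For S ⊆ U with |S| = α|U| and T ⊆ V with |T| = β|V|, the number e(S,T) of edges between S and T satisfies | e(S,T)/e(G) − αβ | ≤ λ·sqrt(αβ(1−α)(1−β)). -/
/-!
Write `A = [[0, B], [Bᵀ, 0]]`. The vector `w` equal to `√dU` on `U` and `√dV` on `V` is a positive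
eigenvector of `A` for `√(dU dV)`; comparing any eigenvector with `w` at the coordinate where their
ratio is largest shows that every eigenvalue is at most `√(dU dV)` in absolute value. Hence
`λ₁ = √(dU dV)` and `e(G) = dU |U| = λ₁ √(|U| |V|)`.

With `x = 1_S - α` on `U` and `y = 1_T - β` on `V`, `e(S,T) - αβ e(G) = xᵀ B y`,
`‖x‖² = α(1-α)|U|` and `‖y‖² = β(1-β)|V|`. Every `z = (s x, t y)` is orthogonal to `w` and has
`zᵀ A z = 2 s t xᵀ B y`, while on `w`ᗮ the quadratic form is at most `λ₂ ‖z‖²` (either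
`λ₂ ≥ λ₁`, or `λ₁` is simple with eigenvector `w`). Taking `s = ±‖y‖`, `t = ‖x‖` gives
`|xᵀ B y| ≤ λ₂ ‖x‖ ‖y‖`, so no bound on the negative eigenvalues is needed.
-/

open Matrix Finset

theorem Matrix.dotProduct_self_pos {ι : Type*} [Fintype ι] {x : ι → ℝ} (hx : x ≠ 0) :
    0 < x ⬝ᵥ x :=
  lt_of_le_of_ne (dotProduct_self_star_nonneg x) (Ne.symm (dotProduct_self_eq_zero.not.mpr hx))

theorem Matrix.IsSymm.mulVec_dotProduct {n : Type*} [Fintype n] {A : Matrix n n ℝ}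
    (hA : A.IsSymm) (x y : n → ℝ) : A *ᵥ x ⬝ᵥ y = x ⬝ᵥ A *ᵥ y := by
  rw [dotProduct_mulVec, ← vecMul_transpose, hA.eq, dotProduct_comm]

theorem Matrix.IsSymm.dotProduct_eq_zero_of_mulVec_eq_smul {n : Type*} [Fintype n]
    {A : Matrix n n ℝ} (hA : A.IsSymm) {v w : n → ℝ} {a b : ℝ} (hv : A *ᵥ v = a • v)
    (hw : A *ᵥ w = b • w) (hab : a ≠ b) : v ⬝ᵥ w = 0 := by
  have h := hA.mulVec_dotProduct v w
  rw [hv, hw, smul_dotProduct, dotProduct_smul, smul_eq_mul, smul_eq_mul] at h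
  exact (mul_eq_mul_right_iff.mp h).resolve_left hab

theorem Matrix.abs_le_of_mulVec_eq_smul_of_pos {ι : Type*} [Fintype ι] {M : Matrix ι ι ℝ}
    (hM : ∀ i j, 0 ≤ M i j) {w : ι → ℝ} (hw : ∀ i, 0 < w i) {r : ℝ} (hMw : M *ᵥ w = r • w)
    {v : ι → ℝ} (hv : v ≠ 0) {ν : ℝ} (hMv : M *ᵥ v = ν • v) : |ν| ≤ r := by
  obtain ⟨i₁, hi₁⟩ := Function.ne_iff.mp hv
  obtain ⟨k, -, hk⟩ := exists_max_image univ (fun j => |v j| / w j) ⟨i₁, mem_univ _⟩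
  set ρ := |v k| / w k
  have hvk : 0 < |v k| := (div_pos_iff_of_pos_right (hw k)).mp
    ((div_pos (abs_pos.mpr hi₁) (hw i₁)).trans_le (hk i₁ (mem_univ _)))
  have hbound : ∀ j, |v j| ≤ ρ * w j := fun j => (div_le_iff₀ (hw j)).mp (hk j (mem_univ _))
  have key : |ν| * |v k| ≤ r * |v k| := calc
    |ν| * |v k| = |∑ j, M k j * v j| := by
      rw [← abs_mul, ← smul_eq_mul, ← Pi.smul_apply, ← hMv]; rfl
    _ ≤ ∑ j, M k j * |v j| := (abs_sum_le_sum_abs _ _).trans_eq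
      (sum_congr rfl fun j _ => by rw [abs_mul, abs_of_nonneg (hM k j)])
    _ ≤ ∑ j, M k j * (ρ * w j) :=
      sum_le_sum fun j _ => mul_le_mul_of_nonneg_left (hbound j) (hM k j)
    _ = ρ * (M *ᵥ w) k := by
      simp only [mulVec, dotProduct, mul_sum]
      exact sum_congr rfl fun j _ => by ring
    _ = r * |v k| := by
      rw [hMw, Pi.smul_apply, smul_eq_mul, mul_left_comm, div_mul_cancel₀ _ (hw k).ne']
  exact le_of_mul_le_mul_right key hvk

namespace Matrix.IsHermitian

variable {n : Type*} [Fintype n] [DecidableEq n] {A : Matrix n n ℝ} (hA : A.IsHermitian)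

theorem dotProduct_eq_sum_eigenvectorBasis (x y : n → ℝ) :
    x ⬝ᵥ y = ∑ i, (x ⬝ᵥ hA.eigenvectorBasis i) * (y ⬝ᵥ hA.eigenvectorBasis i) := by
  have := hA.eigenvectorBasis.sum_inner_mul_inner (WithLp.toLp 2 x) (WithLp.toLp 2 y)
  simpa [EuclideanSpace.inner_eq_star_dotProduct, dotProduct_comm] using this.symm

theorem dotProduct_mulVec_eq_sum_eigenvectorBasis (x y : n → ℝ) :
    x ⬝ᵥ A *ᵥ y =
      ∑ i, hA.eigenvalues i * (x ⬝ᵥ hA.eigenvectorBasis i) * (y ⬝ᵥ hA.eigenvectorBasis i) := by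
  have hsymm : A.IsSymm := isHermitian_iff_isSymm.mp hA
  rw [hA.dotProduct_eq_sum_eigenvectorBasis]
  refine sum_congr rfl fun i _ => ?_
  rw [dotProduct_comm (A *ᵥ y), ← hsymm.mulVec_dotProduct, hA.mulVec_eigenvectorBasis,
    smul_dotProduct, smul_eq_mul, dotProduct_comm _ y]
  ring

theorem dotProduct_mulVec_self_le {L : ℝ} {z : n → ℝ}
    (h : ∀ i, hA.eigenvalues i ≤ L ∨ z ⬝ᵥ hA.eigenvectorBasis i = 0) :
    z ⬝ᵥ A *ᵥ z ≤ L * (z ⬝ᵥ z) := by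
  rw [hA.dotProduct_mulVec_eq_sum_eigenvectorBasis, hA.dotProduct_eq_sum_eigenvectorBasis,
    mul_sum]
  refine sum_le_sum fun i _ => ?_
  rcases h i with hi | hi
  · rw [mul_assoc]
    exact mul_le_mul_of_nonneg_right hi (mul_self_nonneg _)
  · simp [hi]

theorem le_of_mulVec_eq_smul {L r : ℝ} (hL : ∀ i, hA.eigenvalues i ≤ L) {w : n → ℝ}
    (hw : A *ᵥ w = r • w) (hw0 : w ≠ 0) : r ≤ L := by
  have h := hA.dotProduct_mulVec_self_le (z := w) fun i => .inl (hL i)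
  rw [hw, dotProduct_smul, smul_eq_mul] at h
  exact le_of_mul_le_mul_right h (dotProduct_self_pos hw0)

theorem eigenvalues_eq_of_pos_eigenvector (hnonneg : ∀ i j, 0 ≤ A i j) {i₀ : n}
    (hmax : ∀ i, hA.eigenvalues i ≤ hA.eigenvalues i₀) {w : n → ℝ} (hw : ∀ i, 0 < w i) {r : ℝ}
    (hAw : A *ᵥ w = r • w) : hA.eigenvalues i₀ = r := by
  have hb0 : ⇑(hA.eigenvectorBasis i₀) ≠ 0 := by
    simpa using hA.eigenvectorBasis.orthonormal.ne_zero i₀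
  refine le_antisymm ?_ (hA.le_of_mulVec_eq_smul hmax hAw fun h => (hw i₀).ne' (congrFun h i₀))
  exact (abs_le_of_mulVec_eq_smul_of_pos hnonneg hw hAw hb0
    (hA.mulVec_eigenvectorBasis i₀)).trans' (le_abs_self _)

theorem dotProduct_mulVec_self_le_of_dotProduct_eq_zero {i₀ : n} {L : ℝ}
    (hL : ∀ i, i ≠ i₀ → hA.eigenvalues i ≤ L) {w : n → ℝ}
    (hw : A *ᵥ w = hA.eigenvalues i₀ • w) (hw0 : w ≠ 0) {z : n → ℝ} (hz : z ⬝ᵥ w = 0) :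
    z ⬝ᵥ A *ᵥ z ≤ L * (z ⬝ᵥ z) := by
  refine hA.dotProduct_mulVec_self_le fun i => ?_
  rcases ne_or_eq i i₀ with hi | rfl
  · exact .inl (hL i hi)
  rcases le_or_gt (hA.eigenvalues i) L with hle | hlt
  · exact .inl hle
  -- now `eigenvalues i` is simple, so `w` is a nonzero multiple of the `i`-th eigenvector
  right
  have hsymm : A.IsSymm := isHermitian_iff_isSymm.mp hA
  have hperp : ∀ j, j ≠ i → w ⬝ᵥ hA.eigenvectorBasis j = 0 := fun j hj =>
    hsymm.dotProduct_eq_zero_of_mulVec_eq_smul hw (hA.mulVec_eigenvectorBasis j)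
      (ne_of_gt (lt_of_le_of_lt (hL j hj) hlt))
  have hcoef : w ⬝ᵥ hA.eigenvectorBasis i ≠ 0 := by
    intro h0
    refine hw0 (dotProduct_self_eq_zero.mp ?_)
    rw [hA.dotProduct_eq_sum_eigenvectorBasis, sum_eq_zero]
    intro j _
    rcases eq_or_ne j i with rfl | hj
    · rw [h0, mul_zero]
    · rw [hperp j hj, mul_zero]
  rw [hA.dotProduct_eq_sum_eigenvectorBasis, sum_eq_single i] at hz
  · exact (mul_eq_zero.mp hz).resolve_right hcoef
  · intro j _ hj; rw [hperp j hj, mul_zero]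
  · simp

end Matrix.IsHermitian

section Indicator

variable {ι : Type*} [Fintype ι]

theorem Finset.indicator_one_dotProduct (S : Finset ι) (x : ι → ℝ) :
    (S : Set ι).indicator 1 ⬝ᵥ x = ∑ i ∈ S, x i := by
  classical
  simp [dotProduct, Set.indicator_apply]

theorem Finset.indicator_one_sub_smul_one_dotProduct_one {S : Finset ι} {c : ℝ}
    (hc : (#S : ℝ) = c * Fintype.card ι) :
    ((S : Set ι).indicator 1 - c • 1) ⬝ᵥ (1 : ι → ℝ) = 0 := by
  simp [sub_dotProduct, indicator_one_dotProduct, hc]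

theorem Finset.indicator_one_sub_smul_one_dotProduct_self {S : Finset ι} {c : ℝ}
    (hc : (#S : ℝ) = c * Fintype.card ι) :
    ((S : Set ι).indicator 1 - c • 1) ⬝ᵥ ((S : Set ι).indicator 1 - c • (1 : ι → ℝ)) =
      c * (1 - c) * Fintype.card ι := by
  have hS : ∑ i ∈ S, (S : Set ι).indicator (1 : ι → ℝ) i = #S := by
    rw [sum_congr rfl fun i hi => Set.indicator_of_mem (mem_coe.mpr hi) _]
    simp
  simp only [sub_dotProduct, dotProduct_sub, smul_dotProduct, dotProduct_smul,
    indicator_one_dotProduct, dotProduct_comm 1, hS]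
  simp [hc]
  ring

end Indicator

theorem Matrix.eq_fromBlocks_zero_of_isSymm {U V R : Type*} [Zero R]
    {A : Matrix (U ⊕ V) (U ⊕ V) R} (hA : A.IsSymm) (hU : ∀ u u', A (.inl u) (.inl u') = 0)
    (hV : ∀ v v', A (.inr v) (.inr v') = 0) :
    A = fromBlocks 0 A.toBlocks₁₂ A.toBlocks₁₂ᵀ 0 := by
  ext (u | v) (u' | v')
  · exact hU u u'
  · rfl
  · exact (hA.apply _ _).symm
  · exact hV v v'

section Bipartite

variable {U V : Type*} [Fintype U] [Fintype V]

theorem Matrix.fromBlocks_zero_mulVec_sumElim (B : Matrix U V ℝ) (x : U → ℝ) (y : V → ℝ) :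
    fromBlocks 0 B Bᵀ 0 *ᵥ Sum.elim x y = Sum.elim (B *ᵥ y) (x ᵥ* B) := by
  simp [fromBlocks_mulVec, mulVec_transpose]

theorem Matrix.sumElim_dotProduct_fromBlocks_zero_mulVec (B : Matrix U V ℝ) (x : U → ℝ)
    (y : V → ℝ) : Sum.elim x y ⬝ᵥ fromBlocks 0 B Bᵀ 0 *ᵥ Sum.elim x y = 2 * (x ⬝ᵥ B *ᵥ y) := by
  rw [fromBlocks_zero_mulVec_sumElim, sumElim_dotProduct_sumElim, dotProduct_comm y,
    ← dotProduct_mulVec]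
  ring

theorem Matrix.fromBlocks_zero_mulVec_sqrt {B : Matrix U V ℝ} {dU dV : ℝ} (hdU : 0 ≤ dU)
    (hdV : 0 ≤ dV) (hrow : B *ᵥ 1 = dU • 1) (hcol : 1 ᵥ* B = dV • 1) :
    fromBlocks 0 B Bᵀ 0 *ᵥ Sum.elim (√dU • 1) (√dV • 1) =
      √(dU * dV) • Sum.elim (√dU • 1) (√dV • 1) := by
  rw [fromBlocks_zero_mulVec_sumElim, mulVec_smul, smul_vecMul, hrow, hcol, Real.sqrt_mul hdU]
  ext (u | v)
  · simp only [Sum.elim_inl, Pi.smul_apply, Pi.one_apply, smul_eq_mul, mul_one]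
    rw [mul_right_comm, Real.mul_self_sqrt hdU, mul_comm]
  · simp only [Sum.elim_inr, Pi.smul_apply, Pi.one_apply, smul_eq_mul, mul_one]
    rw [mul_assoc, Real.mul_self_sqrt hdV]

theorem Matrix.abs_dotProduct_mulVec_le_of_forall_le {B : Matrix U V ℝ} {L : ℝ} {x : U → ℝ}
    {y : V → ℝ}
    (h : ∀ s t : ℝ, 2 * (s • x ⬝ᵥ B *ᵥ t • y) ≤ L * (s • x ⬝ᵥ s • x + t • y ⬝ᵥ t • y)) :
    |x ⬝ᵥ B *ᵥ y| ≤ L * √(x ⬝ᵥ x) * √(y ⬝ᵥ y) := by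
  rcases eq_or_ne x 0 with rfl | hx
  · simp
  rcases eq_or_ne y 0 with rfl | hy
  · simp
  set a := √(x ⬝ᵥ x)
  set b := √(y ⬝ᵥ y)
  have ha : 0 < a := Real.sqrt_pos.mpr (dotProduct_self_pos hx)
  have hb : 0 < b := Real.sqrt_pos.mpr (dotProduct_self_pos hy)
  have ha2 : a ^ 2 = x ⬝ᵥ x := Real.sq_sqrt (dotProduct_self_pos hx).le
  have hb2 : b ^ 2 = y ⬝ᵥ y := Real.sq_sqrt (dotProduct_self_pos hy).le
  have hquad : ∀ s t : ℝ, 2 * (s * t) * (x ⬝ᵥ B *ᵥ y) ≤ L * (s ^ 2 * a ^ 2 + t ^ 2 * b ^ 2) := by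
    intro s t
    have := h s t
    simp only [mulVec_smul, dotProduct_smul, smul_dotProduct, smul_eq_mul] at this
    rw [ha2, hb2]
    linarith
  have hab : 0 < 2 * (a * b) := by positivity
  rw [abs_le]
  constructor
  · have := hquad (-b) a
    nlinarith
  · have := hquad b a
    nlinarith

theorem Matrix.IsHermitian.abs_dotProduct_mulVec_le_of_fromBlocks [DecidableEq U] [DecidableEq V]
    {B : Matrix U V ℝ} (hA : (Matrix.fromBlocks 0 B Bᵀ 0).IsHermitian) {i₀ : U ⊕ V} {L : ℝ}
    (hL : ∀ i, i ≠ i₀ → hA.eigenvalues i ≤ L) {wU : U → ℝ} {wV : V → ℝ}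
    (hw : Matrix.fromBlocks 0 B Bᵀ 0 *ᵥ Sum.elim wU wV = hA.eigenvalues i₀ • Sum.elim wU wV)
    (hw0 : Sum.elim wU wV ≠ 0) {x : U → ℝ} {y : V → ℝ} (hx : x ⬝ᵥ wU = 0)
    (hy : y ⬝ᵥ wV = 0) :
    |x ⬝ᵥ B *ᵥ y| ≤ L * √(x ⬝ᵥ x) * √(y ⬝ᵥ y) := by
  refine abs_dotProduct_mulVec_le_of_forall_le fun s t => ?_
  have hz : Sum.elim (s • x) (t • y) ⬝ᵥ Sum.elim wU wV = 0 := by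
    simp [sumElim_dotProduct_sumElim, hx, hy]
  have := hA.dotProduct_mulVec_self_le_of_dotProduct_eq_zero hL hw hw0 hz
  rwa [sumElim_dotProduct_fromBlocks_zero_mulVec, sumElim_dotProduct_sumElim] at this

theorem Matrix.indicator_one_sub_smul_one_dotProduct_mulVec {B : Matrix U V ℝ} {dU dV α β : ℝ}
    (hrow : B *ᵥ 1 = dU • 1) (hcol : 1 ᵥ* B = dV • 1) {S : Finset U} {T : Finset V}
    (hα : (#S : ℝ) = α * Fintype.card U) (hβ : (#T : ℝ) = β * Fintype.card V) :
    ((S : Set U).indicator 1 - α • 1) ⬝ᵥ B *ᵥ ((T : Set V).indicator 1 - β • 1) =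
      ∑ u ∈ S, ∑ v ∈ T, B u v - α * β * (dU * Fintype.card U) := by
  have hrowT : ∀ u, (B *ᵥ (T : Set V).indicator 1) u = ∑ v ∈ T, B u v := fun u => by
    rw [mulVec, dotProduct_comm, indicator_one_dotProduct]
  rw [sub_dotProduct, smul_dotProduct, dotProduct_mulVec 1, hcol, smul_dotProduct,
    dotProduct_comm 1, indicator_one_sub_smul_one_dotProduct_one hβ, mulVec_sub, mulVec_smul, hrow,
    dotProduct_sub, indicator_one_dotProduct, dotProduct_smul, dotProduct_smul,
    indicator_one_dotProduct]
  simp [hrowT, hα]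
  ring

theorem Matrix.IsHermitian.eigenvalues_eq_sqrt_mul_of_fromBlocks [DecidableEq U]
    [DecidableEq V] {B : Matrix U V ℝ} (hA : (Matrix.fromBlocks 0 B Bᵀ 0).IsHermitian)
    (hnonneg : ∀ i j, 0 ≤ Matrix.fromBlocks 0 B Bᵀ 0 i j) {dU dV : ℝ} (hdU : 0 < dU)
    (hdV : 0 < dV) (hrow : B *ᵥ 1 = dU • 1) (hcol : 1 ᵥ* B = dV • 1) {i₀ : U ⊕ V}
    (hmax : ∀ i, hA.eigenvalues i ≤ hA.eigenvalues i₀) :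
    hA.eigenvalues i₀ = √(dU * dV) :=
  hA.eigenvalues_eq_of_pos_eigenvector hnonneg hmax (by rintro (u | v) <;> simp [hdU, hdV])
    (fromBlocks_zero_mulVec_sqrt hdU.le hdV.le hrow hcol)

theorem Matrix.IsHermitian.abs_sum_sum_sub_le_of_fromBlocks [DecidableEq U] [DecidableEq V]
    {B : Matrix U V ℝ} (hA : (Matrix.fromBlocks 0 B Bᵀ 0).IsHermitian)
    (hnonneg : ∀ i j, 0 ≤ Matrix.fromBlocks 0 B Bᵀ 0 i j) {dU dV : ℝ} (hdU : 0 < dU)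
    (hdV : 0 < dV) (hrow : B *ᵥ 1 = dU • 1) (hcol : 1 ᵥ* B = dV • 1) {i₀ : U ⊕ V}
    (hmax : ∀ i, hA.eigenvalues i ≤ hA.eigenvalues i₀) {L : ℝ}
    (hL : ∀ i, i ≠ i₀ → hA.eigenvalues i ≤ L) {S : Finset U} {T : Finset V} {α β : ℝ}
    (hα : (#S : ℝ) = α * Fintype.card U) (hβ : (#T : ℝ) = β * Fintype.card V) :
    |∑ u ∈ S, ∑ v ∈ T, B u v - α * β * (dU * Fintype.card U)| ≤
      L * √(α * β * (1 - α) * (1 - β)) * √(Fintype.card U * Fintype.card V) := by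
  have hw := fromBlocks_zero_mulVec_sqrt hdU.le hdV.le hrow hcol
  rw [← hA.eigenvalues_eq_sqrt_mul_of_fromBlocks hnonneg hdU hdV hrow hcol hmax] at hw
  have hw0 : Sum.elim (√dU • (1 : U → ℝ)) (√dV • (1 : V → ℝ)) ≠ 0 := fun h => by
    have := congrFun h i₀
    rcases i₀ with u | v <;> simp [Real.sqrt_eq_zero'] at this <;> linarith
  have hmix := hA.abs_dotProduct_mulVec_le_of_fromBlocks hL hw hw0
    (x := (S : Set U).indicator 1 - α • 1) (y := (T : Set V).indicator 1 - β • 1)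
    (by simp [indicator_one_sub_smul_one_dotProduct_one hα])
    (by simp [indicator_one_sub_smul_one_dotProduct_one hβ])
  rw [indicator_one_sub_smul_one_dotProduct_mulVec hrow hcol hα hβ,
    indicator_one_sub_smul_one_dotProduct_self hα,
    indicator_one_sub_smul_one_dotProduct_self hβ] at hmix
  have hαU : 0 ≤ α * (1 - α) * Fintype.card U :=
    indicator_one_sub_smul_one_dotProduct_self hα ▸ dotProduct_self_star_nonneg _
  have hsqrt : √(α * (1 - α) * Fintype.card U) * √(β * (1 - β) * Fintype.card V) =
      √(α * β * (1 - α) * (1 - β)) * √(Fintype.card U * Fintype.card V) := by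
    rw [← Real.sqrt_mul hαU, ← Real.sqrt_mul' _ (by positivity)]
    ring_nf
  rwa [mul_assoc L, hsqrt, ← mul_assoc L] at hmix

end Bipartite

theorem stmt_9_general (U V : Type) [Fintype U] [Fintype V] [DecidableEq U] [DecidableEq V]
    (A : Matrix (U ⊕ V) (U ⊕ V) ℝ) (hA : A.IsHermitian)
    (h01 : ∀ i j, A i j = 0 ∨ A i j = 1)
    (hbipU : ∀ u u', A (Sum.inl u) (Sum.inl u') = 0)
    (hbipV : ∀ v v', A (Sum.inr v) (Sum.inr v') = 0)
    (dU dV : ℝ)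
    (hdU : ∀ u, ∑ v, A (Sum.inl u) (Sum.inr v) = dU)
    (hdV : ∀ v, ∑ u, A (Sum.inl u) (Sum.inr v) = dV)
    (lam1 lam2 : ℝ)
    (hmax : ∀ i, hA.eigenvalues i ≤ lam1)
    (hsecond : ∃ i₀, hA.eigenvalues i₀ = lam1 ∧ ∀ i, i ≠ i₀ → hA.eigenvalues i ≤ lam2)
    (S : Finset U) (T : Finset V) (α β : ℝ)
    (hα : (S.card : ℝ) = α * Fintype.card U)
    (hβ : (T.card : ℝ) = β * Fintype.card V)
    (eG : ℝ) (heG : eG = dU * Fintype.card U) (heGpos : 0 < eG) :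
    |(∑ u ∈ S, ∑ v ∈ T, A (Sum.inl u) (Sum.inr v)) / eG - α * β|
      ≤ (lam2 / lam1) * Real.sqrt (α * β * (1 - α) * (1 - β)) := by
  obtain ⟨i₀, rfl, hsecond⟩ := hsecond
  have hnonneg : ∀ i j, 0 ≤ A i j := fun i j => by rcases h01 i j with h | h <;> simp [h]
  obtain ⟨B, rfl⟩ : ∃ B : Matrix U V ℝ, A = fromBlocks 0 B Bᵀ 0 :=
    ⟨_, eq_fromBlocks_zero_of_isSymm (isHermitian_iff_isSymm.mp hA) hbipU hbipV⟩
  have hrow : B *ᵥ 1 = dU • 1 := by ext u; simpa [mulVec, dotProduct] using hdU u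
  have hcol : 1 ᵥ* B = dV • 1 := by ext v; simpa [vecMul, dotProduct] using hdV v
  set n : ℝ := (Fintype.card U : ℝ)
  set m : ℝ := (Fintype.card V : ℝ)
  have hcount : dU * n = dV * m := by
    simpa [hrow, hcol, n, m, mul_comm] using dotProduct_mulVec (1 : U → ℝ) B 1
  subst heG
  have hdU : 0 < dU := pos_of_mul_pos_left heGpos (Nat.cast_nonneg _)
  have hdV : 0 < dV := pos_of_mul_pos_left (hcount ▸ heGpos) (Nat.cast_nonneg _)
  have heG : dU * n = √(dU * dV) * √(n * m) := by
    rw [← Real.sqrt_mul (by positivity), show dU * dV * (n * m) = (dU * n) ^ 2 by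
      linear_combination -(dU * n) * hcount, Real.sqrt_sq heGpos.le]
  have hmix := hA.abs_sum_sum_sub_le_of_fromBlocks hnonneg hdU hdV hrow hcol hmax hsecond hα hβ
  rw [hA.eigenvalues_eq_sqrt_mul_of_fromBlocks hnonneg hdU hdV hrow hcol hmax, div_sub' heGpos.ne',
    abs_div, abs_of_pos heGpos, div_le_iff₀ heGpos, mul_comm (dU * n)]
  calc |∑ u ∈ S, ∑ v ∈ T, B u v - α * β * (dU * n)|
      ≤ lam2 * √(α * β * (1 - α) * (1 - β)) * √(n * m) := hmix
    _ = lam2 / √(dU * dV) * √(α * β * (1 - α) * (1 - β)) * (dU * n) := by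
      rw [heG]
      field_simp

/-- The bipartite expander mixing lemma for biregular bipartite graphs. -/
theorem stmt_9 (U V : Type) [Fintype U] [Fintype V] [DecidableEq U] [DecidableEq V]
    [Nonempty U] [Nonempty V]
    (A : Matrix (U ⊕ V) (U ⊕ V) ℝ) (hA : A.IsHermitian)
    (h01 : ∀ i j, A i j = 0 ∨ A i j = 1)
    (hbipU : ∀ u u', A (Sum.inl u) (Sum.inl u') = 0)
    (hbipV : ∀ v v', A (Sum.inr v) (Sum.inr v') = 0)
    (dU dV : ℝ)
    (hdU : ∀ u, ∑ v, A (Sum.inl u) (Sum.inr v) = dU)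
    (hdV : ∀ v, ∑ u, A (Sum.inl u) (Sum.inr v) = dV)
    (lam1 lam2 : ℝ) (hlam1 : 0 < lam1)
    (hmax : ∀ i, hA.eigenvalues i ≤ lam1)
    (hsecond : ∃ i₀, hA.eigenvalues i₀ = lam1 ∧ ∀ i, i ≠ i₀ → hA.eigenvalues i ≤ lam2)
    (S : Finset U) (T : Finset V) (α β : ℝ)
    (hα : (S.card : ℝ) = α * Fintype.card U)
    (hβ : (T.card : ℝ) = β * Fintype.card V)
    (eG : ℝ) (heG : eG = dU * Fintype.card U) (heGpos : 0 < eG) :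
    |(∑ u ∈ S, ∑ v ∈ T, A (Sum.inl u) (Sum.inr v)) / eG - α * β|
      ≤ (lam2 / lam1) * Real.sqrt (α * β * (1 - α) * (1 - β)) :=
  stmt_9_general U V A hA h01 hbipU hbipV dU dV hdU hdV lam1 lam2 hmax hsecond S T α β hα hβ eG heG
    heGpos
end

section
/- If L is a set of 0.62·q^3 lines in F_q^3, then the union of the lines of L contains at least (1 − o(1))·0.38·q^3 points. -/
open scoped Classical

/-!
Double counting over planes. Fix a plane `π`, let `l` lines of `L` lie in `π`, let `S` be their
union and `Y` the points of `π` not covered by `L`. The lines have `q` points each and pairwise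
meet at most once, so Cauchy–Schwarz applied to the multiplicities of the points of `S` gives
`l q² ≤ |S| (q + l)`; together with `|Y| + |S| ≤ |π| = q²` this yields `l |Y| ≤ q |S|`.
A line and a point off it span exactly one plane, and a point lies on `q² + q + 1` planes, so
summing over all planes gives `|L| |X| (q - 1) ≤ q |P(L)| (q³ - 1)` with `X` the uncovered points.
For `|L| ≥ 0.62 q³` this forces `|P(L)| ≳ (0.62 / 1.62) q³ > 0.38 q³`.
-/

open Finset Matrix

section Incidence

variable {ι α : Type*} [DecidableEq α] {s : Finset ι} {A : ι → Finset α} {Y P : Finset α}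
  {q : ℕ}

theorem sum_sum_card_inter_eq_sum_sq (s : Finset ι) (A : ι → Finset α) :
    ∑ i ∈ s, ∑ j ∈ s, #(A i ∩ A j) = ∑ p ∈ s.biUnion A, #{i ∈ s | p ∈ A i} ^ 2 := by
  have hinter : ∀ i ∈ s, ∀ j, A i ∩ A j = {p ∈ s.biUnion A | p ∈ A i ∧ p ∈ A j} := by
    intro i hi j
    ext p
    simp only [mem_inter, mem_filter, mem_biUnion]
    exact ⟨fun h => ⟨⟨i, hi, h.1⟩, h⟩, fun h => h.2⟩
  rw [sum_congr rfl fun i hi => sum_congr rfl fun j _ => congrArg card (hinter i hi j)]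
  simp_rw [sq, card_filter, sum_mul_sum, ite_zero_mul_ite_zero, mul_one]
  exact (sum_comm.trans (sum_congr rfl fun _ _ => sum_comm)).symm

/-- Cauchy–Schwarz for the multiplicities `#{i ∈ s | p ∈ A i}` of the points `p` of the union. -/
theorem card_mul_sq_le_card_biUnion_mul_add
    (hA : ∀ i ∈ s, #(A i) = q) (hAA : ∀ i ∈ s, ∀ j ∈ s, i ≠ j → #(A i ∩ A j) ≤ 1) :
    #s * q ^ 2 ≤ #(s.biUnion A) * (q + #s) := by
  set S := s.biUnion A
  set t : α → ℕ := fun p => #{i ∈ s | p ∈ A i}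
  have hsum : ∑ p ∈ S, t p = #s * q := by
    calc ∑ p ∈ S, t p = ∑ i ∈ s, #{p ∈ S | p ∈ A i} := by
          simp_rw [t, card_filter]; exact sum_comm
      _ = ∑ i ∈ s, q := sum_congr rfl fun i hi => by
          rw [filter_mem_eq_inter, inter_eq_right.mpr (subset_biUnion_of_mem A hi), hA i hi]
      _ = #s * q := by rw [sum_const, smul_eq_mul]
  have hsq : ∑ p ∈ S, t p ^ 2 ≤ #s * (q + #s) := by
    rw [← sum_sum_card_inter_eq_sum_sq, ← smul_eq_mul, ← sum_const]
    refine sum_le_sum fun i hi => ?_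
    rw [← add_sum_erase s _ hi, inter_self, hA i hi]
    gcongr
    calc ∑ j ∈ s.erase i, #(A i ∩ A j) ≤ ∑ j ∈ s.erase i, 1 :=
          sum_le_sum fun j hj => hAA i hi j (mem_of_mem_erase hj) (ne_of_mem_erase hj).symm
      _ ≤ #s := by simpa using card_erase_le
  have hcs : (#s * q) ^ 2 ≤ #S * ∑ p ∈ S, t p ^ 2 := hsum ▸ sq_sum_le_card_mul_sum_sq
  rcases (#s).eq_zero_or_pos with hs | hs
  · simp [hs]
  refine le_of_mul_le_mul_left ?_ hs
  calc #s * (#s * q ^ 2) = (#s * q) ^ 2 := by ring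
    _ ≤ #S * (#s * (q + #s)) := hcs.trans (Nat.mul_le_mul_left _ hsq)
    _ = #s * (#S * (q + #s)) := by ring

theorem card_mul_card_le_mul_card_biUnion
    (hA : ∀ i ∈ s, #(A i) = q) (hAA : ∀ i ∈ s, ∀ j ∈ s, i ≠ j → #(A i ∩ A j) ≤ 1)
    (hAP : ∀ i ∈ s, A i ⊆ P) (hYP : Y ⊆ P) (hY : Disjoint Y (s.biUnion A)) (hP : #P ≤ q ^ 2) :
    #s * #Y ≤ q * #(s.biUnion A) := by
  have hcover := card_mul_sq_le_card_biUnion_mul_add hA hAA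
  have hpart : #Y + #(s.biUnion A) ≤ q ^ 2 := by
    rw [← card_union_of_disjoint hY]
    exact (card_le_card (union_subset hYP (biUnion_subset.mpr hAP))).trans hP
  nlinarith [Nat.mul_le_mul_left #s hpart]

end Incidence

section Hyperplanes

variable {ι F : Type*} [Fintype ι] [Field F] [Fintype F]

def hyperplane (e : (ι → F) × F) : Set (ι → F) := {x | e.1 ⬝ᵥ x = e.2}

/-- Every affine hyperplane occurs here `q - 1` times, once for each rescaling of its equation. -/
noncomputable def hyperplaneEqns : Finset ((ι → F) × F) := (univ.erase 0) ×ˢ univ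

theorem card_filter_mem_hyperplane_le {n : ℕ} {e : (Fin (n + 1) → F) × F}
    (he : e ∈ hyperplaneEqns) : #{x | x ∈ hyperplane e} ≤ Fintype.card F ^ n := by
  obtain ⟨i, hi⟩ := Function.ne_iff.mp (mem_erase.mp (mem_product.mp he).1).1
  have hcard : #(univ : Finset (Fin n → F)) = Fintype.card F ^ n := by simp
  rw [← hcard]
  -- a point of the hyperplane is determined by its coordinates other than the `i`-th
  refine card_le_card_of_injOn (fun x => x ∘ i.succAbove) (fun _ _ => mem_coe.mpr (mem_univ _)) ?_
  intro x hx y hy hxy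
  simp only [coe_filter, mem_univ, true_and, Set.mem_ofPred_eq, hyperplane, dotProduct,
    Fin.sum_univ_succAbove _ i] at hx hy
  have hxy' : ∀ k, x (i.succAbove k) = y (i.succAbove k) := congrFun hxy
  have hi' : x i = y i := by
    simp only [hxy'] at hx
    exact mul_left_cancel₀ hi (add_right_cancel (hx.trans hy.symm))
  funext j
  rcases i.eq_self_or_eq_succAbove j with rfl | ⟨k, rfl⟩
  exacts [hi', hxy' k]

theorem card_filter_hyperplaneEqns_mem_le (u : ι → F) :
    #{e ∈ hyperplaneEqns | u ∈ hyperplane e} ≤ Fintype.card F ^ Fintype.card ι - 1 := by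
  have hcard : #((univ : Finset (ι → F)).erase 0) = Fintype.card F ^ Fintype.card ι - 1 := by
    simp [card_erase_of_mem]
  rw [← hcard]
  refine card_le_card_of_injOn Prod.fst (fun e he => ?_) fun e he e' he' h => ?_
  · exact (mem_product.mp (mem_filter.mp he).1).1
  · have hc : e.2 = e'.2 := (mem_filter.mp he).2.symm.trans (h ▸ (mem_filter.mp he').2)
    exact Prod.ext h hc

end Hyperplanes

section Lines

variable {F : Type} [Field F] {ℓ ℓ' : Set (Fin 3 → F)}

theorem IsLine.eq_of_mem (h : IsLine ℓ) {p p' : Fin 3 → F} (hp : p ∈ ℓ) (hp' : p' ∈ ℓ)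
    (hne : p ≠ p') : ℓ = {x | ∃ t : F, x = p + t • (p' - p)} := by
  obtain ⟨a, b, -, rfl⟩ := h
  obtain ⟨s, rfl⟩ := hp
  obtain ⟨s', rfl⟩ := hp'
  have hss : s' - s ≠ 0 := sub_ne_zero.mpr fun h => hne (by rw [h])
  have hdiff : a + s' • b - (a + s • b) = (s' - s) • b := by rw [sub_smul]; abel
  ext x
  simp only [Set.mem_ofPred_eq, hdiff, smul_smul, add_assoc, ← add_smul]
  constructor
  · rintro ⟨t, rfl⟩
    exact ⟨(t - s) / (s' - s), by rw [div_mul_cancel₀ _ hss, add_sub_cancel]⟩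
  · rintro ⟨u, rfl⟩
    exact ⟨s + u * (s' - s), rfl⟩

variable [Fintype F]

theorem IsLine.card_toFinset (h : IsLine ℓ) : #ℓ.toFinset = Fintype.card F := by
  obtain ⟨a, b, hb, rfl⟩ := h
  rw [← card_univ, ← card_image_of_injective univ
    ((add_right_injective a).comp (smul_left_injective F hb))]
  congr 1
  ext x
  simp [eq_comm]

theorem IsLine.card_inter_le_one (h : IsLine ℓ) (h' : IsLine ℓ') (hne : ℓ ≠ ℓ') :
    #(ℓ.toFinset ∩ ℓ'.toFinset) ≤ 1 := by
  refine card_le_one.mpr fun p hp p' hp' => ?_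
  simp only [mem_inter, Set.mem_toFinset] at hp hp'
  by_contra hpp
  exact hne ((h.eq_of_mem hp.1 hp'.1 hpp).trans (h'.eq_of_mem hp.2 hp'.2 hpp).symm)

theorem IsLine.sub_one_le_card_filter_hyperplaneEqns (h : IsLine ℓ) {x : Fin 3 → F}
    (hx : x ∉ ℓ) :
    Fintype.card F - 1 ≤ #{e ∈ hyperplaneEqns | ℓ ⊆ hyperplane e ∧ x ∈ hyperplane e} := by
  obtain ⟨a, b, hb, rfl⟩ := h
  -- the normal of the plane through the line and `x`
  set n := b ⨯₃ (x - a)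
  have hn : n ≠ 0 := by
    refine crossProduct_ne_zero_iff_linearIndependent.mpr ((LinearIndependent.pair_iff' hb).mpr ?_)
    intro t ht
    exact hx ⟨t, sub_eq_iff_eq_add'.mp ht.symm⟩
  have hnb : n ⬝ᵥ b = 0 := by rw [dotProduct_comm, dot_self_cross]
  have hnx : n ⬝ᵥ x = n ⬝ᵥ a := by
    rw [← sub_eq_zero, ← dotProduct_sub, dotProduct_comm, dot_cross_self]
  have hcard : #((univ : Finset F).erase 0) = Fintype.card F - 1 := by
    simp [card_erase_of_mem]
  rw [← hcard]
  refine card_le_card_of_injOn (fun t => (t • n, (t • n) ⬝ᵥ a)) (fun t ht => ?_)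
    fun t _ t' _ htt => smul_left_injective F hn (congrArg Prod.fst htt)
  have ht : t ≠ 0 := ne_of_mem_erase ht
  rw [mem_coe, mem_filter]
  simp only [hyperplaneEqns, mem_product, mem_erase, mem_univ, and_true,
    Set.mem_ofPred_eq, hyperplane, smul_dotProduct, hnx]
  refine ⟨smul_ne_zero ht hn, ?_⟩
  rintro y ⟨s, rfl⟩
  simp only [Set.mem_ofPred_eq, dotProduct_add, dotProduct_smul, hnb, smul_zero, add_zero]

end Lines

section Covering

variable {F : Type} [Field F] [Fintype F]

noncomputable def covered {V : Type*} [Fintype V] (L : Finset (Set V)) : Finset V :=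
  {p | ∃ ℓ ∈ L, p ∈ ℓ}

theorem card_lines_in_hyperplane_mul_card_uncovered_le (L : Finset (Set (Fin 3 → F)))
    (hL : ∀ ℓ ∈ L, IsLine ℓ) {e : (Fin 3 → F) × F} (he : e ∈ hyperplaneEqns) :
    #{ℓ ∈ L | ℓ ⊆ hyperplane e} * #{x ∈ (covered L)ᶜ | x ∈ hyperplane e}
      ≤ Fintype.card F * #{x ∈ covered L | x ∈ hyperplane e} := by
  set s := {ℓ ∈ L | ℓ ⊆ hyperplane e}
  have hs : ∀ ℓ ∈ s, IsLine ℓ := fun ℓ hℓ => hL ℓ (mem_filter.mp hℓ).1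
  have hsubset : ∀ ℓ ∈ s, ∀ x ∈ ℓ.toFinset, x ∈ covered L ∧ x ∈ hyperplane e := by
    intro ℓ hℓ x hx
    obtain ⟨hℓL, hℓe⟩ := mem_filter.mp hℓ
    rw [Set.mem_toFinset] at hx
    exact ⟨mem_filter.mpr ⟨mem_univ x, ℓ, hℓL, hx⟩, hℓe hx⟩
  have hcovered : ∀ x ∈ s.biUnion (fun ℓ => ℓ.toFinset), x ∈ covered L ∧ x ∈ hyperplane e := by
    intro x hx
    obtain ⟨ℓ, hℓ, hxℓ⟩ := mem_biUnion.mp hx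
    exact hsubset ℓ hℓ x hxℓ
  calc _ ≤ Fintype.card F * #(s.biUnion (fun ℓ => ℓ.toFinset)) :=
        card_mul_card_le_mul_card_biUnion (P := {x | x ∈ hyperplane e})
          (fun ℓ hℓ => (hs ℓ hℓ).card_toFinset)
          (fun ℓ hℓ ℓ' hℓ' hne => (hs ℓ hℓ).card_inter_le_one (hs ℓ' hℓ') hne)
          (fun ℓ hℓ x hx => mem_filter.mpr ⟨mem_univ x, (hsubset ℓ hℓ x hx).2⟩)
          (monotone_filter_left _ (subset_univ _))
          (disjoint_left.mpr fun x hx hx' => mem_compl.mp (mem_filter.mp hx).1 (hcovered x hx').1)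
          (card_filter_mem_hyperplane_le he)
    _ ≤ _ := by
      gcongr
      exact fun x hx => mem_filter.mpr (hcovered x hx)

theorem card_mul_card_compl_covered_le (L : Finset (Set (Fin 3 → F)))
    (hL : ∀ ℓ ∈ L, IsLine ℓ) :
    #L * #(covered L)ᶜ * (Fintype.card F - 1)
      ≤ Fintype.card F * (#(covered L) * (Fintype.card F ^ 3 - 1)) := by
  set q := Fintype.card F
  set U := covered L
  calc #L * #Uᶜ * (q - 1) = #(L ×ˢ Uᶜ) • (q - 1) := by rw [card_product, smul_eq_mul]
    _ ≤ ∑ p ∈ L ×ˢ Uᶜ, #{e ∈ hyperplaneEqns | p.1 ⊆ hyperplane e ∧ p.2 ∈ hyperplane e} := by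
        refine card_nsmul_le_sum _ _ _ fun p hp => ?_
        obtain ⟨hpL, hpU⟩ := mem_product.mp hp
        refine (hL p.1 hpL).sub_one_le_card_filter_hyperplaneEqns fun hp1 => mem_compl.mp hpU ?_
        exact mem_filter.mpr ⟨mem_univ _, p.1, hpL, hp1⟩
    _ = ∑ e ∈ hyperplaneEqns, #{p ∈ L ×ˢ Uᶜ | p.1 ⊆ hyperplane e ∧ p.2 ∈ hyperplane e} :=
        (sum_card_bipartiteAbove_eq_sum_card_bipartiteBelow _).symm
    _ = ∑ e ∈ hyperplaneEqns, #{ℓ ∈ L | ℓ ⊆ hyperplane e} * #{x ∈ Uᶜ | x ∈ hyperplane e} := by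
        refine sum_congr rfl fun e _ => ?_
        rw [← card_product]
        congr 1
        ext ⟨ℓ, x⟩
        simp only [mem_filter, mem_product]
        tauto
    _ ≤ ∑ e ∈ hyperplaneEqns, q * #{x ∈ U | x ∈ hyperplane e} :=
        sum_le_sum fun e he => card_lines_in_hyperplane_mul_card_uncovered_le L hL he
    _ = q * ∑ x ∈ U, #{e ∈ hyperplaneEqns | x ∈ hyperplane e} := by
        rw [← mul_sum]
        exact congrArg _ (sum_card_bipartiteAbove_eq_sum_card_bipartiteBelow _)
    _ ≤ q * (#U * (q ^ 3 - 1)) := by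
        gcongr
        simpa using sum_le_card_nsmul U _ _ fun x _ => card_filter_hyperplaneEqns_mem_le x

theorem le_card_covered (L : Finset (Set (Fin 3 → F))) (hL : ∀ ℓ ∈ L, IsLine ℓ)
    (hq : 100 ≤ Fintype.card F) (hLcard : 0.62 * (Fintype.card F : ℝ) ^ 3 ≤ #L) :
    0.38 * (Fintype.card F : ℝ) ^ 3 ≤ #(covered L) := by
  set q := Fintype.card F
  have hq1 : 1 ≤ q := by omega
  have hq3 : 1 ≤ q ^ 3 := Nat.one_le_pow _ _ hq1
  have hcount : (#L : ℝ) * #(covered L)ᶜ * (q - 1) ≤ q * (#(covered L) * (q ^ 3 - 1)) := by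
    exact_mod_cast card_mul_card_compl_covered_le L hL
  have hcompl : (#(covered L)ᶜ : ℝ) = q ^ 3 - #(covered L) := by
    rw [eq_sub_iff_add_eq]
    exact_mod_cast (card_compl_add_card (covered L)).trans (by simp [q])
  set u : ℝ := (#(covered L) : ℝ)
  have hu0 : 0 ≤ u := Nat.cast_nonneg _
  have hu : u ≤ q ^ 3 := by linarith [(Nat.cast_nonneg _ : (0 : ℝ) ≤ #(covered L)ᶜ)]
  have hqR : (100 : ℝ) ≤ q := by exact_mod_cast hq
  have hq3pos : (0 : ℝ) < q ^ 3 := by positivity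
  have hscaled : (q : ℝ) ^ 3 * (0.62 * (q ^ 3 - u) * (q - 1)) ≤ q ^ 3 * (q * u) := by
    calc (q : ℝ) ^ 3 * (0.62 * (q ^ 3 - u) * (q - 1))
        = 0.62 * q ^ 3 * (q ^ 3 - u) * (q - 1) := by ring
      _ ≤ #L * (q ^ 3 - u) * (q - 1) := by gcongr; linarith
      _ ≤ q * (u * (q ^ 3 - 1)) := hcompl ▸ hcount
      _ ≤ q ^ 3 * (q * u) := by nlinarith [mul_nonneg (Nat.cast_nonneg q : (0 : ℝ) ≤ q) hu0]
  nlinarith [le_of_mul_le_mul_left hscaled hq3pos]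

end Covering

/-- Any `0.62 q^3` lines in `F_q^3` cover at least `(1-o(1)) 0.38 q^3` points. -/
theorem stmt_12 : ∀ ε : ℝ, 0 < ε → ∃ Q : ℕ, ∀ q : ℕ, Q < q →
    ∀ (F : Type) [Field F] [Fintype F], Fintype.card F = q →
    ∀ L : Finset (Set (Fin 3 → F)),
      (∀ ℓ ∈ L, IsLine ℓ) →
      0.62 * (q : ℝ) ^ 3 ≤ L.card →
      (1 - ε) * (0.38 * (q : ℝ) ^ 3)
        ≤ ((Finset.univ.filter (fun p : Fin 3 → F => ∃ ℓ ∈ L, p ∈ ℓ)).card : ℝ) := by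
  intro ε hε
  refine ⟨100, fun q hq F _ _ hF L hL hLcard => ?_⟩
  subst hF
  have hcovered : 0.38 * (Fintype.card F : ℝ) ^ 3 ≤ #(covered L) :=
    le_card_covered L hL (by omega) hLcard
  have hnonneg : (0 : ℝ) ≤ 0.38 * (Fintype.card F : ℝ) ^ 3 := by positivity
  exact (mul_le_of_le_one_left hnonneg (by linarith)).trans hcovered
end

section
/- For every sufficiently large prime power q, there exists a set L of (1 − o(1))·0.62·q^3 lines in F_q^3 such that the union of the lines of L contains fewer than 0.43·q^3 points. -/
open scoped Classical

namespace Stmt13Aux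

open Finset

variable {F : Type} [Field F]

/-- plane predicate: `x` lies on the plane with normal `(1,t,t²)`. -/
def Pp (t : F) (x : Fin 3 → F) : Prop := x 0 + t * x 1 + t^2 * x 2 = 0

def lineC (t α β : F) : Set (Fin 3 → F) :=
  {x | ∃ s : F, x = (![-(β*t^2), 0, β] : Fin 3 → F) + s • ![-(t + α*t^2), 1, α]}

lemma mem_lineC {t α β : F} {x : Fin 3 → F} :
    x ∈ lineC t α β ↔ x 2 = α * x 1 + β ∧ x 0 = -(t * x 1 + t^2 * x 2) := by
  constructor
  · rintro ⟨s, rfl⟩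
    simp only [Pi.add_apply, Pi.smul_apply, smul_eq_mul, Matrix.cons_val_zero,
      Matrix.cons_val_one, Matrix.head_cons, Matrix.cons_val_two, Matrix.tail_cons]
    constructor <;> ring
  · rintro ⟨h2, h0⟩
    refine ⟨x 1, ?_⟩
    funext i
    fin_cases i
    · simp
      linear_combination h0 - t^2 * h2
    · simp
    · simp
      linear_combination h2

lemma isLine_lineC (t α β : F) : IsLine (lineC t α β) := by
  refine ⟨_, _, ?_, rfl⟩
  intro h
  have := congrFun h 1
  simp at this

lemma lineC_subset_plane {t α β : F} {x : Fin 3 → F} (hx : x ∈ lineC t α β) : Pp t x := by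
  rw [mem_lineC] at hx
  unfold Pp
  rw [hx.2]; ring

lemma lineC_inj {t α β t' α' β' : F} (hβ : β ≠ 0)
    (h : lineC t α β = lineC t' α' β') : t = t' ∧ α = α' ∧ β = β' := by
  have h0 : (![-(t^2*β), 0, β] : Fin 3 → F) ∈ lineC t α β := by
    rw [mem_lineC]
    simp only [Matrix.cons_val_zero, Matrix.cons_val_one, Matrix.head_cons,
      Matrix.cons_val_two, Matrix.tail_cons]
    constructor <;> ring
  have h1 : (![-(t + t^2*(α+β)), 1, α+β] : Fin 3 → F) ∈ lineC t α β := by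
    rw [mem_lineC]
    simp only [Matrix.cons_val_zero, Matrix.cons_val_one, Matrix.head_cons,
      Matrix.cons_val_two, Matrix.tail_cons]
    constructor <;> ring
  rw [h, mem_lineC] at h0 h1
  simp only [Matrix.cons_val_zero, Matrix.cons_val_one, Matrix.head_cons,
    Matrix.cons_val_two, Matrix.tail_cons] at h0 h1
  obtain ⟨e1, e2⟩ := h0
  obtain ⟨f1, f2⟩ := h1
  have hββ : β = β' := by linear_combination e1
  have htt : t^2 = t'^2 := by
    have : t^2 * β = t'^2 * β := by linear_combination -e2
    exact mul_right_cancel₀ hβ this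
  have hαα : α = α' := by linear_combination f1 - e1
  have ht : t = t' := by linear_combination -f2 - (α+β) * htt
  exact ⟨ht, hαα, hββ⟩

lemma two_planes {s t : F} (hst : s ≠ t) {x : Fin 3 → F} (hs : Pp s x) (ht : Pp t x) :
    x 1 = -((s+t) * x 2) ∧ x 0 = s*t*x 2 := by
  unfold Pp at hs ht
  have h1 : (s - t) * (x 1 + (s+t) * x 2) = 0 := by linear_combination hs - ht
  have h2 : x 1 + (s+t) * x 2 = 0 := by
    rcases mul_eq_zero.1 h1 with h | h
    · exact absurd (sub_eq_zero.1 h) hst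
    · exact h
  refine ⟨by linear_combination h2, by linear_combination hs - s * h2⟩

lemma three_planes {s t u : F} (hst : s ≠ t) (hsu : s ≠ u) (htu : t ≠ u)
    {x : Fin 3 → F} (hs : Pp s x) (ht : Pp t x) (hu : Pp u x) : x = 0 := by
  obtain ⟨h1, -⟩ := two_planes hst hs ht
  obtain ⟨h1', -⟩ := two_planes hsu hs hu
  have hx2 : x 2 = 0 := by
    have h : (t - u) * x 2 = 0 := by linear_combination h1 - h1'
    rcases mul_eq_zero.1 h with h | h
    · exact absurd (sub_eq_zero.1 h) htu
    · exact h
  have hx1 : x 1 = 0 := by rw [h1, hx2]; ring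
  have hx0 : x 0 = 0 := by
    unfold Pp at hs
    linear_combination hs - s*hx1 - s^2*hx2
  funext i
  fin_cases i
  · simpa using hx0
  · simpa using hx1
  · simpa using hx2

variable [Fintype F]

lemma card_St (t : F) :
    (univ.filter fun x : Fin 3 → F => Pp t x).card = Fintype.card F ^ 2 := by
  have himg : univ.filter (fun x : Fin 3 → F => Pp t x)
      = Finset.image (fun ab : F × F => (![-(t*ab.1 + t^2*ab.2), ab.1, ab.2] : Fin 3 → F)) univ := by
    ext x
    simp only [mem_filter, mem_univ, true_and, and_true, mem_image]
    constructor
    · intro hx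
      refine ⟨(x 1, x 2), ?_⟩
      funext i
      fin_cases i
      · simp
        unfold Pp at hx
        linear_combination -hx
      · simp
      · simp
    · rintro ⟨⟨a,b⟩, rfl⟩
      unfold Pp
      simp
      try ring
  rw [himg, Finset.card_image_of_injective _ ?inj, card_univ, Fintype.card_prod, sq]
  case inj =>
    intro p p' hpp
    have h1 := congrFun hpp 1
    have h2 := congrFun hpp 2
    simp at h1 h2
    exact Prod.ext h1 h2

lemma card_Dst {s t : F} (hst : s ≠ t) :
    (univ.filter fun x : Fin 3 → F => x ≠ 0 ∧ Pp s x ∧ Pp t x).card = Fintype.card F - 1 := by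
  have himg : univ.filter (fun x : Fin 3 → F => x ≠ 0 ∧ Pp s x ∧ Pp t x)
      = Finset.image (fun c : F => (![s*t*c, -((s+t)*c), c] : Fin 3 → F)) (univ.erase 0) := by
    ext x
    simp only [mem_filter, mem_univ, true_and, and_true, mem_image, mem_erase]
    constructor
    · rintro ⟨hx0, hs, ht⟩
      obtain ⟨h1, h0⟩ := two_planes hst hs ht
      have hx2 : x 2 ≠ 0 := by
        intro h
        apply hx0
        funext i
        fin_cases i
        · simpa using by rw [h0, h]; ring
        · simpa using by rw [h1, h]; ring
        · simpa using h
      refine ⟨x 2, hx2, ?_⟩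
      funext i
      fin_cases i
      · simpa using h0.symm
      · simpa using h1.symm
      · simp
    · rintro ⟨c, hc, rfl⟩
      refine ⟨?_, ?_, ?_⟩
      · intro h
        have := congrFun h 2
        simp at this
        exact hc this
      · unfold Pp; simp; try ring
      · unfold Pp; simp; try ring
  rw [himg, Finset.card_image_of_injective _ ?inj, card_erase_of_mem (mem_univ _), card_univ]
  case inj =>
    intro c c' hcc
    have := congrFun hcc 2
    simpa using this

lemma count_main (T : Finset F) :
    (univ.filter fun x : Fin 3 → F => ∃ t ∈ T, Pp t x).card
      + (univ.filter fun x : Fin 3 → F =>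
          x ≠ 0 ∧ 2 ≤ (T.filter fun t => Pp t x).card).card
      ≤ T.card * Fintype.card F ^ 2 := by
  have hswap : ∑ t ∈ T, (univ.filter fun x : Fin 3 → F => Pp t x).card
      = ∑ x : Fin 3 → F, (T.filter fun t => Pp t x).card := by
    simp only [Finset.card_filter]
    exact Finset.sum_comm
  have hsum : ∑ x : Fin 3 → F, (T.filter fun t => Pp t x).card
      = T.card * Fintype.card F ^ 2 := by
    rw [← hswap, Finset.sum_congr rfl fun t _ => card_St t, Finset.sum_const, smul_eq_mul]
  rw [← hsum, Finset.card_filter, Finset.card_filter, ← Finset.sum_add_distrib]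
  refine Finset.sum_le_sum fun x _ => ?_
  by_cases hB : ∃ t ∈ T, Pp t x
  · obtain ⟨t, ht, hpt⟩ := hB
    have h1 : 1 ≤ (T.filter fun t => Pp t x).card :=
      Finset.card_pos.2 ⟨t, Finset.mem_filter.2 ⟨ht, hpt⟩⟩
    split_ifs <;> omega
  · split_ifs <;> omega

lemma count_pairs (T : Finset F) :
    T.offDiag.card * (Fintype.card F - 1)
      ≤ 2 * (univ.filter fun x : Fin 3 → F =>
          x ≠ 0 ∧ 2 ≤ (T.filter fun t => Pp t x).card).card := by
  have h1 : ∑ p ∈ T.offDiag,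
      (univ.filter fun x : Fin 3 → F => x ≠ 0 ∧ Pp p.1 x ∧ Pp p.2 x).card
      = T.offDiag.card * (Fintype.card F - 1) := by
    rw [Finset.sum_congr rfl fun p hp => card_Dst (Finset.mem_offDiag.1 hp).2.2,
      Finset.sum_const, smul_eq_mul]
  have h2 : ∑ p ∈ T.offDiag,
      (univ.filter fun x : Fin 3 → F => x ≠ 0 ∧ Pp p.1 x ∧ Pp p.2 x).card
      = ∑ x : Fin 3 → F, (T.offDiag.filter fun p => x ≠ 0 ∧ Pp p.1 x ∧ Pp p.2 x).card := by
    simp only [Finset.card_filter]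
    exact Finset.sum_comm
  rw [← h1, h2]
  have hterm : ∀ x : Fin 3 → F,
      (T.offDiag.filter fun p => x ≠ 0 ∧ Pp p.1 x ∧ Pp p.2 x).card
      ≤ 2 * (if x ≠ 0 ∧ 2 ≤ (T.filter fun t => Pp t x).card then 1 else 0) := by
    intro x
    by_cases hx0 : x = 0
    · simp [hx0]
    · have hfe : (T.offDiag.filter fun p => x ≠ 0 ∧ Pp p.1 x ∧ Pp p.2 x)
          = (T.filter fun t => Pp t x).offDiag := by
        ext p
        simp only [Finset.mem_filter, Finset.mem_offDiag, hx0, ne_eq, not_false_eq_true,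
          true_and]
        tauto
      rw [hfe, Finset.offDiag_card]
      set m := (T.filter fun t => Pp t x).card with hm
      have hm2 : m ≤ 2 := by
        by_contra hc
        push_neg at hc
        obtain ⟨a, b, c, ha, hb, hcc, hab, hac, hbc⟩ := Finset.two_lt_card_iff.1 hc
        have := three_planes hab hac hbc (Finset.mem_filter.1 ha).2 (Finset.mem_filter.1 hb).2
          (Finset.mem_filter.1 hcc).2
        exact hx0 this
      by_cases h2 : 2 ≤ m
      · have hmm : m = 2 := le_antisymm hm2 h2
        simp [hmm, hx0, h2]
      · have hm1 : m ≤ 1 := by omega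
        have hmm : m * m ≤ m := by
          calc m * m ≤ 1 * m := Nat.mul_le_mul_right m hm1
          _ = m := one_mul m
        simp only [Nat.sub_eq_zero_of_le hmm]
        omega
  calc ∑ x : Fin 3 → F, (T.offDiag.filter fun p => x ≠ 0 ∧ Pp p.1 x ∧ Pp p.2 x).card
      ≤ ∑ x : Fin 3 → F, 2 * (if x ≠ 0 ∧ 2 ≤ (T.filter fun t => Pp t x).card then 1 else 0) :=
        Finset.sum_le_sum fun x _ => hterm x
    _ = 2 * (univ.filter fun x : Fin 3 → F =>
          x ≠ 0 ∧ 2 ≤ (T.filter fun t => Pp t x).card).card := by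
        rw [Finset.card_filter, Finset.mul_sum]

lemma numeric_key (kq qr : ℝ) (hqR : (1000:ℝ) ≤ qr)
    (hA1 : (0:ℝ) ≤ kq - 0.62 * qr) (hA2 : (0:ℝ) ≤ 0.62 * qr + 1 - kq) :
    2*kq*qr^2 - (kq*kq - kq)*(qr-1) < 0.86*qr^3 := by
  nlinarith [mul_nonneg hA2 (sq_nonneg qr),
    mul_nonneg (mul_nonneg hA1 hA1) (by linarith : (0:ℝ) ≤ qr - 1),
    mul_nonneg hA2 (by linarith : (0:ℝ) ≤ qr - 1),
    mul_nonneg hA1 (by linarith : (0:ℝ) ≤ qr - 1),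
    mul_nonneg (mul_nonneg hA1 hA2) (by linarith : (0:ℝ) ≤ qr - 1),
    mul_le_mul_of_nonneg_right hqR (sq_nonneg qr)]

end Stmt13Aux

open Stmt13Aux Finset in
/-- There is a set of `(1-o(1)) 0.62 q^3` lines in `F_q^3` covering fewer than
`0.43 q^3` points. -/
theorem stmt_13 : ∀ ε : ℝ, 0 < ε → ∃ Q : ℕ, ∀ q : ℕ, Q < q →
    ∀ (F : Type) [Field F] [Fintype F], Fintype.card F = q →
    ∃ L : Finset (Set (Fin 3 → F)),
      (∀ ℓ ∈ L, IsLine ℓ) ∧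
      (1 - ε) * (0.62 * (q : ℝ) ^ 3) ≤ L.card ∧
      ((Finset.univ.filter (fun p : Fin 3 → F => ∃ ℓ ∈ L, p ∈ ℓ)).card : ℝ)
        < 0.43 * (q : ℝ) ^ 3 := by
  intro ε hε
  refine ⟨⌈1/ε⌉₊ + 1000, ?_⟩
  intro q hq F _ _ hcard
  classical
  -- numeric setup
  have hq1000 : 1000 ≤ q := by omega
  have hqR : (1000:ℝ) ≤ (q:ℝ) := by exact_mod_cast hq1000
  have hq0R : (0:ℝ) < q := by linarith
  have hεq : 1 ≤ ε * q := by
    have h1 : ((⌈1/ε⌉₊ : ℕ) : ℝ) < (q:ℝ) := by exact_mod_cast (by omega : ⌈1/ε⌉₊ < q)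
    have h2 : 1/ε ≤ (⌈1/ε⌉₊ : ℝ) := Nat.le_ceil _
    have h3 : 1/ε < q := lt_of_le_of_lt h2 h1
    rw [div_lt_iff₀ hε] at h3
    nlinarith
  set k : ℕ := ⌈(0.62:ℝ) * q⌉₊ with hkdef
  have hk1 : (0.62:ℝ) * q ≤ (k:ℝ) := Nat.le_ceil _
  have hk2 : (k:ℝ) < 0.62 * q + 1 := Nat.ceil_lt_add_one (by positivity)
  have hkq : k ≤ q := by
    have : (k:ℝ) ≤ (q:ℝ) := by nlinarith
    exact_mod_cast this
  have hq1 : 1 ≤ q := by omega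
  have hkpos : 1 ≤ k := by
    have : (1:ℝ) ≤ (k:ℝ) := by nlinarith
    exact_mod_cast this
  -- choose T : the set of plane parameters
  obtain ⟨T, -, hT⟩ := Finset.exists_subset_card_eq
    (show k ≤ (Finset.univ : Finset F).card by rw [Finset.card_univ, hcard]; exact hkq)
  -- the lines
  set src : Finset (F × F × F) := T ×ˢ Finset.univ ×ˢ (Finset.univ.erase (0:F)) with hsrc
  set L : Finset (Set (Fin 3 → F)) :=
    src.image (fun p => lineC p.1 p.2.1 p.2.2) with hLdef
  have hsrccard : src.card = k * (q * (q-1)) := by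
    rw [hsrc, Finset.card_product, Finset.card_product, hT, Finset.card_univ, hcard,
      Finset.card_erase_of_mem (Finset.mem_univ _), Finset.card_univ, hcard]
  have hLcard : L.card = k * (q * (q-1)) := by
    rw [hLdef, Finset.card_image_of_injOn, hsrccard]
    intro p hp p' hp' hpp
    simp only [hsrc, Finset.coe_product, Set.mem_prod, Finset.mem_coe,
      Finset.mem_erase, Finset.mem_univ, and_true] at hp hp'
    obtain ⟨h1, h2, h3⟩ := lineC_inj hp.2.2 hpp
    exact Prod.ext h1 (Prod.ext h2 h3)
  refine ⟨L, ?_, ?_, ?_⟩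
  · intro ℓ hℓ
    rw [hLdef, Finset.mem_image] at hℓ
    obtain ⟨p, -, rfl⟩ := hℓ
    exact isLine_lineC _ _ _
  · rw [hLcard]
    have hc : ((k * (q * (q-1)) : ℕ) : ℝ) = (k:ℝ) * ((q:ℝ) * ((q:ℝ) - 1)) := by
      push_cast [Nat.cast_sub hq1]
      ring
    rw [hc]
    have hmul : (0.62 * (q:ℝ)) * ((q:ℝ) * ((q:ℝ) - 1)) ≤ (k:ℝ) * ((q:ℝ) * ((q:ℝ) - 1)) := by
      apply mul_le_mul_of_nonneg_right hk1
      nlinarith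
    nlinarith [mul_le_mul_of_nonneg_left hεq (by positivity : (0:ℝ) ≤ 0.62 * (q:ℝ)^2)]
  · -- point count
    have hUB : (Finset.univ.filter (fun p : Fin 3 → F => ∃ ℓ ∈ L, p ∈ ℓ))
        ⊆ (Finset.univ.filter fun x : Fin 3 → F => ∃ t ∈ T, Pp t x) := by
      intro x hx
      simp only [Finset.mem_filter, Finset.mem_univ, true_and] at hx ⊢
      obtain ⟨ℓ, hℓ, hxl⟩ := hx
      rw [hLdef, Finset.mem_image] at hℓ
      obtain ⟨p, hp, rfl⟩ := hℓ
      rw [hsrc, Finset.mem_product] at hp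
      exact ⟨p.1, hp.1, lineC_subset_plane hxl⟩
    have key1 := count_main (F := F) T
    have key2 := count_pairs (F := F) T
    rw [hT, hcard] at key1
    rw [Finset.offDiag_card, hT, hcard] at key2
    set Bc := (Finset.univ.filter fun x : Fin 3 → F => ∃ t ∈ T, Pp t x).card with hBc
    set Dc := (Finset.univ.filter fun x : Fin 3 → F =>
        x ≠ 0 ∧ 2 ≤ (T.filter fun t => Pp t x).card).card with hDc
    have hUcard : ((Finset.univ.filter (fun p : Fin 3 → F => ∃ ℓ ∈ L, p ∈ ℓ)).card : ℝ)
        ≤ (Bc : ℝ) := by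
      exact_mod_cast Finset.card_le_card hUB
    have hkk : k ≤ k * k := Nat.le_mul_of_pos_left k (by omega)
    have c1 : (Bc : ℝ) + (Dc : ℝ) ≤ (k:ℝ) * (q:ℝ)^2 := by exact_mod_cast key1
    have c2 : ((k:ℝ) * k - k) * ((q:ℝ) - 1) ≤ 2 * (Dc : ℝ) := by
      have h : (((k*k - k) * (q-1) : ℕ) : ℝ) ≤ ((2 * Dc : ℕ) : ℝ) := by exact_mod_cast key2
      rw [Nat.cast_mul, Nat.cast_sub hkk, Nat.cast_sub hq1] at h
      push_cast at h ⊢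
      linarith
    have hA1 : (0:ℝ) ≤ (k:ℝ) - 0.62 * q := by linarith
    have hA2 : (0:ℝ) ≤ 0.62 * q + 1 - (k:ℝ) := by linarith
    have hqm1 : (0:ℝ) ≤ (q:ℝ) - 1 := by linarith
    calc ((Finset.univ.filter (fun p : Fin 3 → F => ∃ ℓ ∈ L, p ∈ ℓ)).card : ℝ)
        ≤ (Bc : ℝ) := hUcard
      _ < 0.43 * (q:ℝ)^3 := by
          have hkey : 2*(k:ℝ)*(q:ℝ)^2 - ((k:ℝ)*(k:ℝ) - (k:ℝ))*((q:ℝ)-1) < 0.86*(q:ℝ)^3 :=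
            numeric_key _ _ hqR hA1 hA2
          linarith
end

section
/- For k > 1, any set of kq planes in F_q^3 covers at least (1 − 1/(k − 1 + k^{-1}))·q^3 points; similarly, any set of kq lines in F_q^2 covers at least (1 − 1/(k − 1 + k^{-1}))·q^2 points. -/
/-!
Let `d(p)` be the number of planes (lines) through the point `p`. Double counting gives
`∑ d = kq · q²` and `∑ d² = ∑_{π, π'} |π ∩ π'| ≤ kq · q² + (kq)² · q`, since two distinct planes
meet in at most a line. By Cauchy–Schwarz over the covered points `C`, `(∑ d)² ≤ |C| ∑ d²`, whence
`|C| ≥ k q³ / (1 + k)`, and `k / (1 + k) ≥ 1 - 1 / (k - 1 + k⁻¹)` as soon as `k ≥ 1/2`.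
The same computation, one dimension lower, handles lines.
-/

open scoped Classical

/-- `ℓ` is an (affine) line in `F^2`. -/
def IsLine2 {F : Type} [Field F] (ℓ : Set (Fin 2 → F)) : Prop :=
  ∃ a b : Fin 2 → F, b ≠ 0 ∧ ℓ = {x | ∃ t : F, x = a + t • b}

/-- `π` is an (affine) plane in `F^3`. -/
def IsPlane {F : Type} [Field F] (π : Set (Fin 3 → F)) : Prop :=
  ∃ a u v : Fin 3 → F, LinearIndependent F ![u, v] ∧
    π = {x | ∃ s t : F, x = a + s • u + t • v}

open Finset Module

section DoubleCounting

variable {X : Type*} [Fintype X] (S : Finset (Set X))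

theorem sum_card_filter_mem_eq :
    ∑ p : X, #(S.filter (p ∈ ·)) = ∑ A ∈ S, #(univ.filter (· ∈ A)) := by
  simp only [card_filter]
  exact sum_comm

theorem sum_sq_card_filter_mem_eq :
    ∑ p : X, #(S.filter (p ∈ ·)) ^ 2 =
      ∑ A ∈ S, ∑ B ∈ S, #(univ.filter (fun p => p ∈ A ∧ p ∈ B)) := by
  simp only [card_filter, sq, sum_mul_sum, ite_zero_mul_ite_zero, mul_one]
  rw [sum_comm]
  exact sum_congr rfl fun _ _ => sum_comm

theorem sum_card_filter_mem_eq_sum_cover :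
    ∑ p ∈ univ.filter (fun p => ∃ A ∈ S, p ∈ A), #(S.filter (p ∈ ·)) =
      ∑ p : X, #(S.filter (p ∈ ·)) := by
  refine sum_filter_of_ne fun p _ hp => ?_
  obtain ⟨A, hA⟩ := card_ne_zero.mp hp
  exact ⟨A, (mem_filter.mp hA).1, (mem_filter.mp hA).2⟩

variable {S} {m r : ℕ}

theorem sum_sum_card_filter_mem_and_le (hm : ∀ A ∈ S, #(univ.filter (· ∈ A)) = m)
    (hr : ∀ A ∈ S, ∀ B ∈ S, A ≠ B → #(univ.filter (fun p => p ∈ A ∧ p ∈ B)) ≤ r) :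
    ∑ A ∈ S, ∑ B ∈ S, #(univ.filter (fun p => p ∈ A ∧ p ∈ B)) ≤ #S * m + #S ^ 2 * r := calc
  _ ≤ ∑ A ∈ S, (m + #S * r) := by
    refine sum_le_sum fun A hA => ?_
    rw [← add_sum_erase _ _ hA]
    gcongr
    · simp [hm A hA]
    · calc ∑ B ∈ S.erase A, #(univ.filter (fun p => p ∈ A ∧ p ∈ B))
          ≤ ∑ B ∈ S.erase A, r :=
            sum_le_sum fun B hB => hr A hA B (mem_of_mem_erase hB) (ne_of_mem_erase hB).symm
        _ ≤ #S * r := by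
            rw [sum_const, smul_eq_mul]
            exact Nat.mul_le_mul_right r card_erase_le
  _ = #S * m + #S ^ 2 * r := by rw [sum_const, smul_eq_mul]; ring

theorem sq_card_mul_le_card_cover (hm : ∀ A ∈ S, #(univ.filter (· ∈ A)) = m)
    (hr : ∀ A ∈ S, ∀ B ∈ S, A ≠ B → #(univ.filter (fun p => p ∈ A ∧ p ∈ B)) ≤ r) :
    (#S * m) ^ 2 ≤ #(univ.filter (fun p => ∃ A ∈ S, p ∈ A)) * (#S * m + #S ^ 2 * r) := by
  set C := univ.filter (fun p : X => ∃ A ∈ S, p ∈ A)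
  set d : X → ℕ := fun p => #(S.filter (p ∈ ·))
  have hsum : ∑ p ∈ C, d p = #S * m := by
    rw [sum_card_filter_mem_eq_sum_cover, sum_card_filter_mem_eq, sum_congr rfl hm, sum_const,
      smul_eq_mul]
  have hsq : ∑ p ∈ C, d p ^ 2 ≤ #S * m + #S ^ 2 * r := calc
    ∑ p ∈ C, d p ^ 2 ≤ ∑ p : X, d p ^ 2 := sum_le_sum_of_subset (subset_univ C)
    _ = ∑ A ∈ S, ∑ B ∈ S, #(univ.filter (fun p => p ∈ A ∧ p ∈ B)) :=
      sum_sq_card_filter_mem_eq S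
    _ ≤ #S * m + #S ^ 2 * r := sum_sum_card_filter_mem_and_le hm hr
  calc (#S * m) ^ 2 = (∑ p ∈ C, d p) ^ 2 := by rw [hsum]
    _ ≤ #C * ∑ p ∈ C, d p ^ 2 := sq_sum_le_card_mul_sum_sq
    _ ≤ #C * (#S * m + #S ^ 2 * r) := Nat.mul_le_mul_left _ hsq

end DoubleCounting

section AffineSubspaces

variable {F V : Type*} [Field F] [Fintype F] [AddCommGroup V] [Module F V] [Fintype V]

theorem AffineSubspace.card_filter_mem {P : AffineSubspace F V} (hP : (P : Set V).Nonempty) :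
    #(univ.filter (· ∈ P)) = Fintype.card F ^ finrank F P.direction := by
  obtain ⟨a, ha⟩ := hP
  rw [← card_eq_pow_finrank, ← Fintype.card_coe]
  exact Fintype.card_congr
    { toFun := fun x => ⟨x.1 - a, by
        simpa [← vsub_right_mem_direction_iff_mem ha] using x.2⟩
      invFun := fun w => ⟨w.1 + a, by simp [← vsub_right_mem_direction_iff_mem ha]⟩
      left_inv := fun x => by simp
      right_inv := fun w => by simp }

theorem AffineSubspace.card_filter_mem_inf_le {P₁ P₂ : AffineSubspace F V} {n : ℕ}
    (h₁ : finrank F P₁.direction = n + 1) (h₂ : finrank F P₂.direction = n + 1) (hne : P₁ ≠ P₂) :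
    #(univ.filter (fun x => x ∈ P₁ ∧ x ∈ P₂)) ≤ Fintype.card F ^ n := by
  rcases eq_empty_or_nonempty (univ.filter (fun x => x ∈ P₁ ∧ x ∈ P₂)) with h | ⟨x₀, hx₀⟩
  · simp [h]
  obtain ⟨hx₁, hx₂⟩ := (mem_filter.mp hx₀).2
  have hdir : P₁.direction ≠ P₂.direction := fun hd => hne (ext_of_direction_eq hd ⟨x₀, hx₁, hx₂⟩)
  have hlt : P₁.direction ⊓ P₂.direction < P₁.direction :=
    inf_le_left.lt_of_ne fun h =>
      hdir (Submodule.eq_of_le_of_finrank_le (h ▸ inf_le_right) (by rw [h₁, h₂]))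
  have hrank : finrank F ↥(P₁.direction ⊓ P₂.direction) ≤ n := by
    have := Submodule.finrank_lt_finrank_of_lt hlt
    omega
  calc #(univ.filter (fun x => x ∈ P₁ ∧ x ∈ P₂)) = #(univ.filter (· ∈ P₁ ⊓ P₂)) := by
        simp only [mem_inf_iff]
    _ = Fintype.card F ^ finrank F ↥(P₁.direction ⊓ P₂.direction) := by
        rw [card_filter_mem ⟨x₀, (mem_inf_iff _ _ _).mpr ⟨hx₁, hx₂⟩⟩,
          direction_inf_of_mem hx₁ hx₂]
    _ ≤ Fintype.card F ^ n := Nat.pow_le_pow_right Fintype.card_pos hrank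

theorem AffineSubspace.card_filter_mem_of_finrank_direction {P : AffineSubspace F V} {n : ℕ}
    (hP : finrank F P.direction = n + 1) :
    #(univ.filter (· ∈ P)) = Fintype.card F ^ (n + 1) := by
  have hne : (P : Set V).Nonempty := by
    by_contra h
    rw [Set.not_nonempty_iff_eq_empty, coe_eq_bot_iff] at h
    rw [h, direction_bot, finrank_bot] at hP
    omega
  rw [card_filter_mem hne, hP]

theorem card_cover_ge_of_affineSubspaces (e : ℕ) (S : Finset (Set V))
    (hS : ∀ A ∈ S, ∃ P : AffineSubspace F V, A = P ∧ finrank F P.direction = e + 1)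
    {k : ℝ} (hcard : (#S : ℝ) = k * Fintype.card F) :
    k / (1 + k) * (Fintype.card F : ℝ) ^ (e + 2) ≤ #(univ.filter (fun p => ∃ A ∈ S, p ∈ A)) := by
  set q := Fintype.card F
  have hm : ∀ A ∈ S, #(univ.filter (· ∈ A)) = q ^ (e + 1) := by
    rintro A hA
    obtain ⟨P, rfl, hP⟩ := hS A hA
    simpa using AffineSubspace.card_filter_mem_of_finrank_direction hP
  have hr : ∀ A ∈ S, ∀ B ∈ S, A ≠ B → #(univ.filter (fun p => p ∈ A ∧ p ∈ B)) ≤ q ^ e := by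
    rintro A hA B hB hAB
    obtain ⟨P₁, rfl, hP₁⟩ := hS A hA
    obtain ⟨P₂, rfl, hP₂⟩ := hS B hB
    simpa using AffineSubspace.card_filter_mem_inf_le hP₁ hP₂ (fun h => hAB (congrArg _ h))
  have key : ((#S * q ^ (e + 1) : ℕ) : ℝ) ^ 2 ≤
      #(univ.filter (fun p => ∃ A ∈ S, p ∈ A)) * ((#S * q ^ (e + 1) + #S ^ 2 * q ^ e : ℕ) : ℝ) := by
    exact_mod_cast sq_card_mul_le_card_cover hm hr
  set C : ℝ := ((#(univ.filter (fun p => ∃ A ∈ S, p ∈ A)) : ℕ) : ℝ)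
  set Q : ℝ := (q : ℝ) ^ (e + 2)
  have hq : (0 : ℝ) < q := by exact_mod_cast Fintype.card_pos
  have hk : 0 ≤ k := nonneg_of_mul_nonneg_left (hcard ▸ (#S).cast_nonneg) hq
  have key' : (k * Q) * (k * Q) ≤ (C * (1 + k)) * (k * Q) := by
    push_cast at key
    rw [hcard] at key
    convert key using 1 <;> ring
  rw [div_mul_eq_mul_div, div_le_iff₀ (by linarith)]
  rcases hk.eq_or_lt with rfl | hk
  · simp only [zero_mul, add_zero, mul_one]
    exact Nat.cast_nonneg _
  · exact le_of_mul_le_mul_right key' (by positivity)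

end AffineSubspaces

theorem one_sub_one_div_le_div_one_add {k : ℝ} (hk : 1 / 2 ≤ k) :
    1 - 1 / (k - 1 + k⁻¹) ≤ k / (1 + k) := by
  have hk0 : 0 < k := by linarith
  have hD : k - 1 + k⁻¹ = (k ^ 2 - k + 1) / k := by field_simp
  have hpos : 0 < k ^ 2 - k + 1 := by nlinarith
  rw [hD, one_div_div, one_sub_div hpos.ne', div_le_div_iff₀ hpos (by linarith)]
  nlinarith

section Representations

variable {F : Type} [Field F]

theorem IsPlane.exists_affineSubspace {π : Set (Fin 3 → F)} (h : IsPlane π) :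
    ∃ P : AffineSubspace F (Fin 3 → F), π = P ∧ finrank F P.direction = 2 := by
  obtain ⟨a, u, v, hind, rfl⟩ := h
  refine ⟨AffineSubspace.mk' a (Submodule.span F {u, v}), ?_, ?_⟩
  · ext x
    simp only [Set.mem_ofPred_eq, SetLike.mem_coe, AffineSubspace.mem_mk', vsub_eq_sub,
      Submodule.mem_span_pair]
    constructor
    · rintro ⟨s, t, rfl⟩
      exact ⟨s, t, by abel⟩
    · rintro ⟨s, t, hst⟩
      exact ⟨s, t, by rw [add_assoc, hst]; abel⟩
  · rw [AffineSubspace.direction_mk', ← Matrix.range_cons_cons_empty u v ![]]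
    simpa using finrank_span_eq_card hind

theorem IsLine2.exists_affineSubspace {ℓ : Set (Fin 2 → F)} (h : IsLine2 ℓ) :
    ∃ P : AffineSubspace F (Fin 2 → F), ℓ = P ∧ finrank F P.direction = 1 := by
  obtain ⟨a, b, hb, rfl⟩ := h
  refine ⟨AffineSubspace.mk' a (F ∙ b), ?_, ?_⟩
  swap
  · rw [AffineSubspace.direction_mk']
    exact finrank_span_singleton hb
  ext x
  simp only [Set.mem_ofPred_eq, SetLike.mem_coe, AffineSubspace.mem_mk', vsub_eq_sub,
    Submodule.mem_span_singleton]
  constructor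
  · rintro ⟨t, rfl⟩
    exact ⟨t, by abel⟩
  · rintro ⟨t, ht⟩
    exact ⟨t, by rw [ht, add_sub_cancel]⟩

end Representations

/-- `kq` planes in `F_q^3` cover at least `(1 - 1/(k-1+k⁻¹)) q^3` points, and
`kq` lines in `F_q^2` cover at least `(1 - 1/(k-1+k⁻¹)) q^2` points. -/
theorem stmt_16 (F : Type) [Field F] [Fintype F] (q : ℕ) (hq : q = Fintype.card F)
    (k : ℝ) (hk : 1 < k) :
    (∀ Ps : Finset (Set (Fin 3 → F)),
      (∀ π ∈ Ps, IsPlane π) → (Ps.card : ℝ) = k * q →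
      (1 - 1 / (k - 1 + k⁻¹)) * (q : ℝ) ^ 3
        ≤ ((Finset.univ.filter (fun p : Fin 3 → F => ∃ π ∈ Ps, p ∈ π)).card : ℝ)) ∧
    (∀ L : Finset (Set (Fin 2 → F)),
      (∀ ℓ ∈ L, IsLine2 ℓ) → (L.card : ℝ) = k * q →
      (1 - 1 / (k - 1 + k⁻¹)) * (q : ℝ) ^ 2
        ≤ ((Finset.univ.filter (fun p : Fin 2 → F => ∃ ℓ ∈ L, p ∈ ℓ)).card : ℝ)) := by
  subst hq
  have hfrac := one_sub_one_div_le_div_one_add (by linarith : (1 : ℝ) / 2 ≤ k)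
  refine ⟨fun Ps hPs hcard => ?_, fun L hL hcard => ?_⟩
  · exact (mul_le_mul_of_nonneg_right hfrac (by positivity)).trans
      (card_cover_ge_of_affineSubspaces 1 Ps (fun π hπ => (hPs π hπ).exists_affineSubspace) hcard)
  · exact (mul_le_mul_of_nonneg_right hfrac (by positivity)).trans
      (card_cover_ge_of_affineSubspaces 0 L (fun ℓ hℓ => (hL ℓ hℓ).exists_affineSubspace) hcard)
end

section
/- Any line in PG(n,q), with q a square, intersects a Hermitian variety in exactly 1 point, exactly q^{1/2} + 1 points, or is entirely contained in the variety. -/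
open scoped Classical LinearAlgebra.Projectivization

/-!
Write `σ x = x ^ p` for the conjugation of `F = 𝔽_{p²}` and `F₀ = 𝔽_p` for its fixed field.
The points of the line through independent `u, v` are `[u]` and `[t • u + v]`, and on the
latter the Hermitian form reads `t σ(t) α + t β + σ(t β) + δ` with `α, δ ∈ F₀`. If `α ≠ 0`,
completing the norm turns the equation into `s σ(s) = d` with `d ∈ F₀`, which has one solution
for `d = 0` and `p + 1` otherwise; if `α = 0 ≠ β` it becomes `s + σ(s) = -δ`, which has `p`
solutions, and `[u]` is one more point.

Both counts come from one observation. The trace `F →+ F₀` and the norm `Fˣ →* F₀ˣ` have kernels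
of size at most `p` and `p + 1`, and `F₀` has at most `p` elements (all three are root sets of
polynomials); since `|F| = p · p` and `|Fˣ| = (p + 1)(p - 1)`, both maps are onto, with fibres of
exactly that size.
-/

@[to_additive]
theorem MonoidHom.ncard_preimage_singleton_eq_of_card_le {G M : Type*} [Group G] [Group M]
    [Finite G] [Finite M] (f : G →* M) {S : Set M} {a b : ℕ} (hS : Set.range f ⊆ S)
    (hker : Nat.card f.ker ≤ a) (hSb : S.ncard ≤ b) (hG : Nat.card G = a * b)
    {y : M} (hy : y ∈ S) : (f ⁻¹' {y}).ncard = a := by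
  have hcard : Nat.card f.ker * (Set.range f).ncard = a * b := by
    rw [← coe_range, ← Nat.card_coe_set_eq, SetLike.coe_sort_coe, ← Subgroup.index_ker,
      Subgroup.card_mul_index, hG]
  have hrange : (Set.range f).ncard ≤ S.ncard := Set.ncard_le_ncard hS
  have hker_pos : 0 < Nat.card f.ker := Nat.card_pos
  have hrange_pos : 0 < (Set.range f).ncard := (Set.ncard_pos).2 (Set.range_nonempty f)
  have hker_eq : Nat.card f.ker = a := by nlinarith
  have hrange_eq : Set.range f = S := Set.eq_of_subset_of_ncard_le hS (by nlinarith)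
  obtain ⟨g, rfl⟩ := hrange_eq ▸ hy
  rw [← Nat.card_coe_set_eq, Nat.card_congr (f.fiberEquivKer g), hker_eq]

open Polynomial in
theorem ncard_setOf_pow_eq_mul_le {R : Type*} [CommRing R] [IsDomain R] {m : ℕ} (hm : 2 ≤ m)
    (c : R) : {x : R | x ^ m = c * x}.ncard ≤ m := by
  have hdeg : (X ^ m - C c * X : R[X]).natDegree = m := by
    rw [natDegree_sub_eq_left_of_natDegree_lt] <;> simp only [natDegree_X_pow]
    exact ((natDegree_C_mul_le c X).trans natDegree_X_le).trans_lt (by omega)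
  have hne : (X ^ m - C c * X : R[X]) ≠ 0 := by
    rintro h; rw [h, natDegree_zero] at hdeg; omega
  calc {x : R | x ^ m = c * x}.ncard ≤ ((X ^ m - C c * X : R[X]).rootSet R).ncard := by
        refine Set.ncard_le_ncard (fun x hx => ?_)
        simp [mem_rootSet, hne, hx.out]
    _ ≤ m := (ncard_rootSet_le _ R).trans hdeg.le

namespace Projectivization

variable {K V : Type*} [Field K] [AddCommGroup V] [Module K V] {u v : V}

theorem ne_zero_of_linearIndependent_pair (huv : LinearIndependent K ![u, v]) : u ≠ 0 :=
  fun h => one_ne_zero (LinearIndependent.pair_iff.1 huv 1 0 (by simp [h])).1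

theorem smul_add_ne_zero_of_linearIndependent_pair (huv : LinearIndependent K ![u, v]) (t : K) :
    t • u + v ≠ 0 :=
  fun h => one_ne_zero (LinearIndependent.pair_iff.1 huv t 1 (by simpa using h)).2

def lineChart (huv : LinearIndependent K ![u, v]) (t : K) : ℙ K V :=
  mk K (t • u + v) (smul_add_ne_zero_of_linearIndependent_pair huv t)

theorem lineChart_injective (huv : LinearIndependent K ![u, v]) :
    Function.Injective (lineChart huv) := by
  intro s t hst
  obtain ⟨c, hc⟩ := (mk_eq_mk_iff' K _ _ _ _).1 hst
  obtain ⟨hs, hc1⟩ := LinearIndependent.pair_iff.1 huv (c * t - s) (c - 1)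
    (by linear_combination (norm := module) hc)
  rw [sub_eq_zero.1 hc1, one_mul] at hs
  exact (sub_eq_zero.1 hs).symm

theorem mk_notMem_range_lineChart (huv : LinearIndependent K ![u, v]) :
    mk K u (ne_zero_of_linearIndependent_pair huv) ∉ Set.range (lineChart huv) := by
  rintro ⟨t, ht⟩
  obtain ⟨c, hc⟩ := (mk_eq_mk_iff' K _ _ _ _).1 ht
  have := (LinearIndependent.pair_iff.1 huv (c - t) (-1)
    (by linear_combination (norm := module) hc)).2
  exact one_ne_zero (neg_eq_zero.1 this)

theorem setOf_submodule_le_span_pair (huv : LinearIndependent K ![u, v]) :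
    {x : ℙ K V | x.submodule ≤ Submodule.span K {u, v}}
      = insert (mk K u (ne_zero_of_linearIndependent_pair huv)) (Set.range (lineChart huv)) := by
  ext x
  refine ⟨fun hx => ?_, ?_⟩
  · induction x using ind with | h w hw =>
    rw [Set.mem_ofPred_eq, submodule_mk, Submodule.span_singleton_le_iff_mem] at hx
    obtain ⟨a, c, rfl⟩ := Submodule.mem_span_pair.1 hx
    by_cases hc : c = 0
    · subst hc
      exact Or.inl <| (mk_eq_mk_iff' K _ _ _ _).2 ⟨a, by simp⟩
    · refine Or.inr ⟨a / c, (mk_eq_mk_iff' K _ _ _ _).2 ⟨c⁻¹, ?_⟩⟩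
      rw [smul_add, smul_smul, smul_smul, inv_mul_cancel₀ hc, one_smul]
      congr 1
      field_simp
  · rintro (rfl | ⟨t, rfl⟩)
    · rw [Set.mem_ofPred_eq, submodule_mk, Submodule.span_singleton_le_iff_mem]
      exact Submodule.subset_span (by simp)
    · rw [Set.mem_ofPred_eq, lineChart, submodule_mk, Submodule.span_singleton_le_iff_mem]
      exact add_mem (Submodule.smul_mem _ _ (Submodule.subset_span (by simp)))
        (Submodule.subset_span (by simp))

theorem ncard_setOf_submodule_le_span_pair_inter [Finite K] (huv : LinearIndependent K ![u, v])
    (S : Set (ℙ K V)) :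
    ({x : ℙ K V | x.submodule ≤ Submodule.span K {u, v}} ∩ S).ncard
      = (if mk K u (ne_zero_of_linearIndependent_pair huv) ∈ S then 1 else 0)
        + {t | lineChart huv t ∈ S}.ncard := by
  have hrange : Set.range (lineChart huv) ∩ S = lineChart huv '' {t | lineChart huv t ∈ S} := by
    rw [← Set.image_univ, ← Set.image_inter_preimage, Set.univ_inter]; rfl
  have hdisj : mk K u (ne_zero_of_linearIndependent_pair huv) ∉ Set.range (lineChart huv) ∩ S :=
    fun h => mk_notMem_range_lineChart huv h.1
  rw [setOf_submodule_le_span_pair huv]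
  split_ifs with hS
  · rw [Set.insert_inter_of_mem hS, Set.ncard_insert_of_notMem hdisj, hrange,
      Set.ncard_image_of_injective _ (lineChart_injective huv), add_comm]
  · rw [Set.insert_inter_of_notMem hS, hrange,
      Set.ncard_image_of_injective _ (lineChart_injective huv), zero_add]

end Projectivization

theorem Submodule.exists_linearIndependent_pair_eq_span_of_finrank_eq_two {K V : Type*} [Field K]
    [AddCommGroup V] [Module K V] {W : Submodule K V} (hW : Module.finrank K W = 2) :
    ∃ u v : V, LinearIndependent K ![u, v] ∧ W = span K {u, v} := by
  have : Module.Finite K W := Module.finite_of_finrank_eq_succ hW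
  let b := Module.finBasisOfFinrankEq K W hW
  have huv : LinearIndependent K ![(b 0 : V), b 1] := by
    have hb : W.subtype ∘ b = ![(b 0 : V), b 1] := by
      ext i
      fin_cases i <;> rfl
    exact hb ▸ b.linearIndependent.map' W.subtype W.ker_subtype
  refine ⟨b 0, b 1, huv, Projectivization.line_unique' (huv.ne_zero 0) (huv.ne_zero 1) huv W hW
    ?_ ?_⟩ <;> simp

section SesqForm

variable {R ι : Type*} [CommSemiring R] [Fintype ι] (σ : R →+* R) (H : Matrix ι ι R)

def sesqForm (w z : ι → R) : R := ∑ i, ∑ j, w i * H i j * σ (z j)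

theorem sesqForm_smul_self (c : R) (w : ι → R) :
    sesqForm σ H (c • w) (c • w) = c * σ c * sesqForm σ H w w := by
  simp only [sesqForm, Finset.mul_sum, Pi.smul_apply, smul_eq_mul, map_mul]
  refine Finset.sum_congr rfl fun i _ => Finset.sum_congr rfl fun j _ => by ring

theorem sesqForm_smul_add_self (t : R) (u v : ι → R) :
    sesqForm σ H (t • u + v) (t • u + v) = t * σ t * sesqForm σ H u u + t * sesqForm σ H u v
      + σ t * sesqForm σ H v u + sesqForm σ H v v := by
  simp only [sesqForm, Finset.mul_sum, ← Finset.sum_add_distrib, Pi.add_apply, Pi.smul_apply,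
    smul_eq_mul, map_add, map_mul]
  refine Finset.sum_congr rfl fun i _ => Finset.sum_congr rfl fun j _ => by ring

theorem apply_sesqForm (hσ : ∀ x, σ (σ x) = x) (hH : ∀ i j, H i j = σ (H j i))
    (w z : ι → R) : σ (sesqForm σ H w z) = sesqForm σ H z w := by
  simp only [sesqForm, map_sum, map_mul, hσ, ← hH]
  rw [Finset.sum_comm]
  refine Finset.sum_congr rfl fun i _ => Finset.sum_congr rfl fun j _ => by ring

end SesqForm

theorem sesqForm_rep_mk_eq_zero_iff {F ι : Type*} [Field F] [Fintype ι] (σ : F →+* F)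
    (H : Matrix ι ι F) {w : ι → F} (hw : w ≠ 0) :
    sesqForm σ H (Projectivization.mk F w hw).rep (Projectivization.mk F w hw).rep = 0 ↔
      sesqForm σ H w w = 0 := by
  obtain ⟨c, hc⟩ := Projectivization.exists_smul_eq_mk_rep F w hw
  rw [← hc, Units.smul_def, sesqForm_smul_self]
  simp [c.ne_zero]

section Conjugation

variable {F : Type*} [Field F] [Fintype F] {p : ℕ} {σ : F →+* F}

theorem exists_ringHom_apply_eq_pow
    (hp : ∃ r k : ℕ, r.Prime ∧ 0 < k ∧ p = r ^ k) (hq : Fintype.card F = p ^ 2) :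
    ∃ σ : F →+* F, ∀ x, σ x = x ^ p := by
  obtain ⟨r, k, hr, -, rfl⟩ := hp
  have : Fact r.Prime := ⟨hr⟩
  have : CharP F r := charP_of_card_eq_prime_pow (f := k * 2) (by rw [hq, pow_mul])
  exact ⟨iterateFrobenius F r k, fun _ => iterateFrobenius_def ..⟩

theorem two_le_of_card_eq_sq (hq : Fintype.card F = p ^ 2) : 2 ≤ p := by
  have := hq ▸ Fintype.one_lt_card (α := F)
  nlinarith

variable (hσ : ∀ x, σ x = x ^ p) (hq : Fintype.card F = p ^ 2)
include hσ hq

theorem apply_apply_of_pow_eq (x : F) : σ (σ x) = x := by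
  rw [hσ, hσ, ← pow_mul, ← sq, ← hq, FiniteField.pow_card]

theorem ncard_fixedPoints_le : {x : F | σ x = x}.ncard ≤ p := by
  simpa [hσ] using ncard_setOf_pow_eq_mul_le (two_le_of_card_eq_sq hq) (1 : F)

theorem ncard_setOf_add_apply_eq {c : F} (hc : σ c = c) :
    {t : F | t + σ t = c}.ncard = p := by
  let tr : F →+ F := AddMonoidHom.id F + σ.toAddMonoidHom
  refine tr.ncard_preimage_singleton_eq_of_card_le (S := {x | σ x = x}) (b := p) ?_ ?_
    (ncard_fixedPoints_le hσ hq) (by rw [Nat.card_eq_fintype_card, hq, sq]) hc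
  · rintro _ ⟨t, rfl⟩
    simp [tr, apply_apply_of_pow_eq hσ hq, add_comm]
  · rw [← SetLike.coe_sort_coe, Nat.card_coe_set_eq]
    refine (Set.ncard_le_ncard fun t ht => ?_).trans
      (ncard_setOf_pow_eq_mul_le (two_le_of_card_eq_sq hq) (-1 : F))
    have : t + σ t = 0 := ht
    simp [← hσ, eq_neg_of_add_eq_zero_right this]

theorem ncard_units_fixedPoints_le : {x : Fˣ | σ x = x}.ncard ≤ p - 1 := by
  have himage : Units.val '' {x : Fˣ | σ x = x} = {x : F | σ x = x} \ {0} := by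
    ext x
    refine ⟨?_, fun ⟨hx, hx0⟩ => ⟨Units.mk0 x hx0, hx, rfl⟩⟩
    rintro ⟨x, hx, rfl⟩
    exact ⟨hx, x.ne_zero⟩
  rw [← Set.ncard_image_of_injective _ Units.val_injective, himage,
    Set.ncard_sdiff_singleton_of_mem (by simp)]
  exact Nat.sub_le_sub_right (ncard_fixedPoints_le hσ hq) 1

theorem ncard_setOf_mul_apply_eq {d : F} (hd : σ d = d) (hd0 : d ≠ 0) :
    {t : F | t * σ t = d}.ncard = p + 1 := by
  have hp := two_le_of_card_eq_sq hq
  let N : Fˣ →* Fˣ := powMonoidHom (p + 1)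
  have hN : ∀ t : Fˣ, ((N t : Fˣ) : F) = t * σ t := fun t => by simp [N, hσ, pow_succ']
  have hfiber : {t : F | t * σ t = d} = Units.val '' (N ⁻¹' {Units.mk0 d hd0}) := by
    ext t
    refine ⟨fun ht => ?_, ?_⟩
    · have ht0 : t ≠ 0 := by rintro rfl; simp [hd0.symm] at ht
      exact ⟨Units.mk0 t ht0, Units.ext <| by simpa [hN] using ht, rfl⟩
    · rintro ⟨t, ht, rfl⟩
      simpa [hN] using congrArg Units.val ht
  rw [hfiber, Set.ncard_image_of_injective _ Units.val_injective]
  refine N.ncard_preimage_singleton_eq_of_card_le (S := {x | σ x = x}) ?_ ?_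
    (ncard_units_fixedPoints_le hσ hq) ?_ hd
  · rintro _ ⟨t, rfl⟩
    simp [hN, apply_apply_of_pow_eq hσ hq, mul_comm]
  · have hker : N.ker = rootsOfUnity (p + 1) F := by ext; simp [N]
    exact hker ▸ card_rootsOfUnity F (p + 1)
  · rw [Nat.card_units, Nat.card_eq_fintype_card, hq]
    zify [show 1 ≤ p by omega, show 1 ≤ p ^ 2 by nlinarith]
    ring

theorem ncard_setOf_trace_form_eq_zero {β : F} (δ : F) (hβ : β ≠ 0) (hδ : σ δ = δ) :
    {t : F | t * β + σ t * σ β + δ = 0}.ncard = p := by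
  have hset : {t : F | t * β + σ t * σ β + δ = 0} = (· * β) ⁻¹' {s | s + σ s = -δ} := by
    ext t
    simp only [Set.mem_ofPred_eq, Set.mem_preimage, map_mul]
    constructor <;> intro ht <;> linear_combination ht
  rw [hset, Set.ncard_preimage_of_injective_subset_range (mul_left_injective₀ hβ)
      (fun s _ => ⟨s * β⁻¹, inv_mul_cancel_right₀ hβ s⟩),
    ncard_setOf_add_apply_eq hσ hq (by rw [map_neg, hδ])]

theorem ncard_setOf_hermitian_form_eq_zero {α δ : F} (β : F) (hα : σ α = α) (hδ : σ δ = δ)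
    (hα0 : α ≠ 0) :
    {t : F | t * σ t * α + t * β + σ t * σ β + δ = 0}.ncard = 1 ∨
      {t : F | t * σ t * α + t * β + σ t * σ β + δ = 0}.ncard = p + 1 := by
  set γ := σ β / α
  set d := γ * σ γ - δ / α
  have hσγ : σ γ = β / α := by simp [γ, hα, apply_apply_of_pow_eq hσ hq]
  have hd : σ d = d := by
    simp only [d, map_sub, map_mul, map_div₀, hσγ, hα, hδ]
    ring
  have hform : ∀ t, t * σ t * α + t * β + σ t * σ β + δ = α * ((t + γ) * σ (t + γ) - d) := by
    intro t
    simp only [d, map_add, hσγ, γ]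
    field_simp
    ring
  have hset : {t : F | t * σ t * α + t * β + σ t * σ β + δ = 0}
      = (· + γ) ⁻¹' {s | s * σ s = d} := by
    ext t
    simp [hform, hα0, sub_eq_zero]
  rw [hset, Set.ncard_preimage_of_injective_subset_range (add_left_injective γ)
      (fun s _ => ⟨s - γ, sub_add_cancel s γ⟩)]
  by_cases hd0 : d = 0
  · left
    rw [hd0, ← Set.ncard_singleton (0 : F)]
    congr 1
    ext s
    simp
  · exact Or.inr (ncard_setOf_mul_apply_eq hσ hq hd hd0)

theorem ite_add_ncard_setOf_hermitian_form_eq_zero {α δ : F} (β : F) (hα : σ α = α)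
    (hδ : σ δ = δ) (h : ¬(α = 0 ∧ β = 0 ∧ δ = 0)) :
    (if α = 0 then 1 else 0) + {t : F | t * σ t * α + t * β + σ t * σ β + δ = 0}.ncard = 1 ∨
      (if α = 0 then 1 else 0) + {t : F | t * σ t * α + t * β + σ t * σ β + δ = 0}.ncard
        = p + 1 := by
  by_cases hα0 : α = 0
  · subst hα0
    simp only [mul_zero, zero_add, if_pos]
    by_cases hβ0 : β = 0
    · subst hβ0
      have hδ0 : δ ≠ 0 := by tauto
      left
      simp [hδ0]
    · exact Or.inr <| by rw [ncard_setOf_trace_form_eq_zero hσ hq δ hβ0 hδ, add_comm]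
  · simpa [hα0] using ncard_setOf_hermitian_form_eq_zero hσ hq β hα hδ hα0

end Conjugation

open Projectivization in
theorem stmt_18_general (p : ℕ) (hp : ∃ r k : ℕ, Nat.Prime r ∧ 0 < k ∧ p = r ^ k)
    (F : Type) [Field F] [Fintype F] (hq : Fintype.card F = p ^ 2)
    (n : ℕ)
    (H : Matrix (Fin (n + 1)) (Fin (n + 1)) F)
    (hHerm : ∀ i j, H i j = (H j i) ^ p)
    (V : Set (Projectivization F (Fin (n + 1) → F)))
    (hV : V = {x | ∑ i, ∑ j, x.rep i * H i j * (x.rep j) ^ p = 0})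
    (W : Submodule F (Fin (n + 1) → F)) (hW : Module.finrank F W = 2)
    (ℓ : Set (Projectivization F (Fin (n + 1) → F)))
    (hℓ : ℓ = {x | Projectivization.submodule x ≤ W}) :
    (ℓ ∩ V).ncard = 1 ∨ (ℓ ∩ V).ncard = p + 1 ∨ ℓ ⊆ V := by
  obtain ⟨σ, hσ⟩ := exists_ringHom_apply_eq_pow hp hq
  obtain ⟨u, v, huv, rfl⟩ := W.exists_linearIndependent_pair_eq_span_of_finrank_eq_two hW
  have hσσ := apply_apply_of_pow_eq hσ hq
  have hH : ∀ i j, H i j = σ (H j i) := by simpa only [hσ] using hHerm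
  have hpoint : ∀ w (hw : w ≠ 0), mk F w hw ∈ V ↔ sesqForm σ H w w = 0 := by
    intro w hw
    rw [← sesqForm_rep_mk_eq_zero_iff σ H hw, hV]
    simp only [Set.mem_ofPred_eq, sesqForm, hσ]
  have hline : ∀ t : F, sesqForm σ H (t • u + v) (t • u + v) = t * σ t * sesqForm σ H u u
      + t * sesqForm σ H u v + σ t * σ (sesqForm σ H u v) + sesqForm σ H v v := by
    intro t
    rw [sesqForm_smul_add_self, apply_sesqForm σ H hσσ hH]
  subst hℓ
  by_cases hzero : sesqForm σ H u u = 0 ∧ sesqForm σ H u v = 0 ∧ sesqForm σ H v v = 0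
  · right; right
    rw [setOf_submodule_le_span_pair huv]
    rintro _ (rfl | ⟨t, rfl⟩)
    · exact (hpoint _ _).2 hzero.1
    · exact (hpoint _ _).2 (by simp [hline, hzero])
  · rw [ncard_setOf_submodule_le_span_pair_inter huv]
    simp only [lineChart, hpoint, hline]
    exact (ite_add_ncard_setOf_hermitian_form_eq_zero hσ hq _ (apply_sesqForm σ H hσσ hH u u)
      (apply_sesqForm σ H hσσ hH v v) hzero).imp_right Or.inl

/-- A line in `PG(n, q)` with `q = p^2` meets a Hermitian variety in exactly one
point, exactly `p + 1 = √q + 1` points, or is contained in it. -/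
theorem stmt_18 (p : ℕ) (hp : ∃ r k : ℕ, Nat.Prime r ∧ 0 < k ∧ p = r ^ k)
    (F : Type) [Field F] [Fintype F] (hq : Fintype.card F = p ^ 2)
    (n : ℕ)
    (H : Matrix (Fin (n + 1)) (Fin (n + 1)) F)
    (hHerm : ∀ i j, H i j = (H j i) ^ p) (hH0 : H ≠ 0)
    (V : Set (Projectivization F (Fin (n + 1) → F)))
    (hV : V = {x | ∑ i, ∑ j, x.rep i * H i j * (x.rep j) ^ p = 0})
    (W : Submodule F (Fin (n + 1) → F)) (hW : Module.finrank F W = 2)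
    (ℓ : Set (Projectivization F (Fin (n + 1) → F)))
    (hℓ : ℓ = {x | Projectivization.submodule x ≤ W}) :
    (ℓ ∩ V).ncard = 1 ∨ (ℓ ∩ V).ncard = p + 1 ∨ ℓ ⊆ V :=
  stmt_18_general p hp F hq n H hHerm V hV W hW ℓ hℓ
end

section
/- Let q = p^2 for a prime power p, and let 0 < α < 1. There exists a set L of (α + o(1))·q^{7/2} lines in F_q^3 such that no plane contains more than (α + o(1))·q^{3/2} lines of L, and the union of the lines of L has exactly q^3 − (1 − α + o(1))·q^{5/2} points. -/
/-!
Write `σ x = x ^ p` for the conjugation of `F = 𝔽_q`, `q = p²`, and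
`H : x₂ + σ x₂ = σ x₀ · x₀ + σ x₁ · x₁` for the affine Hermitian surface. For `η` with
`σ η · η = -1` the lines `chart σ η y ·`, `y ∈ F²`, partition `F³`, and the Hermitian form is
constant along each of them, so `H` is the union of the `p³` of them it contains (its
generators). Fix a set `Γ` of `⌊α p³⌋` generators, and take all lines of the partition except the
generators outside `Γ`, together with, at every point `b` of a generator in `Γ`, the roughly `q`
lines of the tangent plane at `b` that meet `H` only at `b`. These lines cover `F³` minus the
generators outside `Γ`, there are about `α p³ · q · q` tangent lines, and a plane contains at most
`q` lines of the (disjoint) partition and at most `|Γ| + q` of the tangent lines: it is the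
tangent plane at no more than one point, and at any other point `b` it contains at most one of the
tangent lines and not the generator through `b`.
-/

open scoped Classical

/-- The (affine) plane through `a` spanned by directions `u, v`. -/
def affPlane {F : Type} [Field F] (a u v : Fin 3 → F) : Set (Fin 3 → F) :=
  {x | ∃ s t : F, x = a + s • u + t • v}

open Finset

section Conjugation

open Polynomial

variable {F : Type} [Field F] [Fintype F]

theorem Polynomial.card_filter_eval_eq_zero_le {f : F[X]} {n : ℕ} (hn : 0 < n)
    (hf : f.natDegree = n) : #{x | f.eval x = 0} ≤ n := by
  have hf0 : f ≠ 0 := ne_zero_of_natDegree_gt (hf ▸ hn)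
  refine hf ▸ card_le_degree_of_subset_roots fun x hx => ?_
  simpa [mem_roots hf0] using hx

theorem Finset.eq_of_sum_eq_mul {ι : Type*} {s : Finset ι} {f : ι → ℕ} {n m : ℕ}
    (hs : #s ≤ n) (hf : ∀ i ∈ s, f i ≤ m) (hsum : ∑ i ∈ s, f i = n * m) :
    ∀ i ∈ s, f i = m := by
  by_contra! h
  obtain ⟨i, hi, hne⟩ := h
  have : ∑ i ∈ s, f i < ∑ _i ∈ s, m :=
    sum_lt_sum hf ⟨i, hi, lt_of_le_of_ne (hf i hi) hne⟩
  rw [sum_const, smul_eq_mul] at this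
  nlinarith

variable {σ : F →+* F} {p : ℕ}

theorem involutive_of_eq_pow (hσ : ∀ x, σ x = x ^ p) (hcard : Fintype.card F = p ^ 2) :
    Function.Involutive σ := fun x => by
  rw [hσ, hσ, ← pow_mul, ← sq, ← hcard, FiniteField.pow_card]

theorem card_fixed_le (hσ : ∀ x, σ x = x ^ p) (hp : 2 ≤ p) : #{c | σ c = c} ≤ p := by
  have hdeg : (X ^ p - X : F[X]).natDegree = p := by
    rw [natDegree_sub_eq_left_of_natDegree_lt] <;> simp; omega
  simpa [hσ, sub_eq_zero] using card_filter_eval_eq_zero_le (by omega) hdeg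

theorem card_trace_fibre_le (hσ : ∀ x, σ x = x ^ p) (hp : 2 ≤ p) (c : F) :
    #{z | z + σ z = c} ≤ p := by
  have hdeg : (X ^ p + X - C c : F[X]).natDegree = p := by
    rw [natDegree_sub_C, natDegree_add_eq_left_of_natDegree_lt] <;> simp; omega
  simpa [hσ, sub_eq_zero, add_comm] using card_filter_eval_eq_zero_le (by omega) hdeg

theorem card_norm_fibre_le (hσ : ∀ x, σ x = x ^ p) (c : F) :
    #{z | σ z * z = c} ≤ p + 1 := by
  have hdeg : (X ^ (p + 1) - C c : F[X]).natDegree = p + 1 := natDegree_X_pow_sub_C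
  simpa [hσ, sub_eq_zero, ← pow_succ] using card_filter_eval_eq_zero_le (by omega) hdeg

theorem card_trace_fibre (hσ : ∀ x, σ x = x ^ p) (hcard : Fintype.card F = p ^ 2) (hp : 2 ≤ p)
    {c : F} (hc : σ c = c) : #{z | z + σ z = c} = p := by
  -- the `p²` elements of `F` fall into at most `p` trace fibres of size at most `p`
  have hsum : ∑ c ∈ {c | σ c = c}, #{z | z + σ z = c} = p * p := by
    rw [← card_eq_sum_card_fiberwise (f := fun z => z + σ z) (s := univ), card_univ, hcard, sq]
    intro z _
    simp [involutive_of_eq_pow hσ hcard z, add_comm]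
  exact eq_of_sum_eq_mul (card_fixed_le hσ hp) (fun c _ => card_trace_fibre_le hσ hp c) hsum c
    (by simpa using hc)

theorem exists_conj_mul_self_eq_neg_one (hσ : ∀ x, σ x = x ^ p) (hcard : Fintype.card F = p ^ 2)
    (hp : 2 ≤ p) : ∃ η : F, σ η * η = -1 := by
  -- otherwise the norm maps the `p² - 1` units, at most `p + 1` to one, into the at most `p - 2`
  -- fixed points of `σ` other than `0` and `-1`
  by_contra! h
  set K : Finset F := {c | σ c = c}
  have hmaps : ∀ x ∈ univ.erase 0, σ x * x ∈ (K.erase 0).erase (-1) := by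
    intro x hx
    have hx0 : x ≠ 0 := ne_of_mem_erase hx
    refine mem_erase.2 ⟨h x, mem_erase.2 ⟨mul_ne_zero (by simpa) hx0, ?_⟩⟩
    simp [K, involutive_of_eq_pow hσ hcard x, mul_comm]
  have hneg : -1 ∈ K.erase 0 := by simp [K]
  have hK : #((K.erase 0).erase (-1)) + 2 ≤ p := by
    rw [card_erase_of_mem hneg, card_erase_of_mem (by simp [K])]
    have hKp : #K ≤ p := card_fixed_le hσ hp
    omega
  have hle := card_le_mul_card_image_of_maps_to hmaps (p + 1)
    fun c _ => (card_le_card (filter_subset_filter _ (subset_univ _))).trans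
      (card_norm_fibre_le hσ c)
  rw [card_erase_of_mem (mem_univ _), card_univ, hcard] at hle
  have hp2 : 1 ≤ p ^ 2 := Nat.one_le_pow _ _ (by omega)
  have := Nat.mul_le_mul_left (p + 1) hK
  zify [hp2] at hle this
  nlinarith

theorem exists_ringHom_eq_pow (hp : ∃ r k : ℕ, r.Prime ∧ 0 < k ∧ p = r ^ k)
    (hcard : Fintype.card F = p ^ 2) : ∃ σ : F →+* F, ∀ x, σ x = x ^ p := by
  obtain ⟨r, k, hr, -, rfl⟩ := hp
  have := Fact.mk hr
  have : CharP F r := charP_of_card_eq_prime_pow (f := k * 2) (by rw [hcard, pow_mul])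
  exact ⟨iterateFrobenius F r k, iterateFrobenius_def r k⟩

end Conjugation

section AffineGeometry

variable {F : Type} [Field F]

def affLine (a d : Fin 3 → F) : Set (Fin 3 → F) := {x | ∃ t : F, x = a + t • d}

theorem isLine_affLine {a d : Fin 3 → F} (hd : d ≠ 0) : IsLine (affLine a d) :=
  ⟨a, d, hd, rfl⟩

theorem Submodule.span_pair_eq_of_mem {K V : Type*} [Field K] [AddCommGroup V] [Module K V]
    {u v x y : V} (huv : LinearIndependent K ![u, v]) (hxy : LinearIndependent K ![x, y])
    (hx : x ∈ span K {u, v}) (hy : y ∈ span K {u, v}) : span K {x, y} = span K {u, v} := by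
  have := FiniteDimensional.span_of_finite K (Set.toFinite {u, v})
  refine eq_of_le_of_finrank_eq
    (span_le.2 (Set.insert_subset hx (Set.singleton_subset_iff.2 hy))) ?_
  have h₁ := finrank_span_eq_card huv
  have h₂ := finrank_span_eq_card hxy
  rw [Matrix.range_cons_cons_empty] at h₁ h₂
  rw [h₁, h₂]

theorem linearIndependent_of_apply_one {x y : Fin 3 → F} (hx : x 1 = 1) (hy : y 1 = 1)
    (hxy : x 0 ≠ y 0) : LinearIndependent F ![x, y] := by
  refine LinearIndependent.pair_iff.2 fun s t hst => ?_
  have h₀ := congrFun hst 0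
  have h₁ := congrFun hst 1
  simp only [Pi.add_apply, Pi.smul_apply, smul_eq_mul, hx, hy, Pi.zero_apply] at h₀ h₁
  have hs : s * (x 0 - y 0) = 0 := by linear_combination h₀ - y 0 * h₁
  have hs : s = 0 := (mul_eq_zero.1 hs).resolve_right (sub_ne_zero.2 hxy)
  exact ⟨hs, by linear_combination h₁ - hs⟩

variable {a u v : Fin 3 → F}

theorem sub_mem_span_of_mem_affPlane {x y : Fin 3 → F} (hx : x ∈ affPlane a u v)
    (hy : y ∈ affPlane a u v) : y - x ∈ Submodule.span F {u, v} := by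
  obtain ⟨s, t, rfl⟩ := hx
  obtain ⟨s', t', rfl⟩ := hy
  exact Submodule.mem_span_pair.2 ⟨s' - s, t' - t, by module⟩

theorem mem_affPlane_and_mem_span_of_affLine_subset {b d : Fin 3 → F}
    (h : affLine b d ⊆ affPlane a u v) :
    b ∈ affPlane a u v ∧ d ∈ Submodule.span F {u, v} := by
  have hb : b ∈ affPlane a u v := h ⟨0, by simp⟩
  have hd := sub_mem_span_of_mem_affPlane hb (h ⟨1, rfl⟩)
  simp only [one_smul, add_sub_cancel_left] at hd
  exact ⟨hb, hd⟩

theorem card_affPlane_le [Fintype F] : #{x | x ∈ affPlane a u v} ≤ Fintype.card F ^ 2 :=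
  calc #{x | x ∈ affPlane a u v}
      ≤ #(univ.image fun z : F × F => a + z.1 • u + z.2 • v) := by
        refine card_le_card fun x hx => ?_
        obtain ⟨s, t, rfl⟩ := (mem_filter.1 hx).2
        exact mem_image.2 ⟨(s, t), mem_univ _, rfl⟩
    _ ≤ Fintype.card F ^ 2 := card_image_le.trans (by simp [sq])

end AffineGeometry

namespace HermitianSurface

variable {F : Type} [Field F] (σ : F →+* F)

-- `σ` stands for the conjugation `x ↦ x ^ p` of `𝔽_{p²}`; `herm σ x = 0` is the affine part of
-- the Hermitian surface.
def herm (x : Fin 3 → F) : F := x 2 + σ (x 2) - σ (x 0) * x 0 - σ (x 1) * x 1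

def tangentDir (b : Fin 3 → F) (d : F) : Fin 3 → F := ![d, 1, σ (b 0) * d + σ (b 1)]

def tangentLine (b : Fin 3 → F) (d : F) : Set (Fin 3 → F) := affLine b (tangentDir σ b d)

def tangentSpace (b : Fin 3 → F) : Submodule F (Fin 3 → F) :=
  Submodule.span F {tangentDir σ b 0, tangentDir σ b 1}

def chart (η : F) (y : F × F) (t : F) : Fin 3 → F :=
  ![y.1, 0, y.2] + t • ![η, 1, η * σ y.1]

def fibre (η : F) (y : F × F) : Set (Fin 3 → F) := affLine ![y.1, 0, y.2] ![η, 1, η * σ y.1]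

variable {σ}

theorem chart_inj {η : F} {y y' : F × F} {t t' : F} :
    chart σ η y t = chart σ η y' t' ↔ y = y' ∧ t = t' := by
  refine ⟨fun h => ?_, fun ⟨hy, ht⟩ => hy ▸ ht ▸ rfl⟩
  have h₀ := congrFun h 0
  have h₁ := congrFun h 1
  have h₂ := congrFun h 2
  simp [chart] at h₀ h₁ h₂
  subst h₁
  have hy₁ : y.1 = y'.1 := by simpa using h₀
  have hy₂ : y.2 = y'.2 := by simpa [hy₁] using h₂
  exact ⟨Prod.ext hy₁ hy₂, rfl⟩

theorem chart_injective (η : F) :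
    Function.Injective fun z : (F × F) × F => chart σ η z.1 z.2 :=
  fun _ _ h => Prod.ext_iff.2 (chart_inj.1 h)

theorem chart_sub_chart (η : F) (y : F × F) (t t' : F) :
    chart σ η y t' - chart σ η y t = (t' - t) • ![η, 1, η * σ y.1] := by
  simp only [chart]
  module

theorem exists_chart_eq (η : F) (x : Fin 3 → F) : ∃ y t, chart σ η y t = x := by
  refine ⟨(x 0 - η * x 1, x 2 - x 1 * (η * σ (x 0 - η * x 1))), x 1, ?_⟩
  ext i
  fin_cases i <;> simp [chart]; ring

theorem herm_chart (hσ : Function.Involutive σ) {η : F} (hη : σ η * η = -1) (y : F × F)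
    (t : F) : herm σ (chart σ η y t) = y.2 + σ y.2 - σ y.1 * y.1 := by
  simp [herm, chart, hσ y.1]
  linear_combination (-(σ t * t)) * hη

theorem herm_add_smul_tangentDir (hσ : Function.Involutive σ) (b : Fin 3 → F) (d t : F) :
    herm σ (b + t • tangentDir σ b d) = herm σ b - σ t * t * (σ d * d + 1) := by
  simp [herm, tangentDir, hσ (b 0), hσ (b 1)]
  ring

theorem eq_of_mem_tangentLine (hσ : Function.Involutive σ) {b x : Fin 3 → F} {d : F}
    (hb : herm σ b = 0) (hd : σ d * d + 1 ≠ 0) (hx : x ∈ tangentLine σ b d)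
    (hx₀ : herm σ x = 0) : x = b := by
  obtain ⟨t, rfl⟩ := hx
  rw [herm_add_smul_tangentDir hσ, hb, zero_sub, neg_eq_zero] at hx₀
  obtain rfl : t = 0 := by simpa [hd] using hx₀
  simp

theorem eq_and_eq_of_tangentLine_eq (hσ : Function.Involutive σ) {b b' : Fin 3 → F} {d d' : F}
    (hb : herm σ b = 0) (hb' : herm σ b' = 0) (hd' : σ d' * d' + 1 ≠ 0)
    (h : tangentLine σ b d = tangentLine σ b' d') : b = b' ∧ d = d' := by
  obtain rfl : b = b' := eq_of_mem_tangentLine hσ hb' hd' (h ▸ ⟨0, by simp⟩) hb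
  obtain ⟨s, hs⟩ : b + (1 : F) • tangentDir σ b d ∈ tangentLine σ b d' :=
    h ▸ ⟨1, rfl⟩
  have h₀ := congrFun hs 0
  have h₁ := congrFun hs 1
  simp [tangentDir] at h₀ h₁
  subst h₁
  simpa using h₀

theorem tangentDir_chart {η : F} (hη : σ η * η = -1) (y : F × F) (t : F) :
    tangentDir σ (chart σ η y t) η = ![η, 1, η * σ y.1] := by
  ext i
  fin_cases i <;> simp [tangentDir, chart]
  linear_combination σ t * hη

theorem mem_tangentSpace_iff {b w : Fin 3 → F} :
    w ∈ tangentSpace σ b ↔ w 2 = σ (b 0) * w 0 + σ (b 1) * w 1 := by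
  rw [tangentSpace, Submodule.mem_span_pair]
  constructor
  · rintro ⟨s, t, rfl⟩
    simp [tangentDir]
    ring
  · intro hw
    refine ⟨w 1 - w 0, w 0, ?_⟩
    ext i
    fin_cases i <;> simp [tangentDir, hw]
    ring

theorem tangentDir_mem_tangentSpace (b : Fin 3 → F) (d : F) :
    tangentDir σ b d ∈ tangentSpace σ b := by
  simp [mem_tangentSpace_iff, tangentDir]

theorem linearIndependent_tangentDir (b : Fin 3 → F) {d d' : F} (h : d ≠ d') :
    LinearIndependent F ![tangentDir σ b d, tangentDir σ b d'] :=
  linearIndependent_of_apply_one rfl rfl h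

variable {a u v : Fin 3 → F}

theorem span_eq_tangentSpace (hli : LinearIndependent F ![u, v]) {b : Fin 3 → F} {d d' : F}
    (hdd' : d ≠ d') (hd : tangentDir σ b d ∈ Submodule.span F {u, v})
    (hd' : tangentDir σ b d' ∈ Submodule.span F {u, v}) :
    Submodule.span F {u, v} = tangentSpace σ b :=
  (Submodule.span_pair_eq_of_mem hli (linearIndependent_tangentDir b hdd') hd hd').symm.trans
    (Submodule.span_pair_eq_of_mem (linearIndependent_tangentDir b zero_ne_one)
      (linearIndependent_tangentDir b hdd') (tangentDir_mem_tangentSpace b d)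
      (tangentDir_mem_tangentSpace b d'))

theorem eq_of_span_eq_tangentSpace {b b' : Fin 3 → F} (hb : b ∈ affPlane a u v)
    (hb' : b' ∈ affPlane a u v) (h : Submodule.span F {u, v} = tangentSpace σ b)
    (h' : Submodule.span F {u, v} = tangentSpace σ b') : b = b' := by
  have key : ∀ w : Fin 3 → F, w 2 = σ (b 0) * w 0 + σ (b 1) * w 1 →
      w 2 = σ (b' 0) * w 0 + σ (b' 1) * w 1 := by
    intro w hw
    rw [← mem_tangentSpace_iff, ← h', h, mem_tangentSpace_iff]
    exact hw
  have h₀ : b 0 = b' 0 := σ.injective (by simpa using key ![1, 0, σ (b 0)] (by simp))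
  have h₁ : b 1 = b' 1 := σ.injective (by simpa using key ![0, 1, σ (b 1)] (by simp))
  have h₂ := mem_tangentSpace_iff.1 (h ▸ sub_mem_span_of_mem_affPlane hb hb')
  simp [h₀, h₁] at h₂
  ext i
  fin_cases i
  exacts [h₀, h₁, (sub_eq_zero.1 h₂).symm]

theorem tangentDir_mem_span_of_chart_mem {η : F} (hη : σ η * η = -1) {y : F × F} {t t' : F}
    (hb : chart σ η y t ∈ affPlane a u v) (hb' : chart σ η y t' ∈ affPlane a u v)
    (htt : t ≠ t') : tangentDir σ (chart σ η y t) η ∈ Submodule.span F {u, v} := by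
  have h := Submodule.smul_mem _ (t' - t)⁻¹ (sub_mem_span_of_mem_affPlane hb hb')
  rwa [chart_sub_chart, smul_smul, inv_mul_cancel₀ (sub_ne_zero.2 (Ne.symm htt)), one_smul,
    ← tangentDir_chart hη y t] at h

theorem eq_of_span_ne_tangentSpace {η : F} (hη : σ η * η = -1)
    (hli : LinearIndependent F ![u, v]) {y : F × F} {t t' d d' : F} (hd : σ d * d + 1 ≠ 0)
    (hb : chart σ η y t ∈ affPlane a u v) (hb' : chart σ η y t' ∈ affPlane a u v)
    (hdW : tangentDir σ (chart σ η y t) d ∈ Submodule.span F {u, v})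
    (hd'W : tangentDir σ (chart σ η y t') d' ∈ Submodule.span F {u, v})
    (hW : Submodule.span F {u, v} ≠ tangentSpace σ (chart σ η y t)) : t = t' ∧ d = d' := by
  by_cases htt : t = t'
  · subst htt
    exact ⟨rfl, by_contra fun hdd => hW (span_eq_tangentSpace hli hdd hdW hd'W)⟩
  · have hdη : d ≠ η := by
      rintro rfl
      exact hd (by rw [hη]; ring)
    exact absurd (span_eq_tangentSpace hli hdη hdW
      (tangentDir_mem_span_of_chart_mem hη hb hb' htt)) hW

noncomputable section Construction

variable [Fintype F] (σ) (η : F) (Γ : Finset (F × F))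

def hermIdx : Finset (F × F) := {y | y.2 + σ y.2 = σ y.1 * y.1}

-- Tangent lines at a point `b` of the surface with these slopes meet it only at `b`
-- (`eq_of_mem_tangentLine`); the others lie on it.
def slopes : Finset F := {d | σ d * d + 1 ≠ 0}

def fibreLines : Finset (Set (Fin 3 → F)) := (univ \ (hermIdx σ \ Γ)).image (fibre σ η)

def tangentLines : Finset (Set (Fin 3 → F)) :=
  ((Γ ×ˢ univ) ×ˢ slopes σ).image fun z => tangentLine σ (chart σ η z.1.1 z.1.2) z.2

def lineSet : Finset (Set (Fin 3 → F)) := fibreLines σ η Γ ∪ tangentLines σ η Γ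

variable {σ η Γ}

theorem herm_chart_eq_zero_iff (hσ : Function.Involutive σ) (hη : σ η * η = -1) {y : F × F}
    {t : F} : herm σ (chart σ η y t) = 0 ↔ y ∈ hermIdx σ := by
  simp [herm_chart hσ hη, hermIdx, sub_eq_zero]

theorem isLine_of_mem_lineSet {ℓ : Set (Fin 3 → F)} (h : ℓ ∈ lineSet σ η Γ) :
    IsLine ℓ := by
  rcases mem_union.1 h with h | h
  · obtain ⟨y, -, rfl⟩ := mem_image.1 h
    exact isLine_affLine fun h0 => by simpa using congrFun h0 1
  · obtain ⟨z, -, rfl⟩ := mem_image.1 h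
    exact isLine_affLine fun h0 => by simpa [tangentDir] using congrFun h0 1

theorem card_tangentLines (hσ : Function.Involutive σ) (hη : σ η * η = -1)
    (hΓ : Γ ⊆ hermIdx σ) : #(tangentLines σ η Γ) = #Γ * Fintype.card F * #(slopes σ) := by
  rw [tangentLines, card_image_of_injOn, card_product, card_product, card_univ]
  rintro ⟨⟨y, t⟩, d⟩ hz ⟨⟨y', t'⟩, d'⟩ hz' h
  simp only [coe_product, Set.mem_prod, mem_coe, mem_univ, and_true] at hz hz'
  obtain ⟨hb, rfl⟩ := eq_and_eq_of_tangentLine_eq hσ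
    ((herm_chart_eq_zero_iff hσ hη).2 (hΓ hz.1)) ((herm_chart_eq_zero_iff hσ hη).2 (hΓ hz'.1))
    (by simpa [slopes] using hz'.2) h
  obtain ⟨rfl, rfl⟩ := chart_inj.1 hb
  rfl

theorem card_lineSet_le :
    #(lineSet σ η Γ) ≤ Fintype.card F ^ 2 + #Γ * Fintype.card F * #(slopes σ) := by
  refine (card_union_le _ _).trans (add_le_add ?_ (card_image_le.trans ?_))
  · exact card_image_le.trans ((card_le_univ _).trans (by simp [sq]))
  · simp

theorem card_fibreLines_filter_subset_le :
    #{ℓ ∈ fibreLines σ η Γ | ℓ ⊆ affPlane a u v} ≤ Fintype.card F := by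
  set Y := (univ \ (hermIdx σ \ Γ)).filter fun y => fibre σ η y ⊆ affPlane a u v
  have hY : #{ℓ ∈ fibreLines σ η Γ | ℓ ⊆ affPlane a u v} ≤ #Y := by
    rw [fibreLines, filter_image]
    exact card_image_le
  have hYq : #Y * Fintype.card F ≤ Fintype.card F * Fintype.card F :=
    calc #Y * Fintype.card F = #(Y ×ˢ (univ : Finset F)) := by rw [card_product, card_univ]
      _ ≤ #{x | x ∈ affPlane a u v} := by
        refine card_le_card_of_injOn (fun z => chart σ η z.1 z.2) (fun z hz => ?_)
          (chart_injective η).injOn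
        simp only [coe_product, Set.mem_prod, mem_coe, mem_filter, Y] at hz
        exact mem_coe.2 (mem_filter.2 ⟨mem_univ _, hz.1.2 ⟨z.2, rfl⟩⟩)
      _ ≤ Fintype.card F * Fintype.card F := card_affPlane_le.trans_eq (sq _)
  exact hY.trans (Nat.le_of_mul_le_mul_right hYq Fintype.card_pos)

theorem card_tangentLines_filter_subset_le (hη : σ η * η = -1)
    (hli : LinearIndependent F ![u, v]) :
    #{ℓ ∈ tangentLines σ η Γ | ℓ ⊆ affPlane a u v} ≤ #Γ + Fintype.card F := by
  set W := Submodule.span F {u, v}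
  set I := ((Γ ×ˢ univ) ×ˢ slopes σ).filter
    fun z => tangentLine σ (chart σ η z.1.1 z.1.2) z.2 ⊆ affPlane a u v
  have hI : ∀ z ∈ I, z.1.1 ∈ Γ ∧ σ z.2 * z.2 + 1 ≠ 0 ∧
      chart σ η z.1.1 z.1.2 ∈ affPlane a u v ∧ tangentDir σ (chart σ η z.1.1 z.1.2) z.2 ∈ W := by
    intro z hz
    simp only [I, mem_filter, mem_product, mem_univ, and_true, true_and, slopes] at hz
    exact ⟨hz.1.1, hz.1.2, mem_affPlane_and_mem_span_of_affLine_subset hz.2⟩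
  have hT : #{z ∈ I | W = tangentSpace σ (chart σ η z.1.1 z.1.2)} ≤ Fintype.card F := by
    refine card_le_card_of_injOn Prod.snd (fun _ _ => mem_coe.2 (mem_univ _)) ?_
    intro z hz z' hz' hd
    simp only [mem_coe, mem_filter] at hz hz'
    have hb := eq_of_span_eq_tangentSpace (hI z hz.1).2.2.1 (hI z' hz'.1).2.2.1 hz.2 hz'.2
    exact Prod.ext (chart_injective η hb) hd
  have hN : #{z ∈ I | W ≠ tangentSpace σ (chart σ η z.1.1 z.1.2)} ≤ #Γ := by
    refine card_le_card_of_injOn (fun z => z.1.1) (fun z hz => (hI z (mem_filter.1 hz).1).1) ?_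
    rintro ⟨⟨y, t⟩, d⟩ hz ⟨⟨y', t'⟩, d'⟩ hz' (rfl : y = y')
    simp only [mem_coe, mem_filter] at hz hz'
    obtain ⟨-, hd, hb, hdW⟩ := hI _ hz.1
    obtain ⟨-, -, hb', hd'W⟩ := hI _ hz'.1
    obtain ⟨rfl, rfl⟩ := eq_of_span_ne_tangentSpace hη hli hd hb hb' hdW hd'W hz.2
    rfl
  calc #{ℓ ∈ tangentLines σ η Γ | ℓ ⊆ affPlane a u v} ≤ #I := by
        rw [tangentLines, filter_image]
        exact card_image_le
    _ = #{z ∈ I | W = tangentSpace σ (chart σ η z.1.1 z.1.2)}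
          + #{z ∈ I | W ≠ tangentSpace σ (chart σ η z.1.1 z.1.2)} :=
        (card_filter_add_card_filter_not _).symm
    _ ≤ #Γ + Fintype.card F := by omega

theorem exists_mem_lineSet_iff (hσ : Function.Involutive σ) (hη : σ η * η = -1)
    (hΓ : Γ ⊆ hermIdx σ) (x : Fin 3 → F) :
    (∃ ℓ ∈ lineSet σ η Γ, x ∈ ℓ) ↔
      ∃ y ∈ univ \ (hermIdx σ \ Γ), ∃ t, x = chart σ η y t := by
  constructor
  · rintro ⟨ℓ, hℓ, hx⟩
    rcases mem_union.1 hℓ with hℓ | hℓ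
    · obtain ⟨y, hy, rfl⟩ := mem_image.1 hℓ
      exact ⟨y, hy, hx⟩
    · obtain ⟨⟨⟨y, t⟩, d⟩, hz, rfl⟩ := mem_image.1 hℓ
      simp only [mem_product, mem_univ, and_true, true_and, slopes, mem_filter] at hz
      obtain ⟨y', t', rfl⟩ := exists_chart_eq (σ := σ) η x
      refine ⟨y', ?_, t', rfl⟩
      by_cases hx₀ : herm σ (chart σ η y' t') = 0
      · have hb := eq_of_mem_tangentLine hσ ((herm_chart_eq_zero_iff hσ hη).2 (hΓ hz.1))
          hz.2 hx hx₀
        obtain ⟨rfl, -⟩ := chart_inj.1 hb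
        simp [hz.1]
      · simp [← herm_chart_eq_zero_iff hσ hη (t := t'), hx₀]
  · rintro ⟨y, hy, hx⟩
    exact ⟨fibre σ η y, mem_union_left _ (mem_image_of_mem _ hy), hx⟩

theorem card_covered_lineSet (hσ : Function.Involutive σ) (hη : σ η * η = -1)
    (hΓ : Γ ⊆ hermIdx σ) :
    #{x | ∃ ℓ ∈ lineSet σ η Γ, x ∈ ℓ}
      = (Fintype.card F ^ 2 - (#(hermIdx σ) - #Γ)) * Fintype.card F := by
  have h : ({x | ∃ ℓ ∈ lineSet σ η Γ, x ∈ ℓ} : Finset (Fin 3 → F))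
      = ((univ \ (hermIdx σ \ Γ)) ×ˢ univ).image fun z => chart σ η z.1 z.2 := by
    ext x
    simp only [mem_filter, mem_univ, true_and, exists_mem_lineSet_iff hσ hη hΓ, mem_image,
      mem_product, and_true, Prod.exists]
    tauto
  rw [h, card_image_of_injective _ (chart_injective η), card_product, card_univ,
    card_sdiff_of_subset (subset_univ _), card_sdiff_of_subset hΓ, card_univ,
    Fintype.card_prod, sq]

end Construction

variable [Fintype F] {p : ℕ}

theorem card_hermIdx (hσ : ∀ x, σ x = x ^ p) (hcard : Fintype.card F = p ^ 2) (hp : 2 ≤ p) :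
    #(hermIdx σ) = p ^ 2 * p :=
  calc #(hermIdx σ) = ∑ a : F, #{b | b + σ b = σ a * a} := by
        simp only [hermIdx, card_filter, Fintype.sum_prod_type]
    _ = ∑ _a : F, p := sum_congr rfl fun a _ =>
        card_trace_fibre hσ hcard hp (by simp [involutive_of_eq_pow hσ hcard a, mul_comm])
    _ = p ^ 2 * p := by simp [hcard]

theorem card_slopes (hσ : ∀ x, σ x = x ^ p) (hcard : Fintype.card F = p ^ 2) :
    p ^ 2 ≤ #(slopes σ) + (p + 1) := by
  have h := card_filter_add_card_filter_not (s := univ) fun d : F => σ d * d + 1 ≠ 0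
  have hn : #{d | ¬σ d * d + 1 ≠ 0} ≤ p + 1 := by
    simpa [add_eq_zero_iff_eq_neg] using card_norm_fibre_le hσ (-1 : F)
  rw [card_univ, hcard] at h
  rw [slopes]
  omega

theorem exists_lines (hσ : ∀ x, σ x = x ^ p) (hcard : Fintype.card F = p ^ 2) (hp : 2 ≤ p)
    {m : ℕ} (hm : m ≤ p ^ 3) :
    ∃ L : Finset (Set (Fin 3 → F)), (∀ ℓ ∈ L, IsLine ℓ) ∧
      m * p ^ 4 ≤ #L + m * p ^ 2 * (p + 1) ∧ #L ≤ p ^ 4 + m * p ^ 4 ∧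
      (∀ a u v : Fin 3 → F, LinearIndependent F ![u, v] →
        #{ℓ ∈ L | ℓ ⊆ affPlane a u v} ≤ m + 2 * p ^ 2) ∧
      #{x | ∃ ℓ ∈ L, x ∈ ℓ} + p ^ 5 = (p ^ 4 + m) * p ^ 2 := by
  have hσσ := involutive_of_eq_pow hσ hcard
  obtain ⟨η, hη⟩ := exists_conj_mul_self_eq_neg_one hσ hcard hp
  have hH := card_hermIdx hσ hcard hp
  obtain ⟨Γ, hΓ, rfl⟩ := exists_subset_card_eq (s := hermIdx σ) (n := m)
    (by rwa [hH, ← pow_succ])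
  have hS := card_slopes hσ hcard
  have hS' : #(slopes σ) ≤ p ^ 2 := hcard ▸ card_le_univ _
  have hT := card_tangentLines hσσ hη hΓ
  rw [hcard] at hT
  refine ⟨lineSet σ η Γ, fun ℓ => isLine_of_mem_lineSet, ?_, ?_, fun a u v hli => ?_, ?_⟩
  · have h : #(tangentLines σ η Γ) ≤ #(lineSet σ η Γ) := card_le_card subset_union_right
    have := Nat.mul_le_mul_left (#Γ * p ^ 2) hS
    nlinarith
  · have h := card_lineSet_le (σ := σ) (η := η) (Γ := Γ)
    rw [hcard] at h
    have := Nat.mul_le_mul_left (#Γ * p ^ 2) hS'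
    nlinarith
  · rw [lineSet, filter_union]
    refine (card_union_le _ _).trans ?_
    have h₁ : #{ℓ ∈ fibreLines σ η Γ | ℓ ⊆ affPlane a u v} ≤ p ^ 2 :=
      hcard ▸ card_fibreLines_filter_subset_le
    have h₂ : #{ℓ ∈ tangentLines σ η Γ | ℓ ⊆ affPlane a u v} ≤ #Γ + p ^ 2 :=
      hcard ▸ card_tangentLines_filter_subset_le hη hli
    omega
  · rw [card_covered_lineSet hσσ hη hΓ, hH, hcard]
    have hm' : #Γ ≤ p ^ 2 * p := by rwa [← pow_succ]
    have hp' : p ^ 2 * p ≤ (p ^ 2) ^ 2 := by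
      rw [sq (p ^ 2)]
      exact Nat.mul_le_mul_left _ (Nat.le_self_pow two_ne_zero p)
    have h : p ^ 2 * p - #Γ ≤ (p ^ 2) ^ 2 := (Nat.sub_le _ _).trans hp'
    zify [hm', h]
    ring

end HermitianSurface

section Estimates

variable {α ε : ℝ} {p m : ℕ}

theorem abs_card_lines_sub_le (hp : 1 ≤ p) (hεp : 3 ≤ ε * p) (hα : α ≤ 1)
    (hm : (m : ℝ) ≤ α * p ^ 3) (hm' : α * p ^ 3 < m + 1) {N : ℕ}
    (hlow : m * p ^ 4 ≤ N + m * p ^ 2 * (p + 1)) (hup : N ≤ p ^ 4 + m * p ^ 4) :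
    |(N : ℝ) - α * p ^ 7| ≤ ε * p ^ 7 := by
  have hx : (1 : ℝ) ≤ p := by exact_mod_cast hp
  have hx₀ : (0 : ℝ) < p := by linarith
  have hlow' : (m : ℝ) * p ^ 4 ≤ N + m * p ^ 2 * (p + 1) := by exact_mod_cast hlow
  have hup' : (N : ℝ) ≤ p ^ 4 + m * p ^ 4 := by exact_mod_cast hup
  have h₆ : 3 * (p : ℝ) ^ 6 ≤ ε * p ^ 7 := by nlinarith [pow_pos hx₀ 6]
  have h₄ : (p : ℝ) ^ 4 ≤ p ^ 6 := pow_le_pow_right₀ hx (by norm_num)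
  have h₅ : (p : ℝ) ^ 5 ≤ p ^ 6 := pow_le_pow_right₀ hx (by norm_num)
  have hmx : (m : ℝ) * p ^ 4 ≤ α * p ^ 7 := by nlinarith [pow_pos hx₀ 4]
  have hmx' : α * p ^ 7 < m * p ^ 4 + p ^ 4 := by nlinarith [pow_pos hx₀ 4]
  have hm₃ : (m : ℝ) * p ^ 2 * (p + 1) ≤ p ^ 6 + p ^ 5 := by
    have : (m : ℝ) ≤ p ^ 3 := by nlinarith [pow_pos hx₀ 3]
    nlinarith [pow_pos hx₀ 2]
  rw [abs_le]
  constructor <;> nlinarith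

theorem card_lines_in_plane_le (hεp : 3 ≤ ε * p) (hm : (m : ℝ) ≤ α * p ^ 3) {N : ℕ}
    (hN : N ≤ m + 2 * p ^ 2) : (N : ℝ) ≤ (α + ε) * p ^ 3 := by
  have hN' : (N : ℝ) ≤ m + 2 * p ^ 2 := by exact_mod_cast hN
  nlinarith [sq_nonneg (p : ℝ)]

theorem abs_card_covered_sub_le (hp : 1 ≤ p) (hεp : 3 ≤ ε * p) (hm : (m : ℝ) ≤ α * p ^ 3)
    (hm' : α * p ^ 3 < m + 1) {N : ℕ} (hN : N + p ^ 5 = (p ^ 4 + m) * p ^ 2) :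
    |(N : ℝ) - (p ^ 6 - (1 - α) * p ^ 5)| ≤ ε * p ^ 5 := by
  have hx : (1 : ℝ) ≤ p := by exact_mod_cast hp
  have hx₀ : (0 : ℝ) < p := by linarith
  have hN' : (N : ℝ) + p ^ 5 = (p ^ 4 + m) * p ^ 2 := by exact_mod_cast hN
  have h₄ : (p : ℝ) ^ 2 ≤ p ^ 4 := pow_le_pow_right₀ hx (by norm_num)
  have h₂ : (p : ℝ) ^ 2 ≤ ε * p ^ 5 := by nlinarith [pow_pos hx₀ 4]
  rw [abs_le]
  constructor <;> nlinarith [pow_pos hx₀ 2]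

end Estimates

/-- For `q = p^2` and `0 < α < 1`, there is a set of `(α+o(1)) q^{7/2}` lines in
`F_q^3`, no plane containing more than `(α+o(1)) q^{3/2}` of them, whose union
has exactly `q^3 - (1-α+o(1)) q^{5/2}` points. -/
theorem stmt_19 (α : ℝ) (hα0 : 0 < α) (hα1 : α < 1) :
    ∀ ε : ℝ, 0 < ε → ∃ Q : ℕ, ∀ p : ℕ, Q < p →
    (∃ r k : ℕ, Nat.Prime r ∧ 0 < k ∧ p = r ^ k) →
    ∀ (F : Type) [Field F] [Fintype F], Fintype.card F = p ^ 2 →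
    ∃ L : Finset (Set (Fin 3 → F)),
      (∀ ℓ ∈ L, IsLine ℓ) ∧
      |(L.card : ℝ) - α * (p : ℝ) ^ 7| ≤ ε * (p : ℝ) ^ 7 ∧
      (∀ a u v : Fin 3 → F, LinearIndependent F ![u, v] →
        ((L.filter (fun ℓ => ℓ ⊆ affPlane a u v)).card : ℝ) ≤ (α + ε) * (p : ℝ) ^ 3) ∧
      |((Finset.univ.filter (fun x : Fin 3 → F => ∃ ℓ ∈ L, x ∈ ℓ)).card : ℝ)
          - ((p : ℝ) ^ 6 - (1 - α) * (p : ℝ) ^ 5)| ≤ ε * (p : ℝ) ^ 5 := by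
  intro ε hε
  refine ⟨⌈3 / ε⌉₊, fun p hpQ hpow F _ _ hcard => ?_⟩
  have hp : 2 ≤ p := by
    have := Nat.ceil_pos.2 (div_pos three_pos hε)
    omega
  have hεp : 3 ≤ ε * p := by
    have := (Nat.le_ceil (3 / ε)).trans (Nat.cast_le.2 hpQ.le)
    rwa [div_le_iff₀ hε, mul_comm] at this
  obtain ⟨σ, hσ⟩ := exists_ringHom_eq_pow hpow hcard
  set m := ⌊α * p ^ 3⌋₊
  have hm : (m : ℝ) ≤ α * p ^ 3 := Nat.floor_le (by positivity)
  have hm' : α * p ^ 3 < m + 1 := Nat.lt_floor_add_one _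
  have hmp : m ≤ p ^ 3 :=
    Nat.floor_le_of_le (by push_cast; nlinarith [pow_nonneg (Nat.cast_nonneg (α := ℝ) p) 3])
  obtain ⟨L, hL, hlow, hup, hplane, hcover⟩ := HermitianSurface.exists_lines hσ hcard hp hmp
  have hp₁ : 1 ≤ p := one_le_two.trans hp
  exact ⟨L, hL, abs_card_lines_sub_le hp₁ hεp hα1.le hm hm' hlow hup,
    fun a u v hli => card_lines_in_plane_le hεp hm (hplane a u v hli),
    abs_card_covered_sub_le hp₁ hεp hm hm' hcover⟩
end
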